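/- arXiv:2506.21340 — 8 statements merged into one kernel-verified Lean document; each statement's English description precedes it below -/
import Mathlib

section
/- Let n, m ≥ 2 be integers, ζ_{2m} = exp(πi/m), ζ_{2n} = exp(πi/n). Define M_X = t^n · [[ζ_{2m}, 1], [0, ζ_{2m}^{-1}]] and M_Y = t^m · [[ζ_{2n}, 0], [q, ζ_{2n}^{-1}]] over the ring ℂ[t^{±1}, q^{±1}]. Then M_X^m = −t^{nm}·I₂ = M_Y^n, so the assignment X ↦ M_X, Y ↦ M_Y defines a representation of the group G(n,m) = ⟨X, Y | X^m = Y^n⟩. -/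
open LaurentPolynomial

noncomputable section

/-- The Laurent polynomial ring ℂ[t^{±1}, q^{±1}]: the outer variable `T` is `t`,
and `q` is the image under `C` of the inner variable. -/
abbrev R2 : Type := LaurentPolynomial (LaurentPolynomial ℂ)

/-- The embedding ℂ → ℂ[t^{±1}, q^{±1}]. -/
def cR : ℂ →+* R2 := (LaurentPolynomial.C).comp LaurentPolynomial.C

/-- The element q ∈ ℂ[t^{±1}, q^{±1}]. -/
def qP : R2 := LaurentPolynomial.C (LaurentPolynomial.T 1)

private lemma upper_pow {A : Type*} [CommRing A] (a b c : A) (k : ℕ) :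
    !![a, c; 0, b] ^ k =
      !![a ^ k, c * ∑ i ∈ Finset.range k, a ^ i * b ^ (k - 1 - i); 0, b ^ k] := by
  induction k with
  | zero => simp [Matrix.one_fin_two]
  | succ k ih =>
    have hsum : ∑ i ∈ Finset.range (k + 1), a ^ i * b ^ (k - i)
        = b * (∑ i ∈ Finset.range k, a ^ i * b ^ (k - 1 - i)) + a ^ k := by
      rw [Finset.sum_range_succ, Finset.mul_sum]
      congr 1
      · refine Finset.sum_congr rfl fun i hi => ?_
        have h : k - i = k - 1 - i + 1 := by
          have := Finset.mem_range.mp hi; omega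
        rw [h, pow_succ]; ring
      · simp
    rw [pow_succ, ih]
    ext i j
    fin_cases i <;> fin_cases j <;>
      simp [Matrix.mul_apply, Fin.sum_univ_two, pow_succ, hsum] <;> ring

private lemma zeta_pow (k : ℕ) (hk : 2 ≤ k) (ζ : ℂ)
    (hζ : ζ = Complex.exp ((Real.pi : ℂ) * Complex.I / (k : ℂ))) :
    ζ ^ k = -1 := by
  have hk0 : (k : ℂ) ≠ 0 := Nat.cast_ne_zero.mpr (by omega)
  rw [hζ, ← Complex.exp_nat_mul]
  have : (k : ℂ) * ((Real.pi : ℂ) * Complex.I / (k : ℂ)) = (Real.pi : ℂ) * Complex.I := by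
    field_simp
  rw [this, Complex.exp_pi_mul_I]

private lemma zeta_ne_zero (k : ℕ) (hk : 2 ≤ k) (ζ : ℂ)
    (hζ : ζ = Complex.exp ((Real.pi : ℂ) * Complex.I / (k : ℂ))) : ζ ≠ 0 := by
  rw [hζ]; exact Complex.exp_ne_zero _

private lemma zeta_sq_ne_one (k : ℕ) (hk : 2 ≤ k) (ζ : ℂ)
    (hζ : ζ = Complex.exp ((Real.pi : ℂ) * Complex.I / (k : ℂ))) : ζ ^ 2 ≠ 1 := by
  have hk0 : (k : ℂ) ≠ 0 := Nat.cast_ne_zero.mpr (by omega)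
  rw [hζ, ← Complex.exp_nat_mul]
  intro h
  obtain ⟨j, hj⟩ := Complex.exp_eq_one_iff.mp h
  have hπ : (Real.pi : ℂ) ≠ 0 := by exact_mod_cast Real.pi_ne_zero
  have hI : Complex.I ≠ 0 := Complex.I_ne_zero
  have hne : (2 * (Real.pi : ℂ) * Complex.I) ≠ 0 := by
    simp [hπ, hI]
  have h1 : ((j : ℂ) * k) = 1 := by
    apply mul_left_cancel₀ hne
    field_simp at hj
    linear_combination (-(Real.pi : ℂ) * Complex.I) * hj
  have : ((j * (k : ℤ) : ℤ) : ℂ) = ((1 : ℤ) : ℂ) := by push_cast; linear_combination h1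
  have h2 : j * (k : ℤ) = 1 := by exact_mod_cast this
  have : (k : ℤ) ≤ 1 := Int.le_of_dvd one_pos ⟨j, by linarith [h2]⟩
  omega

private lemma sum_zero (k : ℕ) (hk : 2 ≤ k) (ζ : ℂ)
    (hζ : ζ = Complex.exp ((Real.pi : ℂ) * Complex.I / (k : ℂ))) :
    ∑ i ∈ Finset.range k, ζ ^ i * (ζ⁻¹) ^ (k - 1 - i) = 0 := by
  have hz : ζ ≠ 0 := zeta_ne_zero k hk ζ hζ
  have hs2 : ζ ^ 2 ≠ 1 := zeta_sq_ne_one k hk ζ hζ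
  have hpk : ζ ^ k = -1 := zeta_pow k hk ζ hζ
  have h1 : ∀ i ∈ Finset.range k, ζ ^ i * (ζ⁻¹) ^ (k - 1 - i)
      = (ζ⁻¹) ^ (k - 1) * (ζ ^ 2) ^ i := by
    intro i hi
    have hik : i ≤ k - 1 := by have := Finset.mem_range.mp hi; omega
    have : (ζ⁻¹) ^ (k - 1) = (ζ⁻¹) ^ (k - 1 - i) * (ζ⁻¹) ^ i := by
      rw [← pow_add]; congr 1; omega
    rw [this]
    field_simp
    ring
    have hzi : ζ ^ i ≠ 0 := pow_ne_zero _ hz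
    rw [pow_mul, inv_pow, sq, mul_assoc, mul_inv_cancel₀ hzi, mul_one]
  rw [Finset.sum_congr rfl h1, ← Finset.mul_sum, geom_sum_eq hs2]
  have : (ζ ^ 2) ^ k - 1 = 0 := by
    rw [← pow_mul, mul_comm, pow_mul, hpk]; norm_num
  rw [this]
  simp

end

noncomputable section

private lemma upper_pow_neg_one (k : ℕ) (hk : 2 ≤ k) (ζ : ℂ)
    (hζ : ζ = Complex.exp ((Real.pi : ℂ) * Complex.I / (k : ℂ))) (c : R2) :
    !![cR ζ, c; 0, cR ζ⁻¹] ^ k = !![-1, 0; 0, -1] := by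
  rw [upper_pow]
  have hp : ζ ^ k = -1 := zeta_pow k hk ζ hζ
  have hs := sum_zero k hk ζ hζ
  have e1 : (cR ζ) ^ k = -1 := by rw [← map_pow, hp, map_neg, map_one]
  have e2 : (cR ζ⁻¹) ^ k = -1 := by
    rw [← map_pow, inv_pow, hp]
    norm_num
  have e3 : ∑ i ∈ Finset.range k, (cR ζ) ^ i * (cR ζ⁻¹) ^ (k - 1 - i) = 0 := by
    rw [show (0 : R2) = cR 0 from (map_zero cR).symm, ← hs, map_sum]
    simp [← map_pow, ← map_mul]
  rw [e1, e2, e3, mul_zero]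

set_option synthInstance.maxHeartbeats 1000000 in
/-- for n, m ≥ 2, ζ_{2m} = exp(πi/m), ζ_{2n} = exp(πi/n),
M_X = t^n·[[ζ_{2m},1],[0,ζ_{2m}⁻¹]] and M_Y = t^m·[[ζ_{2n},0],[q,ζ_{2n}⁻¹]] satisfy
M_X^m = −t^{nm}·I₂ = M_Y^n, hence define a representation of G(n,m) = ⟨X,Y | X^m = Y^n⟩. -/
theorem stmt2 (n m : ℕ) (hn : 2 ≤ n) (hm : 2 ≤ m) (ζ2m ζ2n : ℂ)
    (h2m : ζ2m = Complex.exp ((Real.pi : ℂ) * Complex.I / (m : ℂ)))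
    (h2n : ζ2n = Complex.exp ((Real.pi : ℂ) * Complex.I / (n : ℂ)))
    (MX MY : Matrix (Fin 2) (Fin 2) R2)
    (hMX : MX = (T (n : ℤ) : R2) • !![cR ζ2m, 1; 0, cR ζ2m⁻¹])
    (hMY : MY = (T (m : ℤ) : R2) • !![cR ζ2n, 0; qP, cR ζ2n⁻¹]) :
    MX ^ m = (-(T ((n : ℤ) * m)) : R2) • (1 : Matrix (Fin 2) (Fin 2) R2) ∧
      MY ^ n = (-(T ((n : ℤ) * m)) : R2) • (1 : Matrix (Fin 2) (Fin 2) R2) := by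
  have hneg : !![(-1 : R2), 0; 0, -1] = -(1 : Matrix (Fin 2) (Fin 2) R2) := by
    simp [Matrix.one_fin_two]
  constructor
  · rw [hMX, smul_pow, T_pow, upper_pow_neg_one m hm ζ2m h2m, hneg,
      show (m : ℤ) * n = (n : ℤ) * m from mul_comm _ _, smul_neg, ← neg_smul]
  · have hA : (!![cR ζ2n, 0; qP, cR ζ2n⁻¹] : Matrix (Fin 2) (Fin 2) R2)
        = Matrix.transpose (!![cR ζ2n, qP; 0, cR ζ2n⁻¹] : Matrix (Fin 2) (Fin 2) R2) := by
      ext i j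
      fin_cases i <;> fin_cases j <;> simp [Matrix.transpose_apply]
    have hApow : (!![cR ζ2n, 0; qP, cR ζ2n⁻¹] : Matrix (Fin 2) (Fin 2) R2) ^ n
        = -(1 : Matrix (Fin 2) (Fin 2) R2) := by
      rw [hA, ← Matrix.transpose_pow, upper_pow_neg_one n hn ζ2n h2n qP, ← hneg]
      ext i j
      fin_cases i <;> fin_cases j <;> simp [Matrix.transpose_apply]
    rw [hMY, smul_pow, T_pow, hApow,
      show (n : ℤ) * m = (m : ℤ) * n from mul_comm _ _, smul_neg, ← neg_smul]

end
end

section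
/- Suppose M_X, M_Y ∈ GL₂(ℂ[t^{±1}, q^{±1}]) satisfy M_X^m = M_Y^n with m, n ≥ 2, every entry of t^{-nk}·M_X^k for 1 ≤ k ≤ m−1 is a complex constant with the (1,2) entry nonzero, and every entry of t^{-mk}·M_Y^k for 1 ≤ k ≤ n−1 is a Laurent polynomial in q with degree in q at most 0 except the (2,1) entry which has degree exactly 1. If a matrix Z ∈ M₂(ℂ[t^{±1},q^{±1}]) commutes with both M_X and M_Y and has the form t^{nm}·C with C a constant matrix, then C is a scalar matrix (C = a·I₂ for some a ∈ ℂ). -/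
open LaurentPolynomial

noncomputable section

lemma coeff_C_mul (a : ℂ) (f : LaurentPolynomial ℂ) (x : ℤ) :
    (LaurentPolynomial.C a * f).coeff x = a * f.coeff x := by
  rw [← single_eq_C]; exact AddMonoidAlgebra.coeff_single_zero_mul f a x

lemma coeff_mul_C (a : ℂ) (f : LaurentPolynomial ℂ) (x : ℤ) :
    (f * LaurentPolynomial.C a).coeff x = f.coeff x * a := by
  rw [← single_eq_C]; exact AddMonoidAlgebra.coeff_mul_single_zero f a x

lemma C_inj {R : Type*} [Semiring R] {a b : R}
    (h : LaurentPolynomial.C a = LaurentPolynomial.C b) : a = b := by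
  have := congrArg (fun f => f.coeff (0 : ℤ)) h
  simpa using this

lemma coeff_add (f g : LaurentPolynomial ℂ) (x : ℤ) : (f + g).coeff x = f.coeff x + g.coeff x := rfl

lemma smul_cancel_T {S : Type*} [CommRing S] (A B : Matrix (Fin 2) (Fin 2) (LaurentPolynomial S))
    (r s : ℤ)
    (h : ((T r : LaurentPolynomial S) • A) * ((T s : LaurentPolynomial S) • B) = ((T s : LaurentPolynomial S) • B) * ((T r : LaurentPolynomial S) • A)) :
    A * B = B * A := by
  rw [Matrix.smul_mul, Matrix.mul_smul, Matrix.smul_mul, Matrix.mul_smul,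
      smul_smul, smul_smul, ← T_add, ← T_add, add_comm s r] at h
  have h2 := congrArg (fun M => (T (-(r + s)) : LaurentPolynomial S) • M) h
  simp only [smul_smul, ← T_add, neg_add_cancel, T_zero, one_smul] at h2
  exact h2


/-- Suppose M_X, M_Y ∈ GL₂(ℂ[t^{±1},q^{±1}]) satisfy M_X^m = M_Y^n (m,n ≥ 2),
each entry of t^{-nk}·M_X^k (1 ≤ k ≤ m−1) is a complex constant with the (1,2) entry nonzero,
and each entry of t^{-mk}·M_Y^k (1 ≤ k ≤ n−1) is a Laurent polynomial in q of degree ≤ 0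
except the (2,1) entry which has degree exactly 1 (degree conditions expressed via
coefficients). If Z commutes with M_X and M_Y and Z = t^{nm}·C with C constant, then C is
scalar. -/
theorem stmt4 (n m : ℕ) (hn : 2 ≤ n) (hm : 2 ≤ m)
    (u v : (Matrix (Fin 2) (Fin 2) R2)ˣ)
    (hrel : u ^ m = v ^ n)
    (hX : ∀ k : ℕ, 1 ≤ k → k ≤ m - 1 →
      ∃ c : Matrix (Fin 2) (Fin 2) ℂ, c 0 1 ≠ 0 ∧
        ((u : Matrix (Fin 2) (Fin 2) R2)) ^ k = (T ((n : ℤ) * k) : R2) • c.map cR)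
    (hY : ∀ k : ℕ, 1 ≤ k → k ≤ n - 1 →
      ∃ P : Matrix (Fin 2) (Fin 2) (LaurentPolynomial ℂ),
        ((v : Matrix (Fin 2) (Fin 2) R2)) ^ k =
            (T ((m : ℤ) * k) : R2) • P.map LaurentPolynomial.C ∧
        (∀ i j : Fin 2, (i, j) ≠ ((1 : Fin 2), (0 : Fin 2)) →
            ∀ d : ℤ, 0 < d → (P i j).coeff d = 0) ∧
        ((P 1 0).coeff 1 ≠ 0 ∧ ∀ d : ℤ, 1 < d → (P 1 0).coeff d = 0))
    (Z : Matrix (Fin 2) (Fin 2) R2)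
    (hZX : Z * (u : Matrix (Fin 2) (Fin 2) R2) = (u : Matrix (Fin 2) (Fin 2) R2) * Z)
    (hZY : Z * (v : Matrix (Fin 2) (Fin 2) R2) = (v : Matrix (Fin 2) (Fin 2) R2) * Z)
    (Cm : Matrix (Fin 2) (Fin 2) ℂ)
    (hZ : Z = (T ((n : ℤ) * m) : R2) • Cm.map cR) :
    ∃ a : ℂ, Cm = a • (1 : Matrix (Fin 2) (Fin 2) ℂ) := by
  obtain ⟨c, hc01, hu⟩ := hX 1 le_rfl (by omega)
  obtain ⟨P, hv, hPoff, hP10, hP10top⟩ := hY 1 le_rfl (by omega)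
  simp only [pow_one] at hu hv
  rw [hZ, hu] at hZX
  rw [hZ, hv] at hZY
  have h1 : Cm.map cR * c.map cR = c.map cR * Cm.map cR :=
    smul_cancel_T _ _ _ _ hZX
  have h2 : Cm.map cR * P.map LaurentPolynomial.C
      = P.map LaurentPolynomial.C * Cm.map cR :=
    smul_cancel_T _ _ _ _ hZY
  -- descend h1 to ℂ
  have h1' : Cm * c = c * Cm := by
    have : (Cm * c).map cR = (c * Cm).map cR := by
      rw [Matrix.map_mul, Matrix.map_mul]; exact h1
    have h'' : ∀ i j, LaurentPolynomial.C (LaurentPolynomial.C ((Cm * c) i j))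
        = LaurentPolynomial.C (LaurentPolynomial.C ((c * Cm) i j)) :=
      fun i j => congrFun (congrFun this i) j
    exact Matrix.ext fun i j => C_inj (C_inj (h'' i j))
  -- descend h2 to ℂ[q]
  have h2' : Cm.map LaurentPolynomial.C * P = P * Cm.map LaurentPolynomial.C := by
    have hmap : Cm.map cR = (Cm.map LaurentPolynomial.C).map LaurentPolynomial.C := by
      ext i j; rfl
    rw [hmap, ← Matrix.map_mul, ← Matrix.map_mul] at h2
    have h'' : ∀ i j, LaurentPolynomial.C ((Cm.map LaurentPolynomial.C * P) i j)
        = LaurentPolynomial.C ((P * Cm.map LaurentPolynomial.C) i j) :=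
      fun i j => congrFun (congrFun h2 i) j
    exact Matrix.ext fun i j => C_inj (h'' i j)
  -- coefficient extraction
  have e10 := congrFun (congrFun h2' 1) 0
  have e00 := congrFun (congrFun h2' 0) 0
  simp only [Matrix.mul_apply, Fin.sum_univ_two, Matrix.map_apply] at e10 e00
  have c10 := congrArg (fun f => f.coeff (1 : ℤ)) e10
  have c00 := congrArg (fun f => f.coeff (1 : ℤ)) e00
  simp only [coeff_add, coeff_C_mul, coeff_mul_C] at c10 c00
  have hP00 : (P 0 0).coeff 1 = 0 := hPoff 0 0 (by decide) 1 one_pos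
  have hP01 : (P 0 1).coeff 1 = 0 := hPoff 0 1 (by decide) 1 one_pos
  have hP11 : (P 1 1).coeff 1 = 0 := hPoff 1 1 (by decide) 1 one_pos
  rw [hP00, hP11] at c10
  rw [hP00, hP01] at c00
  -- c10 : Cm 1 0 * 0 + Cm 1 1 * P 1 0 1 = P 1 0 1 * Cm 0 0 + 0 * Cm 1 0
  have eq11 : Cm 1 1 = Cm 0 0 := by
    have : Cm 1 1 * (P 1 0).coeff 1 = Cm 0 0 * (P 1 0).coeff 1 := by ring_nf; ring_nf at c10; linear_combination c10
    exact mul_right_cancel₀ hP10 this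
  have eq01 : Cm 0 1 = 0 := by
    have : Cm 0 1 * (P 1 0).coeff 1 = 0 := by linear_combination c00
    exact (mul_eq_zero.mp this).resolve_right hP10
  have eq10 : Cm 1 0 = 0 := by
    have e := congrFun (congrFun h1' 0) 0
    simp only [Matrix.mul_apply, Fin.sum_univ_two] at e
    have : c 0 1 * Cm 1 0 = 0 := by
      rw [eq01] at e; linear_combination -e
    exact (mul_eq_zero.mp this).resolve_left hc01
  refine ⟨Cm 0 0, ?_⟩
  ext i j
  fin_cases i <;> fin_cases j <;>
    simp [eq11, eq01, eq10, Matrix.one_apply]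

end
end

section
/- Let m ≥ 2 not divisible by 3, λ₁ = ζ_{4m}^{3m−6}, λ₂ = ζ_{4m}^{3m+6}, [λ]_k = (λ₂^k − λ₁^k)/(λ₂ − λ₁). Then [λ]_m = 0 and [λ]_{m−1} = (−1)^{m+1}·i^m = [λ]_{m+1}. -/
/-- for m ≥ 2 not divisible by 3, with λ₁ = ζ_{4m}^{3m−6}, λ₂ = ζ_{4m}^{3m+6}
and [λ]_k = (λ₂^k − λ₁^k)/(λ₂ − λ₁), one has [λ]_m = 0 and
[λ]_{m−1} = (−1)^{m+1}·i^m = [λ]_{m+1}. -/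
theorem stmt9 (m : ℕ) (hm : 2 ≤ m) (h3 : ¬ (3 ∣ m)) (ζ l₁ l₂ : ℂ) (lam : ℤ → ℂ)
    (hζ : ζ = Complex.exp (2 * (Real.pi : ℂ) * Complex.I / (4 * (m : ℂ))))
    (hl1 : l₁ = ζ ^ (3 * (m : ℤ) - 6)) (hl2 : l₂ = ζ ^ (3 * (m : ℤ) + 6))
    (hlam : ∀ k : ℤ, lam k = (l₂ ^ k - l₁ ^ k) / (l₂ - l₁)) :
    lam (m : ℤ) = 0 ∧
      lam ((m : ℤ) - 1) = (-1 : ℂ) ^ (m + 1) * Complex.I ^ m ∧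
      lam ((m : ℤ) + 1) = (-1 : ℂ) ^ (m + 1) * Complex.I ^ m := by
  have hne : ζ ≠ 0 := by rw [hζ]; exact Complex.exp_ne_zero _
  have hm0 : (m : ℂ) ≠ 0 := Nat.cast_ne_zero.2 (by omega)
  have hpi : (Real.pi : ℂ) ≠ 0 := Complex.ofReal_ne_zero.2 Real.pi_ne_zero
  have hIne : Complex.I ≠ 0 := Complex.I_ne_zero
  set n : ℤ := (m : ℤ) with hn
  -- ζ ^ m = I
  have hI : ζ ^ n = Complex.I := by
    rw [hζ, ← Complex.exp_int_mul]
    have harg : (n : ℂ) * (2 * (Real.pi : ℂ) * Complex.I / (4 * (m : ℂ)))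
        = ((Real.pi / 2 : ℝ) : ℂ) * Complex.I := by
      rw [hn]; push_cast; field_simp; ring
    rw [harg, Complex.exp_mul_I, ← Complex.ofReal_cos, ← Complex.ofReal_sin,
      Real.cos_pi_div_two, Real.sin_pi_div_two]
    simp
  -- ζ ^ 12 ≠ 1
  have h12 : ζ ^ (12 : ℤ) ≠ 1 := by
    intro h
    rw [hζ, ← Complex.exp_int_mul, Complex.exp_eq_one_iff] at h
    obtain ⟨k, hk⟩ := h
    have h2 : (2 * (Real.pi : ℂ) * Complex.I) ≠ 0 := by
      exact mul_ne_zero (mul_ne_zero two_ne_zero hpi) Complex.I_ne_zero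
    have hc : (3 : ℂ) = (k : ℂ) * (m : ℂ) := by
      field_simp at hk
      apply mul_right_cancel₀ h2
      push_cast at hk ⊢
      linear_combination (2 * (Real.pi : ℂ) * Complex.I) * hk / 4
    have h3' : (3 : ℤ) = k * (m : ℤ) := by exact_mod_cast hc
    have hdvd : (m : ℤ) ∣ 3 := ⟨k, by linear_combination h3'⟩
    have hdvd' : m ∣ 3 := Int.ofNat_dvd.mp (by exact_mod_cast hdvd)
    have := Nat.le_of_dvd (by norm_num) hdvd'
    interval_cases m
    · exact absurd hdvd' (by decide)
    · exact h3 ⟨1, rfl⟩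
  -- power decomposition
  have hpow : ∀ p q : ℤ, ζ ^ (p * n + q) = Complex.I ^ p * ζ ^ q := by
    intro p q
    rw [zpow_add₀ hne, mul_comm p n, zpow_mul, hI]
  -- powers of I
  have hI2 : Complex.I ^ (2 : ℤ) = -1 := by
    rw [show (2 : ℤ) = ((2 : ℕ) : ℤ) from rfl, zpow_natCast, Complex.I_sq]
  have hI4 : Complex.I ^ (4 : ℤ) = 1 := by
    rw [show (4 : ℤ) = 2 + 2 by norm_num, zpow_add₀ hIne, hI2]; ring
  have hI3 : Complex.I ^ (3 : ℤ) = -Complex.I := by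
    rw [show (3 : ℤ) = 2 + 1 by norm_num, zpow_add₀ hIne, hI2, zpow_one]; ring
  have hI6 : Complex.I ^ (6 : ℤ) = -1 := by
    rw [show (6 : ℤ) = 2 + 4 by norm_num, zpow_add₀ hIne, hI2, hI4]; ring
  have hI9 : Complex.I ^ (9 : ℤ) = Complex.I := by
    rw [show (9 : ℤ) = 4 + (4 + 1) by norm_num, zpow_add₀ hIne, zpow_add₀ hIne,
      hI4, zpow_one]; ring
  have hIm3 : Complex.I ^ (-3 : ℤ) = Complex.I := by
    rw [zpow_neg, hI3, inv_neg, Complex.inv_I, neg_neg]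
  have hIm6 : Complex.I ^ (-6 : ℤ) = -1 := by
    rw [zpow_neg, hI6]; norm_num
  have hIm9 : Complex.I ^ (-9 : ℤ) = -Complex.I := by
    rw [zpow_neg, hI9, Complex.inv_I]
  -- denominator
  have hDne : ζ ^ (6 : ℤ) - ζ ^ (-6 : ℤ) ≠ 0 := by
    intro h
    apply h12
    have h6 : ζ ^ (6 : ℤ) = ζ ^ (-6 : ℤ) := sub_eq_zero.mp h
    calc ζ ^ (12 : ℤ) = ζ ^ (6 : ℤ) * ζ ^ (6 : ℤ) := by
          rw [← zpow_add₀ hne]; norm_num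
      _ = ζ ^ (6 : ℤ) * ζ ^ (-6 : ℤ) := by rw [h6]
      _ = 1 := by rw [← zpow_add₀ hne]; norm_num
  have hCval : ζ ^ (3 * n * n) = (-1 : ℂ) ^ m * Complex.I ^ m := by
    rw [show 3 * n * n = 3 * n * n + 0 by ring, hpow (3 * n) 0, zpow_zero, mul_one,
      zpow_mul, hI3, hn, zpow_natCast, neg_pow]
  have hden : l₂ - l₁ = -Complex.I * (ζ ^ (6 : ℤ) - ζ ^ (-6 : ℤ)) := by
    rw [hl1, hl2, hpow 3 6, show 3 * n - 6 = 3 * n + (-6) by ring, hpow 3 (-6), hI3]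
    ring
  have hdenne : l₂ - l₁ ≠ 0 := by
    rw [hden]; exact mul_ne_zero (neg_ne_zero.2 hIne) hDne
  have hnum : ∀ k : ℤ, l₂ ^ k - l₁ ^ k = ζ ^ ((3 * n + 6) * k) - ζ ^ ((3 * n - 6) * k) := by
    intro k
    rw [hl1, hl2, ← zpow_mul, ← zpow_mul]
  refine ⟨?_, ?_, ?_⟩
  · rw [hlam, hnum, show (3 * n + 6) * n = 6 * n + 3 * n * n by ring,
      show (3 * n - 6) * n = (-6) * n + 3 * n * n by ring,
      hpow 6 (3 * n * n), hpow (-6) (3 * n * n), hI6, hIm6]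
    ring
  · rw [hlam, hnum, show (3 * n + 6) * (n - 1) = 3 * n + (3 * n * n + -6) by ring,
      show (3 * n - 6) * (n - 1) = (-9) * n + (3 * n * n + 6) by ring,
      hpow 3 (3 * n * n + -6), hpow (-9) (3 * n * n + 6), hI3, hIm9,
      zpow_add₀ hne (3 * n * n) (-6 : ℤ), zpow_add₀ hne (3 * n * n) (6 : ℤ),
      hCval, hden, div_eq_iff (mul_ne_zero (neg_ne_zero.2 hIne) hDne), pow_succ]
    ring
  · rw [hlam, hnum, show (3 * n + 6) * (n + 1) = 9 * n + (3 * n * n + 6) by ring,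
      show (3 * n - 6) * (n + 1) = (-3) * n + (3 * n * n + -6) by ring,
      hpow 9 (3 * n * n + 6), hpow (-3) (3 * n * n + -6), hI9, hIm3,
      zpow_add₀ hne (3 * n * n) (6 : ℤ), zpow_add₀ hne (3 * n * n) (-6 : ℤ),
      hCval, hden, div_eq_iff (mul_ne_zero (neg_ne_zero.2 hIne) hDne), pow_succ]
    ring
end

section
/- Let n, m ≥ 2 be coprime with 3 ∤ m, and let a, b ∈ ℤ with an − bm = 1. Define complex constants U, U', V, λ₁, λ₂, μ₁, μ₂, the quantities [λ]_k and [μ^b]_k, and A_i = q^{-1}U'[λ]_a + q^{-1}[λ]_{a−1} − μ_i^b (i = 1,2) as in the torus-knot Burau construction. Set M_X = (−1)^b i^{n+1} t^n [[U', V], [V, −U]] and M_Y = (−1)^a i^m t^m [[A₁[μ^b]₁ + μ₁, q^{-1}V[λ]_a[μ^b]₁], [−A₁A₂[μ^b]₁/(q^{-1}V[λ]_a), μ₁ − A₂[μ^b]₁]]. Then for all k ∈ ℤ, M_X^k = (−1)^{bk} i^{nk+k} t^{nk} [[U'[λ]_k + [λ]_{k−1}, V[λ]_k], [V[λ]_k,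 −U'[λ]_k + [λ]_{k+1}]]. -/
open LaurentPolynomial

noncomputable section

/-- Auxiliary: a ℤ-indexed family that starts at 1 and is propagated by right
multiplication by a unit computes all integer powers of the unit. -/
lemma aux_zpow {M : Type*} [Monoid M] (ux : Mˣ) (F : ℤ → M)
    (hF0 : F 0 = 1) (hstep : ∀ j : ℤ, F j * (ux : M) = F (j+1)) :
    ∀ k : ℤ, ((ux ^ k : Mˣ) : M) = F k := by
  intro k
  induction k using Int.induction_on with
  | zero => rw [zpow_zero, Units.val_one, hF0]
  | succ k ih => rw [zpow_add_one, Units.val_mul, ih, hstep]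
  | pred k ih =>
      have hs := hstep (-(k:ℤ) - 1)
      rw [show (-(k:ℤ) - 1) + 1 = -(k:ℤ) from by ring] at hs
      rw [zpow_sub_one, Units.val_mul, ih, ← hs, mul_assoc, Units.mul_inv, mul_one]

/-- in the torus-knot Burau construction (n, m ≥ 2 coprime, 3 ∤ m,
an − bm = 1), with M_X = (−1)^b i^{n+1} t^n [[U', V],[V, −U]], for all k ∈ ℤ one has
M_X^k = (−1)^{bk} i^{nk+k} t^{nk} [[U'[λ]_k + [λ]_{k−1}, V[λ]_k],
[V[λ]_k, −U'[λ]_k + [λ]_{k+1}]]. -/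
theorem stmt13 (n m : ℕ) (hn : 2 ≤ n) (hm : 2 ≤ m) (hcop : Nat.Coprime n m)
    (h3 : ¬ (3 ∣ m)) (a b : ℤ) (hab : a * n - b * m = 1)
    (ζ4m ζm U l₁ l₂ U' V : ℂ)
    (hζ4m : ζ4m = Complex.exp (2 * (Real.pi : ℂ) * Complex.I / (4 * (m : ℂ))))
    (hζm : ζm = Complex.exp (2 * (Real.pi : ℂ) * Complex.I / (m : ℂ)))
    (hU : U = ζ4m ^ (3 * (m : ℤ) - 2) + ζ4m ^ (3 * (m : ℤ) + 2))
    (hl1 : l₁ = ζ4m ^ (3 * (m : ℤ) - 6)) (hl2 : l₂ = ζ4m ^ (3 * (m : ℤ) + 6))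
    (hU' : U' = U + l₁ + l₂)
    (hV : V = if 2 < m then -1 - ζm - ζm⁻¹ else -1)
    (lam : ℤ → ℂ) (hlam : ∀ k : ℤ, lam k = (l₂ ^ k - l₁ ^ k) / (l₂ - l₁))
    (MX : Matrix (Fin 2) (Fin 2) R2)
    (hMX : MX = (cR ((-1 : ℂ) ^ b * Complex.I ^ (n + 1)) * (T (n : ℤ) : R2)) •
      !![cR U', cR V; cR V, -cR U])
    (ux : (Matrix (Fin 2) (Fin 2) R2)ˣ) (hux : (ux : Matrix (Fin 2) (Fin 2) R2) = MX) :
    ∀ k : ℤ, ((ux ^ k : (Matrix (Fin 2) (Fin 2) R2)ˣ) : Matrix (Fin 2) (Fin 2) R2) =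
      (cR ((-1 : ℂ) ^ (b * k) * Complex.I ^ ((n : ℤ) * k + k)) * (T ((n : ℤ) * k) : R2)) •
        !![cR (U' * lam k + lam (k - 1)), cR (V * lam k);
           cR (V * lam k), cR (-(U' * lam k) + lam (k + 1))] := by
  -- Part 1: root-of-unity arithmetic in ℂ.
  have hm0 : (m : ℂ) ≠ 0 := Nat.cast_ne_zero.mpr (by omega)
  have hx0 : ζ4m ≠ 0 := by rw [hζ4m]; exact Complex.exp_ne_zero _
  have hx2m : ζ4m ^ (2 * m) = -1 := by
    rw [hζ4m, ← Complex.exp_nat_mul, show ((2*m : ℕ):ℂ) * (2 * (Real.pi : ℂ) * Complex.I / (4 * (m : ℂ))) = Real.pi * Complex.I from by push_cast; field_simp; ring]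
    exact Complex.exp_pi_mul_I
  have hζm4 : ζm = ζ4m ^ 4 := by
    rw [hζm, hζ4m, ← Complex.exp_nat_mul]
    congr 1
    field_simp
    ring
  set y := ζ4m ^ (3 * (m : ℤ)) with hy
  have hy2 : y ^ 2 = -1 := by
    have : y ^ 2 = ζ4m ^ (((2*m : ℕ) : ℤ) + (((2*m : ℕ):ℤ) + ((2*m:ℕ):ℤ))) := by
      rw [hy, sq, ← zpow_add₀ hx0]
      congr 1
      push_cast
      ring
    rw [this, zpow_add₀ hx0, zpow_add₀ hx0, zpow_natCast, hx2m]
    ring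
  have hy0 : y ≠ 0 := by
    intro h
    rw [h] at hy2
    norm_num at hy2
  have hl1x : l₁ = y * (ζ4m ^ 6)⁻¹ := by
    rw [hl1, hy, ← zpow_natCast ζ4m 6, ← zpow_neg, ← zpow_add₀ hx0]
    congr 1
    all_goals push_cast; ring
  have hl2x : l₂ = y * ζ4m ^ 6 := by
    rw [hl2, hy, ← zpow_natCast ζ4m 6, ← zpow_add₀ hx0]
    norm_num
  have hprod : l₁ * l₂ = -1 := by
    have h6 : (ζ4m ^ 6) ≠ 0 := pow_ne_zero _ hx0
    have : l₁ * l₂ = y ^ 2 := by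
      rw [hl1x, hl2x]
      field_simp
    rw [this, hy2]
  have e1 : ζ4m ^ (3 * (m:ℤ) - 2) = y * (ζ4m ^ 2)⁻¹ := by
    rw [hy, ← zpow_natCast ζ4m 2, ← zpow_neg, ← zpow_add₀ hx0]
    congr 1
    all_goals push_cast; ring
  have e2 : ζ4m ^ (3 * (m:ℤ) + 2) = y * ζ4m ^ 2 := by
    rw [hy, ← zpow_natCast ζ4m 2, ← zpow_add₀ hx0]
    norm_num
  have hUx : U = y * (ζ4m ^ 2 + (ζ4m ^ 2)⁻¹) := by
    rw [hU, e1, e2]; ring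
  have hU'x : U' = y * (ζ4m ^ 2 + (ζ4m ^ 2)⁻¹ + ζ4m ^ 6 + (ζ4m ^ 6)⁻¹) := by
    rw [hU', hUx, hl1x, hl2x]; ring
  have hUU' : U * U' = -((ζ4m ^ 2 + (ζ4m ^ 2)⁻¹) * (ζ4m ^ 2 + (ζ4m ^ 2)⁻¹ + ζ4m ^ 6 + (ζ4m ^ 6)⁻¹)) := by
    rw [hUx, hU'x]
    linear_combination ((ζ4m ^ 2 + (ζ4m ^ 2)⁻¹) * (ζ4m ^ 2 + (ζ4m ^ 2)⁻¹ + ζ4m ^ 6 + (ζ4m ^ 6)⁻¹)) * hy2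
  have hI1 : U * U' + V ^ 2 = 1 := by
    rcases lt_or_ge 2 m with hm2 | hm2
    · rw [hV, if_pos hm2, hζm4, hUU']
      have h4 : ζ4m ^ 4 ≠ 0 := pow_ne_zero _ hx0
      have h2 : ζ4m ^ 2 ≠ 0 := pow_ne_zero _ hx0
      have h6 : ζ4m ^ 6 ≠ 0 := pow_ne_zero _ hx0
      field_simp
      ring_nf
    · have hm2' : m = 2 := le_antisymm hm2 hm
      have hx4 : ζ4m ^ 4 = -1 := by rw [← hx2m, hm2']
      have hc : ζ4m ^ 2 + (ζ4m ^ 2)⁻¹ = 0 := by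
        have h2 : (ζ4m ^ 2) ≠ 0 := pow_ne_zero _ hx0
        field_simp
        linear_combination hx4
      rw [hV, if_neg (by omega), hUU', hc]
      ring
  -- l₂ - l₁ ≠ 0
  have hprim : IsPrimitiveRoot ζm m := by
    rw [hζm]
    exact Complex.isPrimitiveRoot_exp m (by omega)
  have hx12 : ζ4m ^ 12 ≠ 1 := by
    intro h
    have h3' : ζm ^ 3 = 1 := by
      rw [hζm4, ← pow_mul]
      exact h
    have hdvd : m ∣ 3 := (hprim.pow_eq_one_iff_dvd 3).mp h3'
    have hle : m ≤ 3 := Nat.le_of_dvd (by norm_num) hdvd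
    interval_cases m
    · norm_num at hdvd
    · exact h3 hdvd
  have h6 : (ζ4m ^ 6) ≠ 0 := pow_ne_zero _ hx0
  have hl10 : l₁ ≠ 0 := by rw [hl1x]; exact mul_ne_zero hy0 (inv_ne_zero h6)
  have hl20 : l₂ ≠ 0 := by rw [hl2x]; exact mul_ne_zero hy0 h6
  have hl12 : l₂ - l₁ ≠ 0 := by
    have hrepr : l₂ - l₁ = (y * (ζ4m ^ 6)⁻¹) * (ζ4m ^ 12 - 1) := by
      rw [hl1x, hl2x]
      field_simp
    rw [hrepr]
    exact mul_ne_zero (mul_ne_zero hy0 (inv_ne_zero h6)) (sub_ne_zero.mpr hx12)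
  -- Part 2: properties of lam.
  have hlam0 : lam 0 = 0 := by rw [hlam]; norm_num
  have hlam1 : lam 1 = 1 := by rw [hlam]; norm_num; exact hl12
  have hlamm1 : lam (-1) = 1 := by
    rw [hlam]
    rw [zpow_neg_one, zpow_neg_one]
    rw [div_eq_one_iff_eq hl12]
    field_simp
    linear_combination (l₁ - l₂) * hprod
  have hinv1 : l₁⁻¹ = -l₂ := by
    field_simp
    linear_combination hprod
  have hinv2 : l₂⁻¹ = -l₁ := by
    field_simp
    linear_combination hprod
  have hrec : ∀ i : ℤ, lam (i+1) = (U' - U) * lam i + lam (i-1) := by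
    intro i
    have hS : U' - U = l₁ + l₂ := by rw [hU']; ring
    rw [hS, hlam, hlam, hlam, zpow_add_one₀ hl10, zpow_add_one₀ hl20,
      zpow_sub_one₀ hl10, zpow_sub_one₀ hl20, hinv1, hinv2]
    field_simp
    ring
  -- Part 3: the matrix computation over R2.
  set F : ℤ → Matrix (Fin 2) (Fin 2) R2 := fun k =>
    (cR ((-1 : ℂ) ^ (b * k) * Complex.I ^ ((n : ℤ) * k + k)) * (T ((n : ℤ) * k) : R2)) •
      !![cR (U' * lam k + lam (k - 1)), cR (V * lam k);
         cR (V * lam k), cR (-(U' * lam k) + lam (k + 1))] with hF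
  have hF0 : F 0 = 1 := by
    rw [hF]
    norm_num [hlam0, hlam1, hlamm1, T_zero]
    exact Matrix.one_fin_two.symm
  have hstep : ∀ j : ℤ, F j * (ux : Matrix (Fin 2) (Fin 2) R2) = F (j+1) := by
    intro j
    rw [hux, hMX, hF]
    simp only
    rw [smul_mul_smul_comm]
    have hc : ((-1 : ℂ) ^ (b * j) * Complex.I ^ ((n : ℤ) * j + j)) * ((-1 : ℂ) ^ b * Complex.I ^ (n + 1)) =
        (-1 : ℂ) ^ (b * (j+1)) * Complex.I ^ ((n : ℤ) * (j+1) + (j+1)) := by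
      have h1 : (Complex.I) ^ (n+1) = Complex.I ^ ((n:ℤ)+1) := by
        rw [← zpow_natCast]
        norm_num
      rw [h1, show b*(j+1) = b*j + b from by ring,
        show (n:ℤ)*(j+1)+(j+1) = ((n:ℤ)*j+j) + ((n:ℤ)+1) from by ring,
        zpow_add₀ (neg_ne_zero.mpr (one_ne_zero : (1:ℂ) ≠ 0)) (b*j) b,
        zpow_add₀ Complex.I_ne_zero ((n:ℤ)*j+j) ((n:ℤ)+1)]
      ring
    have hsc : (cR ((-1 : ℂ) ^ (b * j) * Complex.I ^ ((n : ℤ) * j + j)) * (T ((n : ℤ) * j) : R2)) *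
        (cR ((-1 : ℂ) ^ b * Complex.I ^ (n + 1)) * (T (n : ℤ) : R2)) =
        cR ((-1 : ℂ) ^ (b * (j+1)) * Complex.I ^ ((n : ℤ) * (j+1) + (j+1))) * (T ((n : ℤ) * (j+1)) : R2) := by
      rw [mul_mul_mul_comm, ← map_mul, ← T_add, hc]
      congr 2
      ring
    rw [hsc]
    congr 1
    rw [show (-cR U) = cR (-U) from (map_neg cR U).symm, Matrix.mul_fin_two]
    have E11 : (U' * lam j + lam (j-1)) * U' + (V * lam j) * V = U' * lam (j+1) + lam ((j+1)-1) := by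
      rw [add_sub_cancel_right]
      linear_combination (-U') * hrec j + lam j * hI1
    have E12 : (U' * lam j + lam (j-1)) * V + (V * lam j) * (-U) = V * lam (j+1) := by
      linear_combination (-V) * hrec j
    have E21 : (V * lam j) * U' + (-(U' * lam j) + lam (j+1)) * V = V * lam (j+1) := by
      ring
    have E22 : (V * lam j) * V + (-(U' * lam j) + lam (j+1)) * (-U) = -(U' * lam (j+1)) + lam ((j+1)+1) := by
      have h2 := hrec (j+1)
      rw [add_sub_cancel_right] at h2
      linear_combination lam j * hI1 - h2
    simp only [← map_mul, ← map_add]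
    rw [E11, E12, E21, E22]
  exact aux_zpow ux F hF0 hstep

end
end

section
/- With the same setup (n, m ≥ 2 coprime, 3 ∤ m, an − bm = 1, and M_X, M_Y the Burau-type matrices of the torus knot construction), for all k ∈ ℤ: M_Y^k = (−1)^{ak} i^{mk} t^{mk} [[A₁[μ^b]_k + μ₁^k, q^{-1}V[λ]_a[μ^b]_k], [−A₁A₂[μ^b]_k/(q^{-1}V[λ]_a), μ₁^k − A₂[μ^b]_k]]. -/
open LaurentPolynomial

noncomputable section

/-- The element q⁻¹ ∈ ℂ[t^{±1}, q^{±1}]. -/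
def qInv : R2 := LaurentPolynomial.C (LaurentPolynomial.T (-1))


lemma rootkey (N : ℕ) (hN : 0 < N) (j : ℤ) :
    Complex.exp (2 * (Real.pi:ℂ) * Complex.I / (N:ℂ)) ^ j = 1 ↔ (N:ℤ) ∣ j := by
  rw [← Complex.exp_int_mul, Complex.exp_eq_one_iff]
  have hN' : (N:ℂ) ≠ 0 := Nat.cast_ne_zero.mpr hN.ne'
  have hπ : (Real.pi:ℂ) ≠ 0 := Complex.ofReal_ne_zero.mpr Real.pi_ne_zero
  constructor
  · rintro ⟨n, hn⟩
    refine ⟨n, ?_⟩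
    field_simp at hn
    have h2 : (2:ℂ) * Real.pi * Complex.I ≠ 0 := by simp [hπ, Complex.I_ne_zero]
    have hjc : (j:ℂ) = N * n := by
      apply mul_right_cancel₀ h2
      linear_combination (2 * (Real.pi:ℂ) * Complex.I) * hn
    exact_mod_cast hjc
  · rintro ⟨n, rfl⟩
    refine ⟨n, ?_⟩
    push_cast
    field_simp

lemma qInv_mul_qP : qInv * qP = 1 := by
  unfold qInv qP
  rw [← map_mul, ← T_add]
  norm_num

/-- The "core" matrix of the construction. -/
def M0mat (A₁ A₂ : R2) (x : ℂ) : Matrix (Fin 2) (Fin 2) R2 :=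
  !![A₁, qInv * cR x; -(A₁ * A₂) * qP * cR x⁻¹, -A₂]

lemma M0sq (A₁ A₂ : R2) (x τ : ℂ) (hx : x ≠ 0) (hτ : A₁ - A₂ = cR τ) :
    M0mat A₁ A₂ x * M0mat A₁ A₂ x = cR τ • M0mat A₁ A₂ x := by
  have hWW : (qInv * cR x) * (qP * cR x⁻¹) = 1 := by
    have h1 : (qInv * cR x) * (qP * cR x⁻¹) = (qInv * qP) * cR (x * x⁻¹) := by
      rw [map_mul]; ring
    rw [h1, qInv_mul_qP, mul_inv_cancel₀ hx, map_one, one_mul]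
  unfold M0mat
  rw [← hτ]
  refine Matrix.ext fun i j => ?_
  fin_cases i <;> fin_cases j <;>
    simp [Matrix.mul_apply, Fin.sum_univ_two, smul_eq_mul]
  · linear_combination (-(A₁*A₂)) * hWW
  · ring
  · ring
  · linear_combination (-(A₁*A₂)) * hWW

lemma mat_decomp (A₁ A₂ : R2) (x s p : ℂ) :
    !![A₁ * cR s + cR p, qInv * cR (x * s);
       -(A₁ * A₂ * cR s) * qP * cR x⁻¹, cR p - A₂ * cR s]
    = cR s • M0mat A₁ A₂ x + cR p • (1 : Matrix (Fin 2) (Fin 2) R2) := by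
  ext i j : 1
  fin_cases i <;> fin_cases j <;>
    simp [M0mat, Matrix.one_apply, map_mul] <;> ring

/-- The claimed value of `M_Y ^ k`. -/
def Gmat (a : ℤ) (m : ℕ) (mub : ℤ → ℂ) (μ₁ : ℂ) (M0 : Matrix (Fin 2) (Fin 2) R2) (k : ℤ) :
    Matrix (Fin 2) (Fin 2) R2 :=
  (cR ((-1:ℂ)^(a*k) * Complex.I^((m:ℤ)*k)) * (T ((m:ℤ)*k) : R2)) •
    (cR (mub k) • M0 + cR (μ₁^k) • (1 : Matrix (Fin 2) (Fin 2) R2))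

lemma Gmat_zero (a : ℤ) (m : ℕ) (mub : ℤ → ℂ) (μ₁ : ℂ) (M0 : Matrix (Fin 2) (Fin 2) R2)
    (h0 : mub 0 = 0) : Gmat a m mub μ₁ M0 0 = 1 := by
  simp [Gmat, h0]

lemma Gmat_mul (a : ℤ) (m : ℕ) (mub : ℤ → ℂ) (μ₁ τ : ℂ) (M0 : Matrix (Fin 2) (Fin 2) R2)
    (hμ : μ₁ ≠ 0) (hM0 : M0 * M0 = cR τ • M0)
    (hrec : ∀ k : ℤ, mub k * mub 1 * τ + mub k * μ₁ + μ₁^k * mub 1 = mub (k+1)) :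
    ∀ k j : ℤ, j = k + 1 →
      Gmat a m mub μ₁ M0 k * Gmat a m mub μ₁ M0 1 = Gmat a m mub μ₁ M0 j := by
  rintro k j rfl
  unfold Gmat
  rw [smul_mul_smul_comm]
  have hscal : (cR ((-1:ℂ)^(a*k) * Complex.I^((m:ℤ)*k)) * (T ((m:ℤ)*k) : R2)) *
      (cR ((-1:ℂ)^(a*1) * Complex.I^((m:ℤ)*1)) * (T ((m:ℤ)*1) : R2)) =
      cR ((-1:ℂ)^(a*(k+1)) * Complex.I^((m:ℤ)*(k+1))) * (T ((m:ℤ)*(k+1)) : R2) := by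
    have e1 : ((-1:ℂ))^(a*(k+1)) = (-1:ℂ)^(a*k) * (-1:ℂ)^(a*1) := by
      rw [← zpow_add₀ (by norm_num : (-1:ℂ) ≠ 0)]; congr 1; ring
    have e2 : Complex.I^((m:ℤ)*(k+1)) = Complex.I^((m:ℤ)*k) * Complex.I^((m:ℤ)*1) := by
      rw [← zpow_add₀ Complex.I_ne_zero]; congr 1; ring
    have e3 : (T ((m:ℤ)*(k+1)) : R2) = T ((m:ℤ)*k) * T ((m:ℤ)*1) := by
      rw [← T_add]; congr 1; ring
    rw [show ∀ u v : ℂ, ∀ s t : ℤ, (cR u * (T s : R2)) * (cR v * T t) = cR (u*v) * T (s+t) from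
      fun u v s t => by rw [map_mul, T_add]; ring]
    rw [e1, e2]
    congr 2
    · ring
    · ring
  have hmm : (cR (mub k) • M0 + cR (μ₁^k) • (1 : Matrix (Fin 2) (Fin 2) R2)) *
      (cR (mub 1) • M0 + cR (μ₁^(1:ℤ)) • (1 : Matrix (Fin 2) (Fin 2) R2)) =
      cR (mub (k+1)) • M0 + cR (μ₁^(k+1)) • (1 : Matrix (Fin 2) (Fin 2) R2) := by
    rw [add_mul, mul_add, mul_add, smul_mul_smul_comm, smul_mul_smul_comm, smul_mul_smul_comm,
      smul_mul_smul_comm, hM0, one_mul, mul_one, mul_one, ← hrec k,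
      zpow_add_one₀ hμ k, zpow_one]
    simp only [map_add, map_mul]
    module
  rw [hscal, hmm]

/-- in the torus-knot Burau construction (n, m ≥ 2 coprime, 3 ∤ m,
an − bm = 1), with M_Y = (−1)^a i^m t^m [[A₁[μ^b]₁ + μ₁, q⁻¹V[λ]_a[μ^b]₁],
[−A₁A₂[μ^b]₁/(q⁻¹V[λ]_a), μ₁ − A₂[μ^b]₁]], for all k ∈ ℤ one has
M_Y^k = (−1)^{ak} i^{mk} t^{mk} [[A₁[μ^b]_k + μ₁^k, q⁻¹V[λ]_a[μ^b]_k],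
[−A₁A₂[μ^b]_k/(q⁻¹V[λ]_a), μ₁^k − A₂[μ^b]_k]].
(Division by q⁻¹V[λ]_a is written as multiplication by q·(V[λ]_a)⁻¹.) -/
theorem stmt14 (n m : ℕ) (hn : 2 ≤ n) (hm : 2 ≤ m) (hcop : Nat.Coprime n m)
    (h3 : ¬ (3 ∣ m)) (a b : ℤ) (hab : a * n - b * m = 1)
    (ζ4m ζm U l₁ l₂ U' V μ₁ μ₂ : ℂ)
    (hζ4m : ζ4m = Complex.exp (2 * (Real.pi : ℂ) * Complex.I / (4 * (m : ℂ))))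
    (hζm : ζm = Complex.exp (2 * (Real.pi : ℂ) * Complex.I / (m : ℂ)))
    (hU : U = ζ4m ^ (3 * (m : ℤ) - 2) + ζ4m ^ (3 * (m : ℤ) + 2))
    (hl1 : l₁ = ζ4m ^ (3 * (m : ℤ) - 6)) (hl2 : l₂ = ζ4m ^ (3 * (m : ℤ) + 6))
    (hU' : U' = U + l₁ + l₂)
    (hV : V = if 2 < m then -1 - ζm - ζm⁻¹ else -1)
    (hμ1 : μ₁ = Complex.exp (2 * (Real.pi : ℂ) * Complex.I / (n : ℂ))) (hμ2 : μ₂ = μ₁⁻¹)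
    (lam mub : ℤ → ℂ) (hlam : ∀ k : ℤ, lam k = (l₂ ^ k - l₁ ^ k) / (l₂ - l₁))
    (hmub : ∀ k : ℤ, mub k = (μ₂ ^ k - μ₁ ^ k) / (μ₂ ^ b - μ₁ ^ b))
    (A₁ A₂ : R2)
    (hA1 : A₁ = qInv * cR (U' * lam a + lam (a - 1)) - cR (μ₁ ^ b))
    (hA2 : A₂ = qInv * cR (U' * lam a + lam (a - 1)) - cR (μ₂ ^ b))
    (MY : Matrix (Fin 2) (Fin 2) R2)
    (hMY : MY = (cR ((-1 : ℂ) ^ a * Complex.I ^ m) * (T (m : ℤ) : R2)) •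
      !![A₁ * cR (mub 1) + cR μ₁, qInv * cR (V * lam a * mub 1);
         -(A₁ * A₂ * cR (mub 1)) * qP * cR ((V * lam a)⁻¹), cR μ₁ - A₂ * cR (mub 1)])
    (uy : (Matrix (Fin 2) (Fin 2) R2)ˣ) (huy : (uy : Matrix (Fin 2) (Fin 2) R2) = MY) :
    ∀ k : ℤ, ((uy ^ k : (Matrix (Fin 2) (Fin 2) R2)ˣ) : Matrix (Fin 2) (Fin 2) R2) =
      (cR ((-1 : ℂ) ^ (a * k) * Complex.I ^ ((m : ℤ) * k)) * (T ((m : ℤ) * k) : R2)) •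
        !![A₁ * cR (mub k) + cR (μ₁ ^ k), qInv * cR (V * lam a * mub k);
           -(A₁ * A₂ * cR (mub k)) * qP * cR ((V * lam a)⁻¹), cR (μ₁ ^ k) - A₂ * cR (mub k)] := by
  have hm0 : 0 < m := by omega
  have hπ : (Real.pi:ℂ) ≠ 0 := Complex.ofReal_ne_zero.mpr Real.pi_ne_zero
  have hζ4m_ne : ζ4m ≠ 0 := by rw [hζ4m]; exact Complex.exp_ne_zero _
  have hμ1_ne : μ₁ ≠ 0 := by rw [hμ1]; exact Complex.exp_ne_zero _
  have hμ2_ne : μ₂ ≠ 0 := by rw [hμ2]; exact inv_ne_zero hμ1_ne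
  have hm3 : ¬ ((m:ℤ) ∣ 3) := by
    intro h
    have h' : m ∣ 3 := by exact_mod_cast h
    have := Nat.le_of_dvd (by norm_num) h'
    interval_cases m <;> omega
  have hma : ¬ ((m:ℤ) ∣ a) := by
    intro h
    have h1 : (m:ℤ) ∣ 1 := by
      have h2 : (m:ℤ) ∣ a * n - b * m := dvd_sub (h.mul_right n) (dvd_mul_left (m:ℤ) b)
      rwa [hab] at h2
    have := Int.le_of_dvd one_pos h1
    omega
  have hcop3 : IsCoprime (m:ℤ) 3 := by
    rw [Int.isCoprime_iff_gcd_eq_one]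
    have h' : Nat.gcd m 3 = 1 := Nat.coprime_comm.mp ((Nat.prime_three.coprime_iff_not_dvd).mpr h3)
    simpa [Int.gcd] using h'
  have hm3a : ¬ ((m:ℤ) ∣ 3 * a) := fun h => hma (hcop3.dvd_of_dvd_mul_left h)
  -- order facts about ζ4m
  have hζ4m' : ζ4m = Complex.exp (2 * (Real.pi:ℂ) * Complex.I / ((4*m : ℕ):ℂ)) := by
    rw [hζ4m]; congr 1; push_cast; ring
  have hz12 : ∀ j : ℤ, (ζ4m ^ (12*j) = 1 ↔ (m:ℤ) ∣ 3*j) := by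
    intro j
    rw [hζ4m', rootkey (4*m) (by omega) (12*j),
      show ((4*m:ℕ):ℤ) = 4*(m:ℤ) by push_cast; ring,
      show (12*j : ℤ) = 4*(3*j) by ring,
      mul_dvd_mul_iff_left (by norm_num : (4:ℤ) ≠ 0)]
  -- V ≠ 0
  have hVne : V ≠ 0 := by
    rw [hV]
    by_cases h2m : 2 < m
    · simp only [if_pos h2m]
      intro h0
      have hζm_ne : ζm ≠ 0 := by rw [hζm]; exact Complex.exp_ne_zero _
      have hinv : ζm * ζm⁻¹ = 1 := mul_inv_cancel₀ hζm_ne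
      have hq : ζm^2 + ζm + 1 = 0 := by linear_combination (-ζm) * h0 - hinv
      have h31 : ζm ^ (3:ℤ) = 1 := by
        rw [show (3:ℤ) = ((3:ℕ):ℤ) by norm_num, zpow_natCast]
        linear_combination (ζm - 1) * hq
      rw [hζm] at h31
      exact hm3 ((rootkey m hm0 3).mp h31)
    · simp only [if_neg h2m]; norm_num
  -- lam a ≠ 0
  have hl1ne : l₁ ≠ 0 := by rw [hl1]; exact zpow_ne_zero _ hζ4m_ne
  have hden : l₂ - l₁ ≠ 0 := by
    have hl2l1 : l₂ = l₁ * ζ4m ^ ((12:ℤ)*1) := by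
      rw [hl1, hl2, ← zpow_add₀ hζ4m_ne]; congr 1; ring
    rw [hl2l1]
    intro h
    have h' : l₁ * (ζ4m^((12:ℤ)*1) - 1) = 0 := by linear_combination h
    rcases mul_eq_zero.mp h' with h'' | h''
    · exact hl1ne h''
    · exact hm3 (by simpa using (hz12 1).mp (sub_eq_zero.mp h''))
  have hnum : l₂^a - l₁^a ≠ 0 := by
    have e : l₂^a = l₁^a * ζ4m^((12:ℤ)*a) := by
      rw [hl1, hl2, ← zpow_mul, ← zpow_mul, ← zpow_add₀ hζ4m_ne]; congr 1; ring
    rw [e]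
    intro h
    have h' : l₁^a * (ζ4m^((12:ℤ)*a) - 1) = 0 := by linear_combination h
    rcases mul_eq_zero.mp h' with h'' | h''
    · exact zpow_ne_zero _ hl1ne h''
    · exact hm3a ((hz12 a).mp (sub_eq_zero.mp h''))
  have hlamne : lam a ≠ 0 := by
    rw [hlam]; exact div_ne_zero hnum hden
  have hx : V * lam a ≠ 0 := mul_ne_zero hVne hlamne
  -- algebraic setup
  have hτ : A₁ - A₂ = cR (μ₂^b - μ₁^b) := by rw [hA1, hA2, map_sub]; ring
  have hM0 := M0sq A₁ A₂ (V * lam a) (μ₂^b - μ₁^b) hx hτ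
  have hmub0 : mub 0 = 0 := by rw [hmub]; simp
  have hrec : ∀ k : ℤ, mub k * mub 1 * (μ₂^b - μ₁^b) + mub k * μ₁ + μ₁^k * mub 1 = mub (k+1) := by
    intro k
    rw [hmub k, hmub 1, hmub (k+1)]
    by_cases hd : μ₂^b - μ₁^b = 0
    · simp [hd]
    · field_simp
      rw [zpow_add_one₀ hμ1_ne, zpow_add_one₀ hμ2_ne]
      ring
  have hGmul := Gmat_mul a m mub μ₁ (μ₂^b - μ₁^b) (M0mat A₁ A₂ (V * lam a)) hμ1_ne hM0 hrec
  have hG0 : Gmat a m mub μ₁ (M0mat A₁ A₂ (V * lam a)) 0 = 1 := Gmat_zero _ _ _ _ _ hmub0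
  -- MY = G 1
  have hG1 : (uy : Matrix (Fin 2) (Fin 2) R2) = Gmat a m mub μ₁ (M0mat A₁ A₂ (V * lam a)) 1 := by
    rw [huy, hMY]
    have h1 := mat_decomp A₁ A₂ (V * lam a) (mub 1) (μ₁^(1:ℤ))
    rw [zpow_one] at h1
    show _ = (cR ((-1:ℂ)^(a*1) * Complex.I^((m:ℤ)*1)) * (T ((m:ℤ)*1) : R2)) •
      (cR (mub 1) • M0mat A₁ A₂ (V * lam a) + cR (μ₁^(1:ℤ)) • (1 : Matrix (Fin 2) (Fin 2) R2))
    rw [mul_one a, mul_one ((m:ℤ)), zpow_natCast, zpow_one, ← h1]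
  have key : ∀ k : ℤ, ((uy ^ k : (Matrix (Fin 2) (Fin 2) R2)ˣ) : Matrix (Fin 2) (Fin 2) R2)
      = Gmat a m mub μ₁ (M0mat A₁ A₂ (V * lam a)) k := by
    have hGm1 : Gmat a m mub μ₁ (M0mat A₁ A₂ (V * lam a)) (-1) *
        Gmat a m mub μ₁ (M0mat A₁ A₂ (V * lam a)) 1 = 1 := by
      rw [hGmul (-1) 0 (by ring), hG0]
    have h11 : Gmat a m mub μ₁ (M0mat A₁ A₂ (V * lam a)) 1 *
        Gmat a m mub μ₁ (M0mat A₁ A₂ (V * lam a)) (-1) = 1 := mul_eq_one_comm.mp hGm1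
    have hinv : ((uy⁻¹ : (Matrix (Fin 2) (Fin 2) R2)ˣ) : Matrix (Fin 2) (Fin 2) R2)
        = Gmat a m mub μ₁ (M0mat A₁ A₂ (V * lam a)) (-1) := by
      calc (uy⁻¹ : (Matrix (Fin 2) (Fin 2) R2)ˣ).val
          = 1 * (uy⁻¹ : (Matrix (Fin 2) (Fin 2) R2)ˣ).val := (one_mul _).symm
        _ = (Gmat a m mub μ₁ (M0mat A₁ A₂ (V * lam a)) (-1) *
              Gmat a m mub μ₁ (M0mat A₁ A₂ (V * lam a)) 1) *
              (uy⁻¹ : (Matrix (Fin 2) (Fin 2) R2)ˣ).val := by rw [hGm1]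
        _ = Gmat a m mub μ₁ (M0mat A₁ A₂ (V * lam a)) (-1) *
              ((uy : Matrix (Fin 2) (Fin 2) R2) *
                (uy⁻¹ : (Matrix (Fin 2) (Fin 2) R2)ˣ).val) := by rw [← hG1, mul_assoc]
        _ = Gmat a m mub μ₁ (M0mat A₁ A₂ (V * lam a)) (-1) := by
              rw [Units.mul_inv, mul_one]
    intro k
    induction k using Int.induction_on with
    | zero => rw [zpow_zero, Units.val_one, hG0]
    | succ i ih =>
        rw [zpow_add_one, Units.val_mul, ih, hG1, hGmul i ((i:ℤ)+1) rfl]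
    | pred i ih =>
        rw [show (-(i:ℤ) - 1) = (-(i:ℤ)) - 1 from rfl, zpow_sub_one, Units.val_mul, ih, hinv]
        calc Gmat a m mub μ₁ (M0mat A₁ A₂ (V * lam a)) (-(i:ℤ)) *
              Gmat a m mub μ₁ (M0mat A₁ A₂ (V * lam a)) (-1)
            = (Gmat a m mub μ₁ (M0mat A₁ A₂ (V * lam a)) (-(i:ℤ)-1) *
              Gmat a m mub μ₁ (M0mat A₁ A₂ (V * lam a)) 1) *
              Gmat a m mub μ₁ (M0mat A₁ A₂ (V * lam a)) (-1) := by
                rw [hGmul (-(i:ℤ)-1) (-(i:ℤ)) (by ring)]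
          _ = Gmat a m mub μ₁ (M0mat A₁ A₂ (V * lam a)) (-(i:ℤ)-1) := by
                rw [mul_assoc, h11, mul_one]
  intro k
  rw [mat_decomp A₁ A₂ (V * lam a) (mub k) (μ₁^k)]
  exact key k


end
end

section
/- With the torus-knot Burau matrices M_X, M_Y (n, m coprime, 3 ∤ m, an − bm = 1), one has M_X^m = (−1)^{an} i^{nm} t^{nm} I₂ = M_Y^n; in particular X ↦ M_X, Y ↦ M_Y defines a representation of G(n,m) = ⟨X, Y | X^m = Y^n⟩ over ℂ[t^{±1}, q^{±1}]. -/
open LaurentPolynomial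

noncomputable section

lemma pow_of_quad {R : Type*} [CommRing R] (M : Matrix (Fin 2) (Fin 2) R) (s p : R)
    (h : M * M = s • M - p • (1 : Matrix (Fin 2) (Fin 2) R)) (ν : ℕ → R)
    (h0 : ν 0 = 0) (h1 : ν 1 = 1) (hrec : ∀ k, ν (k+2) = s * ν (k+1) - p * ν k) :
    ∀ k, M ^ (k+1) = ν (k+1) • M - (p * ν k) • (1 : Matrix (Fin 2) (Fin 2) R) := by
  intro k
  induction k with
  | zero => simp [h1, h0]
  | succ k ih =>
    rw [pow_succ, ih, sub_mul, Matrix.smul_mul, Matrix.smul_mul, Matrix.one_mul, h,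
      hrec, smul_sub, smul_smul, smul_smul]
    module

lemma mat2_quad {R : Type*} [CommRing R] (a b c d s p : R)
    (k1 : a*a + b*c = s*a - p) (k2 : a*b + b*d = s*b)
    (k3 : c*a + d*c = s*c) (k4 : c*b + d*d = s*d - p) :
    !![a,b;c,d] * !![a,b;c,d] = s • !![a,b;c,d] - p • (1 : Matrix (Fin 2) (Fin 2) R) := by
  refine Matrix.ext fun i j => ?_
  fin_cases i <;> fin_cases j <;>
    simp [Matrix.mul_apply, Fin.sum_univ_succ, Matrix.one_apply]
  · linear_combination k1
  · linear_combination k2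
  · linear_combination k3
  · linear_combination k4

lemma root_dvd (N : ℕ) (hN : 0 < N) (w : ℂ)
    (hw : w = Complex.exp (2*(Real.pi:ℂ)*Complex.I/(N:ℂ))) (k : ℤ) (h : w ^ k = 1) :
    (N:ℤ) ∣ k := by
  rw [hw, ← Complex.exp_int_mul, Complex.exp_eq_one_iff] at h
  obtain ⟨j, hj⟩ := h
  have hN0 : (N:ℂ) ≠ 0 := Nat.cast_ne_zero.2 hN.ne'
  have hπ : (Real.pi:ℂ) ≠ 0 := Complex.ofReal_ne_zero.2 Real.pi_ne_zero
  have hI := Complex.I_ne_zero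
  have h2 : (k:ℂ) = (N:ℂ) * j := by
    field_simp at hj
    have h3 : ((k:ℂ) - (N:ℂ)*j) * (2 * (Real.pi:ℂ) * Complex.I) = 0 := by linear_combination (2 * (Real.pi:ℂ) * Complex.I) * hj
    rcases mul_eq_zero.1 h3 with h4 | h4
    · linear_combination h4
    · exact absurd h4 (by
        refine mul_ne_zero (mul_ne_zero two_ne_zero hπ) hI)
  exact ⟨j, by exact_mod_cast h2⟩


set_option maxHeartbeats 1000000 in
/-- the torus-knot Burau matrices (n, m coprime, 3 ∤ m, an − bm = 1)
satisfy M_X^m = (−1)^{an} i^{nm} t^{nm} I₂ = M_Y^n, hence define a representation of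
G(n,m) = ⟨X, Y | X^m = Y^n⟩ over ℂ[t^{±1}, q^{±1}]. -/
theorem stmt15 (n m : ℕ) (hn : 2 ≤ n) (hm : 2 ≤ m) (hcop : Nat.Coprime n m)
    (h3 : ¬ (3 ∣ m)) (a b : ℤ) (hab : a * n - b * m = 1)
    (ζ4m ζm U l₁ l₂ U' V μ₁ μ₂ : ℂ)
    (hζ4m : ζ4m = Complex.exp (2 * (Real.pi : ℂ) * Complex.I / (4 * (m : ℂ))))
    (hζm : ζm = Complex.exp (2 * (Real.pi : ℂ) * Complex.I / (m : ℂ)))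
    (hU : U = ζ4m ^ (3 * (m : ℤ) - 2) + ζ4m ^ (3 * (m : ℤ) + 2))
    (hl1 : l₁ = ζ4m ^ (3 * (m : ℤ) - 6)) (hl2 : l₂ = ζ4m ^ (3 * (m : ℤ) + 6))
    (hU' : U' = U + l₁ + l₂)
    (hV : V = if 2 < m then -1 - ζm - ζm⁻¹ else -1)
    (hμ1 : μ₁ = Complex.exp (2 * (Real.pi : ℂ) * Complex.I / (n : ℂ))) (hμ2 : μ₂ = μ₁⁻¹)
    (lam mub : ℤ → ℂ) (hlam : ∀ k : ℤ, lam k = (l₂ ^ k - l₁ ^ k) / (l₂ - l₁))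
    (hmub : ∀ k : ℤ, mub k = (μ₂ ^ k - μ₁ ^ k) / (μ₂ ^ b - μ₁ ^ b))
    (A₁ A₂ : R2)
    (hA1 : A₁ = qInv * cR (U' * lam a + lam (a - 1)) - cR (μ₁ ^ b))
    (hA2 : A₂ = qInv * cR (U' * lam a + lam (a - 1)) - cR (μ₂ ^ b))
    (MX MY : Matrix (Fin 2) (Fin 2) R2)
    (hMX : MX = (cR ((-1 : ℂ) ^ b * Complex.I ^ (n + 1)) * (T (n : ℤ) : R2)) •
      !![cR U', cR V; cR V, -cR U])
    (hMY : MY = (cR ((-1 : ℂ) ^ a * Complex.I ^ m) * (T (m : ℤ) : R2)) •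
      !![A₁ * cR (mub 1) + cR μ₁, qInv * cR (V * lam a * mub 1);
         -(A₁ * A₂ * cR (mub 1)) * qP * cR ((V * lam a)⁻¹), cR μ₁ - A₂ * cR (mub 1)]) :
    MX ^ m = (cR ((-1 : ℂ) ^ (a * (n : ℤ)) * Complex.I ^ (n * m)) * (T ((n : ℤ) * m) : R2)) •
        (1 : Matrix (Fin 2) (Fin 2) R2) ∧
      MY ^ n = (cR ((-1 : ℂ) ^ (a * (n : ℤ)) * Complex.I ^ (n * m)) * (T ((n : ℤ) * m) : R2)) •
        (1 : Matrix (Fin 2) (Fin 2) R2) := by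
  have hm0 : (m:ℂ) ≠ 0 := Nat.cast_ne_zero.2 (by omega)
  have hn0 : (n:ℂ) ≠ 0 := Nat.cast_ne_zero.2 (by omega)
  have hz0 : ζ4m ≠ 0 := by rw [hζ4m]; exact Complex.exp_ne_zero _
  have hzm : ζ4m ^ m = Complex.I := by
    rw [hζ4m, ← Complex.exp_nat_mul]
    rw [show (m:ℂ) * (2*(Real.pi:ℂ)*Complex.I/(4*m)) = (↑(Real.pi/2) : ℂ) * Complex.I by
      push_cast; field_simp; ring]
    rw [Complex.exp_mul_I, ← Complex.ofReal_cos, ← Complex.ofReal_sin, Real.cos_pi_div_two,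
      Real.sin_pi_div_two]
    simp
  have hz3m : ζ4m ^ (3*m) = -Complex.I := by
    rw [show 3*m = m*3 by ring, pow_mul, hzm]
    rw [pow_succ, Complex.I_sq]; ring
  have hz6m : (ζ4m^(6:ℕ))^m = -1 := by
    rw [← pow_mul, show 6*m = 3*m*2 by ring, pow_mul, hz3m, neg_sq, Complex.I_sq]
  have key : ∀ j : ℤ, ζ4m ^ (3*(m:ℤ) + j) = -Complex.I * ζ4m ^ j := by
    intro j
    rw [zpow_add₀ hz0, show (3*(m:ℤ)) = ((3*m:ℕ):ℤ) by push_cast; ring, zpow_natCast, hz3m]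
  have L1 : l₁ = -Complex.I * (ζ4m^(6:ℕ))⁻¹ := by
    rw [hl1, show 3*(m:ℤ) - 6 = 3*(m:ℤ) + (-((6:ℕ):ℤ)) by push_cast; ring, key, zpow_neg,
      zpow_natCast]
  have L2 : l₂ = -Complex.I * ζ4m^(6:ℕ) := by
    rw [hl2, show 3*(m:ℤ) + 6 = 3*(m:ℤ) + ((6:ℕ):ℤ) by norm_num, key, zpow_natCast]
  have HUa : U = -Complex.I * (ζ4m^(2:ℕ))⁻¹ + -Complex.I * ζ4m^(2:ℕ) := by
    rw [hU, show 3*(m:ℤ) - 2 = 3*(m:ℤ) + (-((2:ℕ):ℤ)) by push_cast; ring,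
      show 3*(m:ℤ) + 2 = 3*(m:ℤ) + ((2:ℕ):ℤ) by norm_num, key, key, zpow_neg, zpow_natCast]
  have hζmd : ζm = ζ4m^(4:ℕ) := by
    rw [hζm, hζ4m, ← Complex.exp_nat_mul]
    congr 1
    push_cast; field_simp
  have hζm0 : ζm ≠ 0 := by rw [hζm]; exact Complex.exp_ne_zero _
  -- m does not divide 3*k for suitable k
  have hmdvd : ∀ k : ℤ, ζm ^ k = 1 → (m:ℤ) ∣ k :=
    root_dvd m (by omega) ζm hζm
  have hζm3 : ζm ^ (3:ℕ) ≠ 1 := by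
    intro hcon
    have : (m:ℤ) ∣ (3:ℤ) := hmdvd 3 (by rw [show (3:ℤ) = ((3:ℕ):ℤ) by norm_num, zpow_natCast]; exact hcon)
    have h33 : m ∣ 3 := by exact_mod_cast this
    have h34 := Nat.le_of_dvd (by norm_num) h33
    interval_cases m <;> omega
  have hl10 : l₁ ≠ 0 := by
    rw [L1]
    exact mul_ne_zero (neg_ne_zero.2 Complex.I_ne_zero) (inv_ne_zero (pow_ne_zero _ hz0))
  have hl20 : l₂ ≠ 0 := by
    rw [L2]
    exact mul_ne_zero (neg_ne_zero.2 Complex.I_ne_zero) (pow_ne_zero _ hz0)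
  have hrat : l₂ = l₁ * ζm^(3:ℕ) := by
    rw [L1, L2, hζmd]
    field_simp
  have hne : l₂ ≠ l₁ := by
    intro hcon
    apply hζm3
    have : l₁ * ζm^(3:ℕ) = l₁ * 1 := by rw [← hrat, hcon, mul_one]
    exact mul_left_cancel₀ hl10 this
  have hD : l₂ - l₁ ≠ 0 := sub_ne_zero.2 hne
  have hl12 : l₁ * l₂ = -1 := by
    rw [L1, L2, show (-Complex.I * (ζ4m^(6:ℕ))⁻¹) * (-Complex.I * ζ4m^(6:ℕ))
        = (Complex.I*Complex.I) * ((ζ4m^(6:ℕ))⁻¹ * ζ4m^(6:ℕ)) by ring,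
      inv_mul_cancel₀ (pow_ne_zero _ hz0), Complex.I_mul_I, mul_one]
  have hpow1 : l₁ ^ m = -(-Complex.I)^m := by
    rw [L1, mul_pow, inv_pow, hz6m]
    field_simp
  have hpow2 : l₂ ^ m = -(-Complex.I)^m := by
    rw [L2, mul_pow, hz6m]; ring
  -- the key quadratic identities
  have hUU : U*U = -(((ζ4m^(2:ℕ))⁻¹ + ζ4m^(2:ℕ))^2) := by
    rw [HUa]
    linear_combination ((ζ4m^(2:ℕ))⁻¹ + ζ4m^(2:ℕ))^2 * Complex.I_sq
  have hU'U' : U'*U' = -((((ζ4m^(6:ℕ))⁻¹ + (ζ4m^(2:ℕ))⁻¹ + ζ4m^(2:ℕ) + ζ4m^(6:ℕ)))^2) := by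
    rw [hU', HUa, L1, L2]
    linear_combination (((ζ4m^(6:ℕ))⁻¹ + (ζ4m^(2:ℕ))⁻¹ + ζ4m^(2:ℕ) + ζ4m^(6:ℕ)))^2 * Complex.I_sq
  have hsU : (l₁+l₂)*U = -(((ζ4m^(6:ℕ))⁻¹ + ζ4m^(6:ℕ)) * ((ζ4m^(2:ℕ))⁻¹ + ζ4m^(2:ℕ))) := by
    rw [HUa, L1, L2]
    linear_combination ((ζ4m^(6:ℕ))⁻¹ + ζ4m^(6:ℕ)) * ((ζ4m^(2:ℕ))⁻¹ + ζ4m^(2:ℕ)) * Complex.I_sq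
  have hsU' : (l₁+l₂)*U' = -(((ζ4m^(6:ℕ))⁻¹ + ζ4m^(6:ℕ)) *
      ((ζ4m^(6:ℕ))⁻¹ + (ζ4m^(2:ℕ))⁻¹ + ζ4m^(2:ℕ) + ζ4m^(6:ℕ))) := by
    rw [hU', HUa, L1, L2]
    linear_combination ((ζ4m^(6:ℕ))⁻¹ + ζ4m^(6:ℕ)) *
      ((ζ4m^(6:ℕ))⁻¹ + (ζ4m^(2:ℕ))⁻¹ + ζ4m^(2:ℕ) + ζ4m^(6:ℕ)) * Complex.I_sq
  have k1 : U'*U' + V*V = (l₁+l₂)*U' - (-1) := by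
    by_cases h2m : 2 < m
    · rw [hV, if_pos h2m, hζmd, hU'U', hsU']
      field_simp [hz0]
      ring
    · have hm2 : m = 2 := by omega
      have h4 : ζ4m^(4:ℕ) = -1 := by
        rw [show (4:ℕ) = 2*2 by rfl, pow_mul, show ζ4m^2 = Complex.I by rw [← hzm, hm2],
          Complex.I_sq]
      have hA0 : (ζ4m^(6:ℕ))⁻¹ + (ζ4m^(2:ℕ))⁻¹ + ζ4m^(2:ℕ) + ζ4m^(6:ℕ) = 0 := by
        field_simp
        linear_combination (1 + ζ4m^8) * h4
      rw [hV, if_neg h2m, hU'U', hsU', hA0]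
      ring
  have hUUneg : (-U)*(-U) = -(((ζ4m^(2:ℕ))⁻¹ + ζ4m^(2:ℕ))^2) := by
    rw [show (-U)*(-U) = U*U from by ring, hUU]
  have hsUneg : (l₁+l₂)*(-U) = ((ζ4m^(6:ℕ))⁻¹ + ζ4m^(6:ℕ)) * ((ζ4m^(2:ℕ))⁻¹ + ζ4m^(2:ℕ)) := by
    rw [show (l₁+l₂)*(-U) = -((l₁+l₂)*U) from by ring, hsU, neg_neg]
  have k2 : V*V + (-U)*(-U) = (l₁+l₂)*(-U) - (-1) := by
    rw [hUUneg, hsUneg]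
    by_cases h2m : 2 < m
    · rw [hV, if_pos h2m, hζmd]
      field_simp [hz0]
      ring
    · have hm2 : m = 2 := by omega
      have hB0 : (ζ4m^(2:ℕ))⁻¹ + ζ4m^(2:ℕ) = 0 := by
        rw [show ζ4m^(2:ℕ) = Complex.I from by rw [← hzm, hm2], Complex.inv_I]
        ring
      rw [hV, if_neg h2m, hB0]
      ring
  have koff : U'*V + V*(-U) = (l₁+l₂)*V := by rw [hU']; ring
  have koff2 : V*U' + (-U)*V = (l₁+l₂)*V := by rw [hU']; ring
  -- matrix quadratic relation over R2
  have hB2 : (!![cR U', cR V; cR V, -cR U] : Matrix (Fin 2) (Fin 2) R2) *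
      !![cR U', cR V; cR V, -cR U]
      = cR (l₁+l₂) • !![cR U', cR V; cR V, -cR U] - cR (-1) • 1 := by
    have e1 : cR U' * cR U' + cR V * cR V = cR (l₁+l₂) * cR U' - cR (-1) := by
      simp only [← map_mul, ← map_add, ← map_sub]
      exact congrArg cR (by linear_combination k1)
    have e2 : cR U' * cR V + cR V * (-cR U) = cR (l₁+l₂) * cR V := by
      simp only [← map_neg, ← map_mul, ← map_add]
      exact congrArg cR (by linear_combination koff)
    have e3 : cR V * cR U' + (-cR U) * cR V = cR (l₁+l₂) * cR V := by
      simp only [← map_neg, ← map_mul, ← map_add]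
      exact congrArg cR (by linear_combination koff2)
    have e4 : cR V * cR V + (-cR U) * (-cR U) = cR (l₁+l₂) * (-cR U) - cR (-1) := by
      simp only [← map_neg, ← map_mul, ← map_add, ← map_sub]
      exact congrArg cR (by linear_combination k2)
    exact mat2_quad _ _ _ _ _ _ e1 e2 e3 e4
  -- the sequence
  have hlamrec : ∀ k : ℕ, cR (lam ((k:ℕ)+2:ℕ)) =
      cR (l₁+l₂) * cR (lam ((k:ℕ)+1:ℕ)) - cR (-1) * cR (lam (k:ℕ)) := by
    intro k
    simp only [← map_mul, ← map_sub]
    refine congrArg cR ?_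
    have hc2 : (((k+2:ℕ):ℤ)) = (k:ℤ)+2 := by push_cast; ring
    have hc1 : (((k+1:ℕ):ℤ)) = (k:ℤ)+1 := by push_cast; ring
    rw [hc2, hc1, hlam, hlam, hlam,
      zpow_add₀ hl10, zpow_add₀ hl20, zpow_add₀ hl10, zpow_add₀ hl20]
    simp only [zpow_natCast, zpow_two, zpow_one]
    field_simp
    ring_nf
    linear_combination (l₁ ^ k - l₂ ^ k) * hl12
  have hlam0 : lam 0 = 0 := by rw [hlam]; simp
  have hlam1 : lam 1 = 1 := by
    rw [hlam, zpow_one, zpow_one]; exact div_self hD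
  have hlamm : lam (m:ℤ) = 0 := by
    rw [hlam, zpow_natCast, zpow_natCast, hpow1, hpow2, sub_self, zero_div]
  have hlamm1 : lam ((m-1:ℕ):ℤ) = -(-Complex.I)^m := by
    rw [hlam, zpow_natCast, zpow_natCast, div_eq_iff hD]
    have e1 : l₁^(m-1) * l₁ = -(-Complex.I)^m := by
      rw [← pow_succ, Nat.sub_add_cancel (by omega)]; exact hpow1
    have e2 : l₂^(m-1) * l₂ = -(-Complex.I)^m := by
      rw [← pow_succ, Nat.sub_add_cancel (by omega)]; exact hpow2
    linear_combination (-l₁)*e2 + l₂*e1 + (l₂^(m-1) - l₁^(m-1))*hl12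
  have hBm : (!![cR U', cR V; cR V, -cR U] : Matrix (Fin 2) (Fin 2) R2) ^ m
      = cR (-(-Complex.I)^m) • 1 := by
    have hp := pow_of_quad _ _ _ hB2 (fun k : ℕ => cR (lam (k:ℤ)))
      (by norm_num [hlam0]) (by norm_num [hlam1]) hlamrec (m-1)
    rw [Nat.sub_add_cancel (by omega)] at hp
    rw [hp]
    rw [hlamm, map_zero, zero_smul, zero_sub, hlamm1, ← map_mul,
      show (-1:ℂ) * -(-Complex.I)^m = (-Complex.I)^m from by ring, map_neg]
    module
  have h2m : (Complex.I)^(2*m) = (-1:ℂ)^m := by rw [pow_mul, Complex.I_sq]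
  have h4m : ((-1:ℂ))^m * (-1:ℂ)^m = 1 := by rw [← mul_pow]; norm_num
  have key2 : (Complex.I^(n+1))^m * (-(-Complex.I)^m) = -Complex.I^(n*m) := by
    rw [← pow_mul, neg_pow Complex.I m, show (n+1)*m = n*m + m from by ring, pow_add]
    linear_combination (-(((-1:ℂ))^m) * Complex.I^(n*m)) * h2m - (Complex.I^(n*m)) * h4m
  have CI1 : ((-1:ℂ)^b * Complex.I^(n+1))^m * (-(-Complex.I)^m)
      = (-1:ℂ)^(a*(n:ℤ)) * Complex.I^(n*m) := by
    have han : a*(n:ℤ) = b*(m:ℤ) + 1 := by omega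
    rw [han, zpow_add₀ (by norm_num : (-1:ℂ) ≠ 0), zpow_one, zpow_mul,
      zpow_natCast ((-1:ℂ)^b) m]
    linear_combination ((-1:ℂ)^b)^m * key2
  have hZ : (cR ((-1:ℂ)^b * Complex.I^(n+1)) * (T ((n:ℤ)) : R2))^m * cR (-(-Complex.I)^m)
      = cR ((-1:ℂ)^(a*(n:ℤ)) * Complex.I^(n*m)) * (T ((n:ℤ)*m) : R2) := by
    rw [mul_pow, ← map_pow, T_pow, mul_right_comm, ← map_mul, CI1, mul_comm ((m:ℤ)) ((n:ℤ))]
  have goalX : MX ^ m = (cR ((-1:ℂ)^(a*(n:ℤ)) * Complex.I^(n*m)) * (T ((n:ℤ)*m) : R2)) • 1 := by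
    rw [hMX, smul_pow, hBm, smul_smul, hZ]
  refine ⟨goalX, ?_⟩
  -- ===== MY part =====
  have hμ0 : μ₁ ≠ 0 := by rw [hμ1]; exact Complex.exp_ne_zero _
  have hμn1 : μ₁ ^ n = 1 := by
    rw [hμ1, ← Complex.exp_nat_mul,
      show (n:ℂ) * (2*(Real.pi:ℂ)*Complex.I/(n:ℂ)) = 2*(Real.pi:ℂ)*Complex.I from by field_simp,
      Complex.exp_two_pi_mul_I]
  have hμ12 : μ₁ * μ₂ = 1 := by rw [hμ2, mul_inv_cancel₀ hμ0]
  have hndvd : ∀ k : ℤ, μ₁ ^ k = 1 → (n:ℤ) ∣ k := root_dvd n (by omega) μ₁ hμ1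
  have CI2 : ((-1:ℂ)^a * Complex.I^m)^n = (-1:ℂ)^(a*(n:ℤ)) * Complex.I^(n*m) := by
    rw [mul_pow, ← pow_mul, mul_comm m n, zpow_mul, zpow_natCast ((-1:ℂ)^a) n]
  have tail : MY ^ n = (cR ((-1:ℂ)^a * Complex.I^m) * (T ((m:ℤ)) : R2))^n • 1 →
      MY ^ n = (cR ((-1 : ℂ) ^ (a * (n : ℤ)) * Complex.I ^ (n * m)) * (T ((n : ℤ) * m) : R2)) • 1 := by
    intro h
    rw [h, mul_pow, ← map_pow, T_pow, CI2]
  rcases eq_or_lt_of_le hn with h2 | h3n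
  · -- n = 2 : here μ₂ = μ₁ and mub 1 = 0
    have hn2 : n = 2 := h2.symm
    have h' := hμn1
    rw [hn2] at h'
    have hμ21 : μ₂ = μ₁ := by
      rw [hμ2]
      field_simp
      linear_combination -h'
    have hmub1 : mub 1 = 0 := by
      rw [hmub, zpow_one, zpow_one, hμ21, sub_self, zero_div]
    have hscal : (!![A₁ * cR (mub 1) + cR μ₁, qInv * cR (V * lam a * mub 1);
         -(A₁ * A₂ * cR (mub 1)) * qP * cR ((V * lam a)⁻¹), cR μ₁ - A₂ * cR (mub 1)] :
         Matrix (Fin 2) (Fin 2) R2) = cR μ₁ • 1 := by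
      rw [hmub1]
      refine Matrix.ext fun i j => ?_
      fin_cases i <;> fin_cases j <;>
        simp [Matrix.one_apply, mul_zero, map_zero]
    apply tail
    rw [hMY, hscal, smul_smul, smul_pow, one_pow, mul_pow, ← map_pow, hμn1, map_one, mul_one]
  · -- n ≥ 3
    have hμne : μ₂ ≠ μ₁ := by
      intro hcon
      have h1 : μ₁ ^ (2:ℤ) = 1 := by
        rw [show (2:ℤ) = 1+1 from rfl, zpow_add₀ hμ0, zpow_one,
          show μ₁ * μ₁ = μ₁ * μ₂ from by rw [hcon]]
        exact hμ12
      have h2' := hndvd 2 h1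
      have h2n : n ∣ 2 := by exact_mod_cast h2'
      have := Nat.le_of_dvd (by norm_num) h2n
      omega
    have hμD : μ₂ - μ₁ ≠ 0 := sub_ne_zero.2 hμne
    have hμ20 : μ₂ ≠ 0 := by rw [hμ2]; exact inv_ne_zero hμ0
    have hden : μ₂ ^ b - μ₁ ^ b ≠ 0 := by
      intro hcon
      have hbb : μ₂ ^ b = μ₁ ^ b := sub_eq_zero.1 hcon
      have h1 : μ₁ ^ (2*b) = 1 := by
        rw [two_mul, zpow_add₀ hμ0,
          show μ₁^b * μ₁^b = μ₁^b * μ₂^b from by rw [hbb], hμ2, inv_zpow]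
        exact mul_inv_cancel₀ (zpow_ne_zero _ hμ0)
      have h2' := hndvd _ h1
      have hcp : IsCoprime ((n:ℤ)) b := ⟨a, -(m:ℤ), by push_cast; linear_combination hab⟩
      have h2dvd : (n:ℤ) ∣ 2 := hcp.dvd_of_dvd_mul_right h2'
      have h2n : n ∣ 2 := by exact_mod_cast h2dvd
      have := Nat.le_of_dvd (by norm_num) h2n
      omega
    have hmub1S : mub 1 * (μ₂^b - μ₁^b) = μ₂ - μ₁ := by
      rw [hmub, zpow_one, zpow_one]
      exact div_mul_cancel₀ _ hden
    have hV0 : V ≠ 0 := by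
      by_cases h2m : 2 < m
      · rw [hV, if_pos h2m]
        intro hcon
        apply hζm3
        have h5 : ζm^2 + ζm + 1 = 0 := by
          field_simp at hcon
          linear_combination -hcon
        linear_combination (ζm - 1) * h5
      · rw [hV, if_neg h2m]; norm_num
    have hlama : lam a ≠ 0 := by
      rw [hlam]
      apply div_ne_zero _ hD
      intro hcon
      have hc2 : l₂^a = l₁^a := sub_eq_zero.1 hcon
      have h1 : ζm ^ ((3:ℤ)*a) = 1 := by
        have e : l₂^a = l₁^a * ζm^((3:ℤ)*a) := by
          rw [hrat, mul_zpow, ← zpow_natCast ζm (3:ℕ), ← zpow_mul]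
          norm_num
        rw [e] at hc2
        have := mul_left_cancel₀ (zpow_ne_zero a hl10) (hc2.trans (mul_one _).symm)
        exact this
      have h2' := hmdvd _ h1
      have hcp : IsCoprime ((m:ℤ)) a := ⟨-b, (n:ℤ), by push_cast; linear_combination hab⟩
      have h3dvd : (m:ℤ) ∣ 3 := hcp.dvd_of_dvd_mul_right h2'
      have hm3 : m ∣ 3 := by exact_mod_cast h3dvd
      have := Nat.le_of_dvd (by norm_num) hm3
      interval_cases m <;> omega
    have hVla : V * lam a ≠ 0 := mul_ne_zero hV0 hlama
    have f1 : qInv * qP = 1 := by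
      rw [qInv, qP, ← map_mul, ← T_add]
      norm_num
    have f2 : cR (V * lam a) * cR ((V*lam a)⁻¹) = 1 := by
      rw [← map_mul, mul_inv_cancel₀ hVla, map_one]
    have f3 : cR (mub 1) * (A₁ - A₂) = cR μ₂ - cR μ₁ := by
      rw [hA1, hA2, show ∀ w x y : R2, (w - x) - (w - y) = y - x from fun _ _ _ => by ring,
        ← map_sub, ← map_mul, ← map_sub]
      exact congrArg cR (by linear_combination hmub1S)
    have f4 : cR μ₁ * cR μ₂ = 1 := by rw [← map_mul, hμ12, map_one]
    have hoff : (qInv * cR (V * lam a * mub 1)) *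
        (-(A₁ * A₂ * cR (mub 1)) * qP * cR ((V * lam a)⁻¹))
        = -(A₁ * A₂ * (cR (mub 1) * cR (mub 1))) := by
      rw [map_mul,
        show (qInv * (cR (V*lam a) * cR (mub 1))) * (-(A₁*A₂*cR (mub 1)) * qP * cR ((V*lam a)⁻¹))
          = -(A₁*A₂*(cR (mub 1) * cR (mub 1))) * ((qInv*qP) * (cR (V*lam a) * cR ((V*lam a)⁻¹)))
          from by ring, f1, f2]
      ring
    have E1 : (A₁ * cR (mub 1) + cR μ₁)*(A₁ * cR (mub 1) + cR μ₁) +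
        (qInv * cR (V * lam a * mub 1)) * (-(A₁ * A₂ * cR (mub 1)) * qP * cR ((V * lam a)⁻¹))
        = (cR μ₁ + cR μ₂)*(A₁ * cR (mub 1) + cR μ₁) - 1 := by
      rw [hoff]
      linear_combination (A₁ * cR (mub 1)) * f3 - f4
    have E2 : (A₁ * cR (mub 1) + cR μ₁)*(qInv * cR (V * lam a * mub 1)) +
        (qInv * cR (V * lam a * mub 1))*(cR μ₁ - A₂ * cR (mub 1))
        = (cR μ₁ + cR μ₂)*(qInv * cR (V * lam a * mub 1)) := by
      linear_combination (qInv * cR (V * lam a * mub 1)) * f3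
    have E3 : (-(A₁ * A₂ * cR (mub 1)) * qP * cR ((V * lam a)⁻¹))*(A₁ * cR (mub 1) + cR μ₁) +
        (cR μ₁ - A₂ * cR (mub 1))*(-(A₁ * A₂ * cR (mub 1)) * qP * cR ((V * lam a)⁻¹))
        = (cR μ₁ + cR μ₂)*(-(A₁ * A₂ * cR (mub 1)) * qP * cR ((V * lam a)⁻¹)) := by
      linear_combination (-(A₁ * A₂ * cR (mub 1)) * qP * cR ((V * lam a)⁻¹)) * f3
    have E4 : (-(A₁ * A₂ * cR (mub 1)) * qP * cR ((V * lam a)⁻¹))*(qInv * cR (V * lam a * mub 1)) +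
        (cR μ₁ - A₂ * cR (mub 1))*(cR μ₁ - A₂ * cR (mub 1))
        = (cR μ₁ + cR μ₂)*(cR μ₁ - A₂ * cR (mub 1)) - 1 := by
      rw [mul_comm (-(A₁ * A₂ * cR (mub 1)) * qP * cR ((V * lam a)⁻¹))
        (qInv * cR (V * lam a * mub 1)), hoff]
      linear_combination (-(A₂ * cR (mub 1))) * f3 - f4
    have hE2 := mat2_quad (A₁ * cR (mub 1) + cR μ₁) (qInv * cR (V * lam a * mub 1))
      (-(A₁ * A₂ * cR (mub 1)) * qP * cR ((V * lam a)⁻¹)) (cR μ₁ - A₂ * cR (mub 1))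
      (cR μ₁ + cR μ₂) 1 E1 E2 E3 E4
    have hnurec : ∀ k : ℕ, cR ((μ₂^(((k:ℕ)+2:ℕ):ℤ) - μ₁^(((k:ℕ)+2:ℕ):ℤ))/(μ₂ - μ₁)) =
        (cR μ₁ + cR μ₂) * cR ((μ₂^(((k:ℕ)+1:ℕ):ℤ) - μ₁^(((k:ℕ)+1:ℕ):ℤ))/(μ₂ - μ₁))
        - 1 * cR ((μ₂^((k:ℕ):ℤ) - μ₁^((k:ℕ):ℤ))/(μ₂ - μ₁)) := by
      intro k
      rw [one_mul, ← map_add, ← map_mul, ← map_sub]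
      refine congrArg cR ?_
      have hc2 : (((k+2:ℕ):ℤ)) = (k:ℤ)+2 := by push_cast; ring
      have hc1 : (((k+1:ℕ):ℤ)) = (k:ℤ)+1 := by push_cast; ring
      rw [hc2, hc1, zpow_add₀ hμ20, zpow_add₀ hμ0, zpow_add₀ hμ20, zpow_add₀ hμ0]
      simp only [zpow_natCast, zpow_two, zpow_one]
      field_simp
      ring_nf
      linear_combination (μ₁ ^ k - μ₂ ^ k) * hμ12
    have hμ2n : μ₂ ^ n = 1 := by rw [hμ2, inv_pow, hμn1, inv_one]
    have hnun : cR ((μ₂^((n:ℕ):ℤ) - μ₁^((n:ℕ):ℤ))/(μ₂ - μ₁)) = 0 := by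
      rw [zpow_natCast, zpow_natCast, hμ2n, hμn1, sub_self, zero_div, map_zero]
    have hnun1 : cR ((μ₂^((n-1:ℕ):ℤ) - μ₁^((n-1:ℕ):ℤ))/(μ₂ - μ₁)) = -1 := by
      rw [zpow_natCast, zpow_natCast]
      have e1 : μ₁^(n-1) * μ₁ = 1 := by
        rw [← pow_succ, Nat.sub_add_cancel (by omega)]; exact hμn1
      have e2 : μ₂^(n-1) * μ₂ = 1 := by
        rw [← pow_succ, Nat.sub_add_cancel (by omega)]; exact hμ2n
      rw [show ((μ₂^(n-1) - μ₁^(n-1))/(μ₂ - μ₁)) = -1 from by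
        rw [div_eq_iff hμD]
        linear_combination μ₁*e2 - μ₂*e1 - (μ₂^(n-1) - μ₁^(n-1))*hμ12, map_neg, map_one]
    have hEn : (!![A₁ * cR (mub 1) + cR μ₁, qInv * cR (V * lam a * mub 1);
         -(A₁ * A₂ * cR (mub 1)) * qP * cR ((V * lam a)⁻¹), cR μ₁ - A₂ * cR (mub 1)] :
         Matrix (Fin 2) (Fin 2) R2) ^ n = 1 := by
      have hp := pow_of_quad _ _ _ hE2
        (fun k : ℕ => cR ((μ₂^((k:ℕ):ℤ) - μ₁^((k:ℕ):ℤ))/(μ₂ - μ₁)))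
        (by norm_num) (by norm_num [div_self hμD]) hnurec (n-1)
      rw [Nat.sub_add_cancel (by omega)] at hp
      rw [hp, hnun, hnun1, zero_smul, zero_sub]
      norm_num
      module
    apply tail
    rw [hMY, smul_pow, hEn]

end
end

section
/- In the case n = 3, m = 4 (so a = b = −1), with U = −√(−2), the matrices M_X = t³[[0,1],[1,U]] and M_Y = t⁴[[1 + q^{-1}U, −q^{-1}], [−2q^{-1} + q + U, −q^{-1}U]] satisfy M_X⁴ = M_Y³ = t^{12}·I₂·(−i)^{12} (i.e., M_X⁴ = M_Y³), and their specializations at t = q = 1 generate a finite subgroup of GL₂(ℂ) of order 48 isomorphic to the complex reflection group G₁₂. -/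
open LaurentPolynomial

noncomputable section

/-- Relators for the complex reflection group G₁₂: generators x₁, x₂, x₃ with
x₁x₂x₃x₁ = x₂x₃x₁x₂ = x₃x₁x₂x₃ and xᵢ² = 1. -/
def g12Rels : Set (FreeGroup (Fin 3)) :=
  {FreeGroup.of 0 * FreeGroup.of 1 * FreeGroup.of 2 * FreeGroup.of 0 *
      (FreeGroup.of 1 * FreeGroup.of 2 * FreeGroup.of 0 * FreeGroup.of 1)⁻¹,
   FreeGroup.of 1 * FreeGroup.of 2 * FreeGroup.of 0 * FreeGroup.of 1 *
      (FreeGroup.of 2 * FreeGroup.of 0 * FreeGroup.of 1 * FreeGroup.of 2)⁻¹} ∪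
  Set.range (fun i : Fin 3 => (FreeGroup.of i) ^ 2)

/- ================= auxiliary definitions and lemmas ================= -/

set_option linter.unnecessarySeqFocus false

lemma matkey {S : Type} [CommRing S] (u v w : S) (hu : u * u = -2) (hv : v * w = 1) :
    (!![(0:S),1;1,u]) ^ 4 = -1 ∧ (!![1+v*u, -v; -2*v+w+u, -(v*u)]) ^ 3 = -1 := by
  constructor
  · have h2 : (!![(0:S),1;1,u]) * (!![(0:S),1;1,u]) = !![1,u;u,-1] := by
      ext i j; fin_cases i <;> fin_cases j <;>
        simp [Matrix.mul_apply, Fin.sum_univ_two] <;>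
        first | ring1 | linear_combination hu
    rw [show (4:ℕ) = 2+2 from rfl, pow_add, pow_two, h2]
    ext i j; fin_cases i <;> fin_cases j <;>
      simp [Matrix.mul_apply, Fin.sum_univ_two] <;>
      first | ring1 | linear_combination hu
  · have h2 : (!![1+v*u, -v; -2*v+w+u, -(v*u)]) * (!![1+v*u, -v; -2*v+w+u, -(v*u)])
        = (!![1+v*u, -v; -2*v+w+u, -(v*u)]) - 1 := by
      ext i j; fin_cases i <;> fin_cases j <;>
        simp [Matrix.mul_apply, Fin.sum_univ_two] <;>
        first | ring1 | linear_combination v*v*hu - hv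
    rw [pow_succ, pow_two, h2, sub_mul, one_mul, h2]
    abel

abbrev Zs := Zsqrtd (-2)
abbrev MZ := Matrix (Fin 2) (Fin 2) Zs

abbrev P12 := PresentedGroup g12Rels
def pi12 : FreeGroup (Fin 3) →* P12 := QuotientGroup.mk' (Subgroup.normalClosure g12Rels)
def xg (i : Fin 3) : P12 := PresentedGroup.of i
lemma pi_of (i : Fin 3) : pi12 (FreeGroup.of i) = xg i := rfl
lemma rel_one {r : FreeGroup (Fin 3)} (h : r ∈ g12Rels) : pi12 r = 1 :=
  (QuotientGroup.eq_one_iff r).mpr (Subgroup.subset_normalClosure h)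
lemma xg_sq (i : Fin 3) : xg i * xg i = 1 := by
  have h := rel_one (Set.mem_union_right _ ⟨i, rfl⟩)
  simpa [pow_two, pi_of] using h
def ev (l : List (Fin 3)) : P12 := (l.map xg).prod
lemma ev_append (a b : List (Fin 3)) : ev (a ++ b) = ev a * ev b := by simp [ev]
lemma ev_cons (i : Fin 3) (l : List (Fin 3)) : xg i * ev l = ev (i :: l) := by simp [ev]
lemma evRW {u v : List (Fin 3)} (h : ev u = ev v) (l r : List (Fin 3)) :
    ev (l ++ (u ++ r)) = ev (l ++ (v ++ r)) := by
  rw [ev_append, ev_append, ev_append, ev_append, h]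
lemma Rs0 : ev [0,0] = ev [] := by simpa [ev] using xg_sq 0
lemma Rs1 : ev [1,1] = ev [] := by simpa [ev] using xg_sq 1
lemma Rs2 : ev [2,2] = ev [] := by simpa [ev] using xg_sq 2
lemma Rb1 : ev [0,1,2,0] = ev [1,2,0,1] := by
  have h := rel_one (Set.mem_union_left _ (Set.mem_insert _ _))
  rw [map_mul, map_inv, mul_inv_eq_one] at h
  simp only [map_mul, pi_of, mul_assoc] at h
  simp only [ev, List.map, List.prod_cons, List.prod_nil, mul_one, mul_assoc]
  exact h
lemma Rb2 : ev [1,2,0,1] = ev [2,0,1,2] := by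
  have h := rel_one (Set.mem_union_left _ (Set.mem_insert_of_mem _ rfl))
  rw [map_mul, map_inv, mul_inv_eq_one] at h
  simp only [map_mul, pi_of, mul_assoc] at h
  simp only [ev, List.map, List.prod_cons, List.prod_nil, mul_one, mul_assoc]
  exact h
lemma t_0_0 : ev [0] = ev [0] := rfl
lemma t_0_1 : ev [0,0] = ev [] := (evRW Rs0 [] [])
lemma t_0_4 : ev [0,0,1] = ev [1] := (evRW Rs0 [] [1])
lemma t_0_10 : ev [0,0,1,0] = ev [1,0] := (evRW Rs0 [] [1,0])
lemma t_0_22 : ev [0,0,1,0,1] = ev [1,0,1] := (evRW Rs0 [] [1,0,1])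
lemma t_0_36 : ev [0,0,1,0,1,0] = ev [1,0,1,0] := (evRW Rs0 [] [1,0,1,0])
lemma t_0_45 : ev [0,0,1,0,1,0,1] = ev [1,0,1,0,1] := (evRW Rs0 [] [1,0,1,0,1])
lemma t_0_37 : ev [0,0,1,0,1,2] = ev [1,0,1,2] := (evRW Rs0 [] [1,0,1,2])
lemma t_0_46 : ev [0,0,1,0,1,2,1] = ev [1,0,1,2,1] := (evRW Rs0 [] [1,0,1,2,1])
lemma t_0_23 : ev [0,0,1,0,2] = ev [1,0,2] := (evRW Rs0 [] [1,0,2])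
lemma t_0_38 : ev [0,0,1,0,2,0] = ev [1,0,2,0] := (evRW Rs0 [] [1,0,2,0])
lemma t_0_47 : ev [0,0,1,0,2,0,2] = ev [1,0,2,0,2] := (evRW Rs0 [] [1,0,2,0,2])
lemma t_0_11 : ev [0,0,1,2] = ev [1,2] := (evRW Rs0 [] [1,2])
lemma t_0_24 : ev [0,0,1,2,0] = ev [1,2,0] := (evRW Rs0 [] [1,2,0])
lemma t_0_25 : ev [0,0,1,2,1] = ev [1,2,1] := (evRW Rs0 [] [1,2,1])
lemma t_0_39 : ev [0,0,1,2,1,2] = ev [1,2,1,2] := (evRW Rs0 [] [1,2,1,2])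
lemma t_0_5 : ev [0,0,2] = ev [2] := (evRW Rs0 [] [2])
lemma t_0_12 : ev [0,0,2,0] = ev [2,0] := (evRW Rs0 [] [2,0])
lemma t_0_26 : ev [0,0,2,0,1] = ev [2,0,1] := (evRW Rs0 [] [2,0,1])
lemma t_0_27 : ev [0,0,2,0,2] = ev [2,0,2] := (evRW Rs0 [] [2,0,2])
lemma t_0_40 : ev [0,0,2,0,2,0] = ev [2,0,2,0] := (evRW Rs0 [] [2,0,2,0])
lemma t_0_13 : ev [0,0,2,1] = ev [2,1] := (evRW Rs0 [] [2,1])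
lemma t_0_28 : ev [0,0,2,1,0] = ev [2,1,0] := (evRW Rs0 [] [2,1,0])
lemma t_0_29 : ev [0,0,2,1,2] = ev [2,1,2] := (evRW Rs0 [] [2,1,2])
lemma t_0_41 : ev [0,0,2,1,2,1] = ev [2,1,2,1] := (evRW Rs0 [] [2,1,2,1])
lemma t_0_2 : ev [0,1] = ev [0,1] := rfl
lemma t_0_6 : ev [0,1,0] = ev [0,1,0] := rfl
lemma t_0_14 : ev [0,1,0,1] = ev [0,1,0,1] := rfl
lemma t_0_30 : ev [0,1,0,1,0] = ev [0,1,0,1,0] := rfl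
lemma t_0_42 : ev [0,1,0,1,0,1] = ev [0,1,0,1,0,1] := rfl
lemma t_0_31 : ev [0,1,0,1,2] = ev [0,1,0,1,2] := rfl
lemma t_0_43 : ev [0,1,0,1,2,1] = ev [0,1,0,1,2,1] := rfl
lemma t_0_15 : ev [0,1,0,2] = ev [0,1,0,2] := rfl
lemma t_0_32 : ev [0,1,0,2,0] = ev [0,1,0,2,0] := rfl
lemma t_0_44 : ev [0,1,0,2,0,2] = ev [0,1,0,2,0,2] := rfl
lemma t_0_7 : ev [0,1,2] = ev [0,1,2] := rfl
lemma t_0_16 : ev [0,1,2,0] = ev [0,1,2,0] := rfl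
lemma t_0_17 : ev [0,1,2,1] = ev [0,1,2,1] := rfl
lemma t_0_33 : ev [0,1,2,1,2] = ev [0,1,2,1,2] := rfl
lemma t_0_3 : ev [0,2] = ev [0,2] := rfl
lemma t_0_8 : ev [0,2,0] = ev [0,2,0] := rfl
lemma t_0_18 : ev [0,2,0,1] = ev [0,2,0,1] := rfl
lemma t_0_19 : ev [0,2,0,2] = ev [0,2,0,2] := rfl
lemma t_0_34 : ev [0,2,0,2,0] = ev [0,2,0,2,0] := rfl
lemma t_0_9 : ev [0,2,1] = ev [0,2,1] := rfl
lemma t_0_20 : ev [0,2,1,0] = ev [0,2,1,0] := rfl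
lemma t_0_21 : ev [0,2,1,2] = ev [0,2,1,2] := rfl
lemma t_0_35 : ev [0,2,1,2,1] = ev [0,2,1,2,1] := rfl
lemma t_1_0 : ev [1] = ev [1] := rfl
lemma t_1_1 : ev [1,0] = ev [1,0] := rfl
lemma t_1_4 : ev [1,0,1] = ev [1,0,1] := rfl
lemma t_1_10 : ev [1,0,1,0] = ev [1,0,1,0] := rfl
lemma t_1_22 : ev [1,0,1,0,1] = ev [1,0,1,0,1] := rfl
lemma t_1_36 : ev [1,0,1,0,1,0] = ev [0,1,0,1,0,1] := ((evRW Rs2.symm [1] [0,1,0,1,0]).trans ((evRW Rs0.symm [1,2] [2,0,1,0,1,0]).trans ((evRW Rs1.symm [1,2,0,0] [2,0,1,0,1,0]).trans ((evRW Rb2 [1,2,0,0,1] [0,1,0]).trans ((evRW Rb1 [1,2,0] [1,2,0,1,0]).trans ((evRW Rb1.symm [] [2,0,1,1,2,0,1,0]).trans ((evRW Rb2 [0,1,2,0,2,0,1] [0]).trans ((evRW Rb1 [0,1,2,0,2,0,1,2] []).trans ((evRW Rb2.symm [0,1,2,0] [1,2,0,1]).trans ((evRW Rs1 [0,1,2,0,1,2,0]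 [2,0,1]).trans ((evRW Rb1 [0,1,2] [2,0,1]).trans ((evRW Rb2 [0,1,2] [2,0,1]).trans ((evRW Rs2 [0,1] [0,1,2,2,0,1]).trans (evRW Rs2 [0,1,0,1] [0,1]))))))))))))))
lemma t_1_45 : ev [1,0,1,0,1,0,1] = ev [0,1,0,1,0] := ((evRW Rs2.symm [1] [0,1,0,1,0,1]).trans ((evRW Rs0.symm [1,2] [2,0,1,0,1,0,1]).trans ((evRW Rs1.symm [1,2,0,0] [2,0,1,0,1,0,1]).trans ((evRW Rb2 [1,2,0,0,1] [0,1,0,1]).trans ((evRW Rb1 [1,2,0] [1,2,0,1,0,1]).trans ((evRW Rb1.symm [] [2,0,1,1,2,0,1,0,1]).trans ((evRW Rb2 [0,1,2,0,2,0,1] [0,1]).trans ((evRW Rb1 [0,1,2,0,2] [1,2,0,1]).trans ((evRW Rb1.symm [0,1,2,0,2,1,2,0,1] []).trans ((evRW Rb2 [0,1,2,0,2] [0,1,2,0]).trans ((evRW Rs2 [0,1,2,0] [0,1,2,0,1,2,0]).trans ((evRW Rs0 [0,1,2] [1,2,0,1,2,0]).trans ((evRW Rb2 [0,1,2] [2,0]).trans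 ((evRW Rs2 [0,1] [0,1,2,2,0]).trans (evRW Rs2 [0,1,0,1] [0])))))))))))))))
lemma t_1_37 : ev [1,0,1,0,1,2] = ev [2,0,2,0] := ((evRW Rs0.symm [1,0,1,0,1,2] []).trans ((evRW Rb1 [1,0,1] [0]).trans ((evRW Rb2 [1,0,1] [0]).trans ((evRW Rb1 [1] [1,2,0]).trans ((evRW Rs1 [] [2,0,1,1,2,0]).trans (evRW Rs1 [2,0] [2,0]))))))
lemma t_1_46 : ev [1,0,1,0,1,2,1] = ev [0,1,2,1,2] := ((evRW Rs0.symm [1,0,1,0,1,2] [1]).trans ((evRW Rb1 [1,0,1] [0,1]).trans ((evRW Rb2 [1,0,1] [0,1]).trans ((evRW Rb1 [1] [1,2,0,1]).trans ((evRW Rs1 [] [2,0,1,1,2,0,1]).trans ((evRW Rb2 [2,0,1] []).trans ((evRW Rb1 [2] [1,2]).trans ((evRW Rb2 [2] [1,2]).trans (evRW Rs2 [] [0,1,2,1,2])))))))))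
lemma t_1_23 : ev [1,0,1,0,2] = ev [0,2,1,2,1] := ((evRW Rs0.symm [] [1,0,1,0,2]).trans ((evRW Rs2.symm [0] [0,1,0,1,0,2]).trans ((evRW Rs1.symm [0,2] [2,0,1,0,1,0,2]).trans ((evRW Rb2 [0,2,1] [0,1,0,2]).trans ((evRW Rb1 [0,2,1,2] [1,0,2]).trans ((evRW Rs1 [0,2,1,2,1,2,0] [0,2]).trans ((evRW Rs0 [0,2,1,2,1,2] [2]).trans (evRW Rs2 [0,2,1,2,1] []))))))))
lemma t_1_38 : ev [1,0,1,0,2,0] = ev [0,1,0,2,0,2] := ((evRW Rs0.symm [] [1,0,1,0,2,0]).trans ((evRW Rs1.symm [0] [0,1,0,1,0,2,0]).trans ((evRW Rs2.symm [0,1,1] [0,1,0,1,0,2,0]).trans ((evRW Rs1.symm [0,1,1,2] [2,0,1,0,1,0,2,0]).trans ((evRW Rb2 [0,1,1,2,1] [0,1,0,2,0]).trans ((evRW Rb1 [0,1,1,2,1,2] [1,0,2,0]).trans ((evRW Rs1 [0,1,1,2,1,2,1,2,0] [0,2,0]).trans ((evRW Rs0 [0,1,1,2,1,2,1,2] [2,0]).trans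 ((evRW Rs0.symm [0,1] [1,2,1,2,1,2,2,0]).trans ((evRW Rs0.symm [0,1,0,0,1,2] [1,2,1,2,2,0]).trans ((evRW Rs2 [0,1,0,0,1,2,0,0,1,2,1] [0]).trans ((evRW Rb1 [0,1,0] [0,1,2,1,0]).trans ((evRW Rb2 [0,1,0] [0,1,2,1,0]).trans ((evRW Rb2 [0,1,0,2,0] [2,1,0]).trans ((evRW Rs2 [0,1,0,2,0,2,0,1] [1,0]).trans ((evRW Rs1 [0,1,0,2,0,2,0] [0]).trans (evRW Rs0 [0,1,0,2,0,2] [])))))))))))))))))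
lemma t_1_47 : ev [1,0,1,0,2,0,2] = ev [0,1,0,2,0] := ((evRW Rs0.symm [] [1,0,1,0,2,0,2]).trans ((evRW Rs2.symm [0] [0,1,0,1,0,2,0,2]).trans ((evRW Rs1.symm [0,2] [2,0,1,0,1,0,2,0,2]).trans ((evRW Rb2 [0,2,1] [0,1,0,2,0,2]).trans ((evRW Rb1 [0,2,1,2] [1,0,2,0,2]).trans ((evRW Rs1 [0,2,1,2,1,2,0] [0,2,0,2]).trans ((evRW Rs0 [0,2,1,2,1,2] [2,0,2]).trans ((evRW Rs0.symm [0,2] [1,2,1,2,2,0,2]).trans ((evRW Rs1.symm [0] [2,0,0,1,2,1,2,2,0,2]).trans ((evRW Rs2 [0,1,1,2,0,0,1,2,1] [0,2]).trans ((evRW Rs0.symm [0,1] [1,2,0,0,1,2,1,0,2]).trans ((evRW Rb1 [0,1,0] [0,1,2,1,0,2]).trans ((evRW Rb2 [0,1,0] [0,1,2,1,0,2]).trans ((evRW Rb2 [0,1,0,2,0] [2,1,0,2]).trans ((evRW Rs2 [0,1,0,2,0,2,0,1] [1,0,2]).trans ((evRW Rs1 [0,1,0,2,0,2,0] [0,2]).trans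 ((evRW Rs0 [0,1,0,2,0,2] [2]).trans (evRW Rs2 [0,1,0,2,0] []))))))))))))))))))
lemma t_1_11 : ev [1,0,1,2] = ev [1,0,1,2] := rfl
lemma t_1_24 : ev [1,0,1,2,0] = ev [2,0,1] := ((evRW Rb1 [1] []).trans (evRW Rs1 [] [2,0,1]))
lemma t_1_25 : ev [1,0,1,2,1] = ev [1,0,1,2,1] := rfl
lemma t_1_39 : ev [1,0,1,2,1,2] = ev [0,1,0,1,2,1] := ((evRW Rs0.symm [1,0,1,2] [1,2]).trans ((evRW Rb1 [1] [0,1,2]).trans ((evRW Rb2 [1] [0,1,2]).trans ((evRW Rb1.symm [] [2,0,1,2]).trans ((evRW Rb2.symm [0,1,2,0] []).trans ((evRW Rb1 [0,1,2] [1]).trans ((evRW Rb2 [0,1,2] [1]).trans (evRW Rs2 [0,1] [0,1,2,1]))))))))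
lemma t_1_5 : ev [1,0,2] = ev [1,0,2] := rfl
lemma t_1_12 : ev [1,0,2,0] = ev [1,0,2,0] := rfl
lemma t_1_26 : ev [1,0,2,0,1] = ev [2,0,2] := ((evRW Rs1.symm [1,0] [2,0,1]).trans ((evRW Rb2 [1,0,1] []).trans ((evRW Rb1 [1] [1,2]).trans ((evRW Rs1 [] [2,0,1,1,2]).trans (evRW Rs1 [2,0] [2])))))
lemma t_1_27 : ev [1,0,2,0,2] = ev [1,0,2,0,2] := rfl
lemma t_1_40 : ev [1,0,2,0,2,0] = ev [2,1,2,1] := ((evRW Rs1.symm [1,0,2,0] [2,0]).trans ((evRW Rs1.symm [1,0,2,0,1,1,2,0] []).trans ((evRW Rb2 [1,0,2,0,1] [1]).trans ((evRW Rb1 [1,0,2] [1,2,1]).trans ((evRW Rb2 [1,0,2] [1,2,1]).trans ((evRW Rs2 [1,0] [0,1,2,1,2,1]).trans ((evRW Rs0 [1] [1,2,1,2,1]).trans (evRW Rs1 [] [2,1,2,1]))))))))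
lemma t_1_13 : ev [1,0,2,1] = ev [0,2,1,0] := ((evRW Rs0.symm [] [1,0,2,1]).trans ((evRW Rs2.symm [0] [0,1,0,2,1]).trans ((evRW Rs1.symm [0,2] [2,0,1,0,2,1]).trans ((evRW Rb1.symm [0,2,1] [0,2,1]).trans ((evRW Rs0 [0,2,1,0,1,2] [2,1]).trans ((evRW Rs2 [0,2,1,0,1] [1]).trans (evRW Rs1 [0,2,1,0] [])))))))
lemma t_1_28 : ev [1,0,2,1,0] = ev [0,2,1] := ((evRW Rs0.symm [] [1,0,2,1,0]).trans ((evRW Rs2.symm [0] [0,1,0,2,1,0]).trans ((evRW Rs1.symm [0,2] [2,0,1,0,2,1,0]).trans ((evRW Rb1.symm [0,2,1] [0,2,1,0]).trans ((evRW Rs0 [0,2,1,0,1,2] [2,1,0]).trans ((evRW Rs2 [0,2,1,0,1] [1,0]).trans ((evRW Rs1 [0,2,1,0] [0]).trans (evRW Rs0 [0,2,1] []))))))))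
lemma t_1_29 : ev [1,0,2,1,2] = ev [2,1,0] := ((evRW Rs0.symm [1,0,2,1,2] []).trans ((evRW Rs1.symm [1,0,2,1,2,0] [0]).trans ((evRW Rb2 [1,0,2] [1,0]).trans ((evRW Rs2 [1,0] [0,1,2,1,0]).trans ((evRW Rs0 [1] [1,2,1,0]).trans (evRW Rs1 [] [2,1,0]))))))
lemma t_1_41 : ev [1,0,2,1,2,1] = ev [0,1,0,2] := ((evRW Rs0.symm [1,0,2,1,2] [1]).trans ((evRW Rs2.symm [1,0,2,1,2,0,0,1] []).trans ((evRW Rs0.symm [1,0,2,1,2,0,0,1,2] [2]).trans ((evRW Rb1 [1,0,2,1,2,0] [0,2]).trans ((evRW Rb2 [1,0,2] [2,0,1,0,2]).trans ((evRW Rs2 [1,0] [0,1,2,2,0,1,0,2]).trans ((evRW Rs0 [1] [1,2,2,0,1,0,2]).trans ((evRW Rs1 [] [2,2,0,1,0,2]).trans (evRW Rs2 [] [0,1,0,2])))))))))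
lemma t_1_2 : ev [1,1] = ev [] := (evRW Rs1 [] [])
lemma t_1_6 : ev [1,1,0] = ev [0] := (evRW Rs1 [] [0])
lemma t_1_14 : ev [1,1,0,1] = ev [0,1] := (evRW Rs1 [] [0,1])
lemma t_1_30 : ev [1,1,0,1,0] = ev [0,1,0] := (evRW Rs1 [] [0,1,0])
lemma t_1_42 : ev [1,1,0,1,0,1] = ev [0,1,0,1] := (evRW Rs1 [] [0,1,0,1])
lemma t_1_31 : ev [1,1,0,1,2] = ev [0,1,2] := (evRW Rs1 [] [0,1,2])
lemma t_1_43 : ev [1,1,0,1,2,1] = ev [0,1,2,1] := (evRW Rs1 [] [0,1,2,1])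
lemma t_1_15 : ev [1,1,0,2] = ev [0,2] := (evRW Rs1 [] [0,2])
lemma t_1_32 : ev [1,1,0,2,0] = ev [0,2,0] := (evRW Rs1 [] [0,2,0])
lemma t_1_44 : ev [1,1,0,2,0,2] = ev [0,2,0,2] := (evRW Rs1 [] [0,2,0,2])
lemma t_1_7 : ev [1,1,2] = ev [2] := (evRW Rs1 [] [2])
lemma t_1_16 : ev [1,1,2,0] = ev [2,0] := (evRW Rs1 [] [2,0])
lemma t_1_17 : ev [1,1,2,1] = ev [2,1] := (evRW Rs1 [] [2,1])
lemma t_1_33 : ev [1,1,2,1,2] = ev [2,1,2] := (evRW Rs1 [] [2,1,2])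
lemma t_1_3 : ev [1,2] = ev [1,2] := rfl
lemma t_1_8 : ev [1,2,0] = ev [1,2,0] := rfl
lemma t_1_18 : ev [1,2,0,1] = ev [0,1,2,0] := (evRW Rb1.symm [] [])
lemma t_1_19 : ev [1,2,0,2] = ev [0,2,0,1] := ((evRW Rs0.symm [] [1,2,0,2]).trans ((evRW Rb1 [0] [2]).trans ((evRW Rb2 [0] [2]).trans (evRW Rs2 [0,2,0,1] []))))
lemma t_1_34 : ev [1,2,0,2,0] = ev [0,1,0,1,2] := ((evRW Rs0.symm [] [1,2,0,2,0]).trans ((evRW Rb1 [0] [2,0]).trans ((evRW Rb1 [0,1,2] []).trans ((evRW Rb2 [0,1,2] []).trans (evRW Rs2 [0,1] [0,1,2])))))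
lemma t_1_9 : ev [1,2,1] = ev [1,2,1] := rfl
lemma t_1_20 : ev [1,2,1,0] = ev [0,2,1,2] := ((evRW Rs0.symm [] [1,2,1,0]).trans ((evRW Rs2.symm [0] [0,1,2,1,0]).trans ((evRW Rb2.symm [0,2] [1,0]).trans ((evRW Rs1 [0,2,1,2,0] [0]).trans (evRW Rs0 [0,2,1,2] [])))))
lemma t_1_21 : ev [1,2,1,2] = ev [1,2,1,2] := rfl
lemma t_1_35 : ev [1,2,1,2,1] = ev [0,2,0,2,0] := ((evRW Rs0.symm [] [1,2,1,2,1]).trans ((evRW Rs0.symm [0,0,1,2] [1,2,1]).trans ((evRW Rb1 [0] [0,1,2,1]).trans ((evRW Rb2 [0] [0,1,2,1]).trans ((evRW Rb2 [0,2,0] [2,1]).trans ((evRW Rs2 [0,2,0,2,0,1] [1]).trans (evRW Rs1 [0,2,0,2,0] [])))))))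
lemma t_2_0 : ev [2] = ev [2] := rfl
lemma t_2_1 : ev [2,0] = ev [2,0] := rfl
lemma t_2_4 : ev [2,0,1] = ev [2,0,1] := rfl
lemma t_2_10 : ev [2,0,1,0] = ev [1,0,1,2] := ((evRW Rs1.symm [] [2,0,1,0]).trans ((evRW Rb1.symm [1] [0]).trans (evRW Rs0 [1,0,1,2] [])))
lemma t_2_22 : ev [2,0,1,0,1] = ev [1,0,1,2,1] := ((evRW Rs1.symm [] [2,0,1,0,1]).trans ((evRW Rb1.symm [1] [0,1]).trans (evRW Rs0 [1,0,1,2] [1])))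
lemma t_2_36 : ev [2,0,1,0,1,0] = ev [1,2,1,2] := ((evRW Rs1.symm [] [2,0,1,0,1,0]).trans ((evRW Rb2 [1] [0,1,0]).trans ((evRW Rb1 [1,2] [1,0]).trans ((evRW Rs1 [1,2,1,2,0] [0]).trans (evRW Rs0 [1,2,1,2] [])))))
lemma t_2_45 : ev [2,0,1,0,1,0,1] = ev [0,2,0,2,0] := ((evRW Rs0.symm [] [2,0,1,0,1,0,1]).trans ((evRW Rs1.symm [0,0] [2,0,1,0,1,0,1]).trans ((evRW Rb2 [0,0,1] [0,1,0,1]).trans ((evRW Rb1 [0] [1,2,0,1,0,1]).trans ((evRW Rb1.symm [0,1,2,0,1] [0,1]).trans ((evRW Rs0 [0,1,2,0,1,0,1,2] [1]).trans ((evRW Rb2 [0] [0,1,2,1]).trans ((evRW Rb2 [0,2,0] [2,1]).trans ((evRW Rs2 [0,2,0,2,0,1] [1]).trans (evRW Rs1 [0,2,0,2,0] []))))))))))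
lemma t_2_37 : ev [2,0,1,0,1,2] = ev [0,1,0,1,2,1] := ((evRW Rs1.symm [] [2,0,1,0,1,2]).trans ((evRW Rb2 [1] [0,1,2]).trans ((evRW Rb1.symm [] [2,0,1,2]).trans ((evRW Rb2.symm [0,1,2,0] []).trans ((evRW Rb1 [0,1,2] [1]).trans ((evRW Rb2 [0,1,2] [1]).trans (evRW Rs2 [0,1] [0,1,2,1])))))))
lemma t_2_46 : ev [2,0,1,0,1,2,1] = ev [0,1,0,1,2] := ((evRW Rs0.symm [2,0,1,0,1,2] [1]).trans ((evRW Rb1 [2,0,1] [0,1]).trans ((evRW Rb2 [2,0,1] [0,1]).trans ((evRW Rb1 [2] [1,2,0,1]).trans ((evRW Rb2 [2] [1,2,0,1]).trans ((evRW Rs2 [] [0,1,2,1,2,0,1]).trans ((evRW Rb2 [0,1,2] []).trans (evRW Rs2 [0,1] [0,1,2]))))))))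
lemma t_2_23 : ev [2,0,1,0,2] = ev [1,0,1] := ((evRW Rs1.symm [] [2,0,1,0,2]).trans ((evRW Rb1.symm [1] [0,2]).trans ((evRW Rs0 [1,0,1,2] [2]).trans (evRW Rs2 [1,0,1] []))))
lemma t_2_38 : ev [2,0,1,0,2,0] = ev [1,0,1,0] := ((evRW Rs1.symm [] [2,0,1,0,2,0]).trans ((evRW Rb1.symm [1] [0,2,0]).trans ((evRW Rs0 [1,0,1,2] [2,0]).trans (evRW Rs2 [1,0,1] [0]))))
lemma t_2_47 : ev [2,0,1,0,2,0,2] = ev [0,2,1,2,1] := ((evRW Rs0.symm [] [2,0,1,0,2,0,2]).trans ((evRW Rs1.symm [0,0] [2,0,1,0,2,0,2]).trans ((evRW Rs2.symm [0] [0,1,1,2,0,1,0,2,0,2]).trans ((evRW Rb1.symm [0,2,2,0,1] [0,2,0,2]).trans ((evRW Rs0 [0,2,2,0,1,0,1,2] [2,0,2]).trans ((evRW Rs1.symm [0,2] [2,0,1,0,1,2,2,0,2]).trans ((evRW Rs2 [0,2,1,1,2,0,1,0,1] [0,2]).trans ((evRW Rb2 [0,2,1] [0,1,0,2]).trans ((evRW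 Rb1 [0,2,1,2] [1,0,2]).trans ((evRW Rs1 [0,2,1,2,1,2,0] [0,2]).trans ((evRW Rs0 [0,2,1,2,1,2] [2]).trans (evRW Rs2 [0,2,1,2,1] []))))))))))))
lemma t_2_11 : ev [2,0,1,2] = ev [0,1,2,0] := ((evRW Rb2.symm [] []).trans (evRW Rb1.symm [] []))
lemma t_2_24 : ev [2,0,1,2,0] = ev [0,1,2] := ((evRW Rb1 [2] []).trans ((evRW Rb2 [2] []).trans (evRW Rs2 [] [0,1,2])))
lemma t_2_25 : ev [2,0,1,2,1] = ev [1,2,0] := ((evRW Rb2.symm [] [1]).trans (evRW Rs1 [1,2,0] []))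
lemma t_2_39 : ev [2,0,1,2,1,2] = ev [0,2,0,1] := ((evRW Rb2.symm [] [1,2]).trans ((evRW Rb1.symm [] [1,2]).trans ((evRW Rb2 [0] [2]).trans (evRW Rs2 [0,2,0,1] []))))
lemma t_2_5 : ev [2,0,2] = ev [2,0,2] := rfl
lemma t_2_12 : ev [2,0,2,0] = ev [2,0,2,0] := rfl
lemma t_2_26 : ev [2,0,2,0,1] = ev [0,1,2,1,2] := ((evRW Rs1.symm [2,0] [2,0,1]).trans ((evRW Rb2 [2,0,1] []).trans ((evRW Rb1 [2] [1,2]).trans ((evRW Rb2 [2] [1,2]).trans (evRW Rs2 [] [0,1,2,1,2])))))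
lemma t_2_27 : ev [2,0,2,0,2] = ev [1,0,1,0,1] := ((evRW Rs1.symm [] [2,0,2,0,2]).trans ((evRW Rs0.symm [1] [1,2,0,2,0,2]).trans ((evRW Rb1 [1,0] [2,0,2]).trans ((evRW Rb1 [1,0,1,2] [2]).trans ((evRW Rb2 [1,0,1,2] [2]).trans ((evRW Rs2 [1,0,1] [0,1,2,2]).trans (evRW Rs2 [1,0,1,0,1] [])))))))
lemma t_2_40 : ev [2,0,2,0,2,0] = ev [0,1,0,1,0,1] := ((evRW Rs1.symm [2,0] [2,0,2,0]).trans ((evRW Rs1.symm [2,0,1,1,2,0] [2,0]).trans ((evRW Rs0.symm [2,0,1,1,2,0,1] [1,2,0]).trans ((evRW Rb1 [2,0,1,1,2,0,1,0] []).trans ((evRW Rb2 [2,0,1] [0,1,2,0,1]).trans ((evRW Rb1 [2] [1,2,0,1,2,0,1]).trans ((evRW Rs1 [2,1,2,0] [2,0,1,2,0,1]).trans ((evRW Rb2.symm [2,1,2,0] [0,1]).trans ((evRW Rb2 [2] [2,0,1,0,1]).trans ((evRW Rs2 [] [0,1,2,2,0,1,0,1]).trans (evRW Rs2 [0,1] 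[0,1,0,1])))))))))))
lemma t_2_13 : ev [2,0,2,1] = ev [1,0,2,0] := ((evRW Rs1.symm [] [2,0,2,1]).trans ((evRW Rs0.symm [1] [1,2,0,2,1]).trans ((evRW Rb1 [1,0] [2,1]).trans ((evRW Rb2 [1,0] [2,1]).trans ((evRW Rs2 [1,0,2,0,1] [1]).trans (evRW Rs1 [1,0,2,0] []))))))
lemma t_2_28 : ev [2,0,2,1,0] = ev [1,0,2] := ((evRW Rs1.symm [] [2,0,2,1,0]).trans ((evRW Rs0.symm [1] [1,2,0,2,1,0]).trans ((evRW Rb1 [1,0] [2,1,0]).trans ((evRW Rb2 [1,0] [2,1,0]).trans ((evRW Rs2 [1,0,2,0,1] [1,0]).trans ((evRW Rs1 [1,0,2,0] [0]).trans (evRW Rs0 [1,0,2] [])))))))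
lemma t_2_29 : ev [2,0,2,1,2] = ev [1,0,2,0,2] := ((evRW Rs1.symm [] [2,0,2,1,2]).trans ((evRW Rs0.symm [1] [1,2,0,2,1,2]).trans ((evRW Rb1 [1,0] [2,1,2]).trans ((evRW Rb2 [1,0] [2,1,2]).trans ((evRW Rs2 [1,0,2,0,1] [1,2]).trans (evRW Rs1 [1,0,2,0] [2]))))))
lemma t_2_41 : ev [2,0,2,1,2,1] = ev [0,1,0,2,0,2] := ((evRW Rs0.symm [2,0,2,1,2] [1]).trans ((evRW Rs1.symm [2,0,2,1,2,0] [0,1]).trans ((evRW Rs2.symm [2,0,2,1,2,0,1,1] [0,1]).trans ((evRW Rs1.symm [2,0,2,1,2,0,1,1,2] [2,0,1]).trans ((evRW Rb2 [2,0,2] [1,2,1,1,2,0,1]).trans ((evRW Rs2 [2,0] [0,1,2,1,2,1,1,2,0,1]).trans ((evRW Rs0 [2] [1,2,1,2,1,1,2,0,1]).trans ((evRW Rb2 [2,1,2,1,2,1] []).trans ((evRW Rb1.symm [2,1,2,1,2] [2]).trans ((evRW Rb1.symm [2,1,2] [2,0,2]).trans ((evRW Rb2 [2] [2,0,2,0,2]).trans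 ((evRW Rs2 [] [0,1,2,2,0,2,0,2]).trans (evRW Rs2 [0,1] [0,2,0,2])))))))))))))
lemma t_2_2 : ev [2,1] = ev [2,1] := rfl
lemma t_2_6 : ev [2,1,0] = ev [2,1,0] := rfl
lemma t_2_14 : ev [2,1,0,1] = ev [0,1,0,2] := ((evRW Rs2.symm [2,1,0,1] []).trans ((evRW Rs0.symm [2,1,0,1,2] [2]).trans ((evRW Rb1 [2,1] [0,2]).trans ((evRW Rs1 [2] [2,0,1,0,2]).trans (evRW Rs2 [] [0,1,0,2])))))
lemma t_2_30 : ev [2,1,0,1,0] = ev [0,1,0,2,0] := ((evRW Rs2.symm [2,1,0,1] [0]).trans ((evRW Rs0.symm [2,1,0,1,2] [2,0]).trans ((evRW Rb1 [2,1] [0,2,0]).trans ((evRW Rs1 [2] [2,0,1,0,2,0]).trans (evRW Rs2 [] [0,1,0,2,0])))))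
lemma t_2_42 : ev [2,1,0,1,0,1] = ev [0,2,0,2] := ((evRW Rs2.symm [2,1,0,1] [0,1]).trans ((evRW Rs1.symm [2,1,0,1,2] [2,0,1]).trans ((evRW Rb2 [2,1,0,1,2,1] []).trans ((evRW Rb1.symm [2,1,0,1,2] [2]).trans ((evRW Rb1 [2,1] [1,2,0,2]).trans ((evRW Rs1 [2] [2,0,1,1,2,0,2]).trans ((evRW Rs1 [2,2,0] [2,0,2]).trans (evRW Rs2 [] [0,2,0,2]))))))))
lemma t_2_31 : ev [2,1,0,1,2] = ev [0,1,0] := ((evRW Rs0.symm [2,1,0,1,2] []).trans ((evRW Rb1 [2,1] [0]).trans ((evRW Rs1 [2] [2,0,1,0]).trans (evRW Rs2 [] [0,1,0]))))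
lemma t_2_43 : ev [2,1,0,1,2,1] = ev [0,1,0,1] := ((evRW Rs0.symm [2,1,0,1,2] [1]).trans ((evRW Rb1 [2,1] [0,1]).trans ((evRW Rs1 [2] [2,0,1,0,1]).trans (evRW Rs2 [] [0,1,0,1]))))
lemma t_2_15 : ev [2,1,0,2] = ev [0,2,1,0] := ((evRW Rs0.symm [2,1,0,2] []).trans ((evRW Rs1.symm [2,1,0] [2,0,0]).trans ((evRW Rs1.symm [2,1,0,1,1,2,0] [0]).trans ((evRW Rb2 [2,1,0,1] [1,0]).trans ((evRW Rb1 [2,1] [1,2,1,0]).trans ((evRW Rs1 [2] [2,0,1,1,2,1,0]).trans ((evRW Rs1 [2,2,0] [2,1,0]).trans (evRW Rs2 [] [0,2,1,0]))))))))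
lemma t_2_32 : ev [2,1,0,2,0] = ev [0,2,1] := ((evRW Rs1.symm [2,1,0] [2,0]).trans ((evRW Rs1.symm [2,1,0,1,1,2,0] []).trans ((evRW Rb2 [2,1,0,1] [1]).trans ((evRW Rb1 [2,1] [1,2,1]).trans ((evRW Rs1 [2] [2,0,1,1,2,1]).trans ((evRW Rs1 [2,2,0] [2,1]).trans (evRW Rs2 [] [0,2,1])))))))
lemma t_2_44 : ev [2,1,0,2,0,2] = ev [0,2,1,2] := ((evRW Rs1.symm [2,1,0] [2,0,2]).trans ((evRW Rs1.symm [2,1,0,1,1,2,0] [2]).trans ((evRW Rb2 [2,1,0,1] [1,2]).trans ((evRW Rb1 [2,1] [1,2,1,2]).trans ((evRW Rs1 [2] [2,0,1,1,2,1,2]).trans ((evRW Rs1 [2,2,0] [2,1,2]).trans (evRW Rs2 [] [0,2,1,2])))))))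
lemma t_2_7 : ev [2,1,2] = ev [2,1,2] := rfl
lemma t_2_16 : ev [2,1,2,0] = ev [0,1,2,1] := ((evRW Rs1.symm [2,1,2,0] []).trans ((evRW Rb2 [2] [1]).trans (evRW Rs2 [] [0,1,2,1])))
lemma t_2_17 : ev [2,1,2,1] = ev [2,1,2,1] := rfl
lemma t_2_33 : ev [2,1,2,1,2] = ev [0,1,0,1,0] := ((evRW Rs0.symm [2,1,2] [1,2]).trans ((evRW Rs0.symm [2,1,2,0,0,1,2] []).trans ((evRW Rb1 [2,1,2,0] [0]).trans ((evRW Rb2 [2] [2,0,1,0]).trans ((evRW Rs2 [] [0,1,2,2,0,1,0]).trans (evRW Rs2 [0,1] [0,1,0]))))))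
lemma t_2_3 : ev [2,2] = ev [] := (evRW Rs2 [] [])
lemma t_2_8 : ev [2,2,0] = ev [0] := (evRW Rs2 [] [0])
lemma t_2_18 : ev [2,2,0,1] = ev [0,1] := (evRW Rs2 [] [0,1])
lemma t_2_19 : ev [2,2,0,2] = ev [0,2] := (evRW Rs2 [] [0,2])
lemma t_2_34 : ev [2,2,0,2,0] = ev [0,2,0] := (evRW Rs2 [] [0,2,0])
lemma t_2_9 : ev [2,2,1] = ev [1] := (evRW Rs2 [] [1])
lemma t_2_20 : ev [2,2,1,0] = ev [1,0] := (evRW Rs2 [] [1,0])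
lemma t_2_21 : ev [2,2,1,2] = ev [1,2] := (evRW Rs2 [] [1,2])
lemma t_2_35 : ev [2,2,1,2,1] = ev [1,2,1] := (evRW Rs2 [] [1,2,1])
def NW : Fin 48 → List (Fin 3) := ![[], [0], [1], [2], [0,1], [0,2], [1,0], [1,2], [2,0], [2,1], [0,1,0], [0,1,2], [0,2,0], [0,2,1], [1,0,1], [1,0,2], [1,2,0], [1,2,1], [2,0,1], [2,0,2], [2,1,0], [2,1,2], [0,1,0,1], [0,1,0,2], [0,1,2,0], [0,1,2,1], [0,2,0,1], [0,2,0,2], [0,2,1,0], [0,2,1,2], [1,0,1,0], [1,0,1,2], [1,0,2,0], [1,2,1,2], [2,0,2,0], [2,1,2,1], [0,1,0,1,0], [0,1,0,1,2], [0,1,0,2,0], [0,1,2,1,2], [0,2,0,2,0], [0,2,1,2,1], [1,0,1,0,1], [1,0,1,2,1], [1,0,2,0,2], [0,1,0,1,0,1], [0,1,0,1,2,1], [0,1,0,2,0,2]]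
lemma tab (i : Fin 3) (k : Fin 48) : ∃ k' : Fin 48, xg i * ev (NW k) = ev (NW k') := by
  fin_cases i <;> fin_cases k
  · exact ⟨1, (ev_cons _ _).trans t_0_0⟩
  · exact ⟨0, (ev_cons _ _).trans t_0_1⟩
  · exact ⟨4, (ev_cons _ _).trans t_0_2⟩
  · exact ⟨5, (ev_cons _ _).trans t_0_3⟩
  · exact ⟨2, (ev_cons _ _).trans t_0_4⟩
  · exact ⟨3, (ev_cons _ _).trans t_0_5⟩
  · exact ⟨10, (ev_cons _ _).trans t_0_6⟩
  · exact ⟨11, (ev_cons _ _).trans t_0_7⟩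
  · exact ⟨12, (ev_cons _ _).trans t_0_8⟩
  · exact ⟨13, (ev_cons _ _).trans t_0_9⟩
  · exact ⟨6, (ev_cons _ _).trans t_0_10⟩
  · exact ⟨7, (ev_cons _ _).trans t_0_11⟩
  · exact ⟨8, (ev_cons _ _).trans t_0_12⟩
  · exact ⟨9, (ev_cons _ _).trans t_0_13⟩
  · exact ⟨22, (ev_cons _ _).trans t_0_14⟩
  · exact ⟨23, (ev_cons _ _).trans t_0_15⟩
  · exact ⟨24, (ev_cons _ _).trans t_0_16⟩
  · exact ⟨25, (ev_cons _ _).trans t_0_17⟩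
  · exact ⟨26, (ev_cons _ _).trans t_0_18⟩
  · exact ⟨27, (ev_cons _ _).trans t_0_19⟩
  · exact ⟨28, (ev_cons _ _).trans t_0_20⟩
  · exact ⟨29, (ev_cons _ _).trans t_0_21⟩
  · exact ⟨14, (ev_cons _ _).trans t_0_22⟩
  · exact ⟨15, (ev_cons _ _).trans t_0_23⟩
  · exact ⟨16, (ev_cons _ _).trans t_0_24⟩
  · exact ⟨17, (ev_cons _ _).trans t_0_25⟩
  · exact ⟨18, (ev_cons _ _).trans t_0_26⟩
  · exact ⟨19, (ev_cons _ _).trans t_0_27⟩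
  · exact ⟨20, (ev_cons _ _).trans t_0_28⟩
  · exact ⟨21, (ev_cons _ _).trans t_0_29⟩
  · exact ⟨36, (ev_cons _ _).trans t_0_30⟩
  · exact ⟨37, (ev_cons _ _).trans t_0_31⟩
  · exact ⟨38, (ev_cons _ _).trans t_0_32⟩
  · exact ⟨39, (ev_cons _ _).trans t_0_33⟩
  · exact ⟨40, (ev_cons _ _).trans t_0_34⟩
  · exact ⟨41, (ev_cons _ _).trans t_0_35⟩
  · exact ⟨30, (ev_cons _ _).trans t_0_36⟩
  · exact ⟨31, (ev_cons _ _).trans t_0_37⟩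
  · exact ⟨32, (ev_cons _ _).trans t_0_38⟩
  · exact ⟨33, (ev_cons _ _).trans t_0_39⟩
  · exact ⟨34, (ev_cons _ _).trans t_0_40⟩
  · exact ⟨35, (ev_cons _ _).trans t_0_41⟩
  · exact ⟨45, (ev_cons _ _).trans t_0_42⟩
  · exact ⟨46, (ev_cons _ _).trans t_0_43⟩
  · exact ⟨47, (ev_cons _ _).trans t_0_44⟩
  · exact ⟨42, (ev_cons _ _).trans t_0_45⟩
  · exact ⟨43, (ev_cons _ _).trans t_0_46⟩
  · exact ⟨44, (ev_cons _ _).trans t_0_47⟩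
  · exact ⟨2, (ev_cons _ _).trans t_1_0⟩
  · exact ⟨6, (ev_cons _ _).trans t_1_1⟩
  · exact ⟨0, (ev_cons _ _).trans t_1_2⟩
  · exact ⟨7, (ev_cons _ _).trans t_1_3⟩
  · exact ⟨14, (ev_cons _ _).trans t_1_4⟩
  · exact ⟨15, (ev_cons _ _).trans t_1_5⟩
  · exact ⟨1, (ev_cons _ _).trans t_1_6⟩
  · exact ⟨3, (ev_cons _ _).trans t_1_7⟩
  · exact ⟨16, (ev_cons _ _).trans t_1_8⟩
  · exact ⟨17, (ev_cons _ _).trans t_1_9⟩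
  · exact ⟨30, (ev_cons _ _).trans t_1_10⟩
  · exact ⟨31, (ev_cons _ _).trans t_1_11⟩
  · exact ⟨32, (ev_cons _ _).trans t_1_12⟩
  · exact ⟨28, (ev_cons _ _).trans t_1_13⟩
  · exact ⟨4, (ev_cons _ _).trans t_1_14⟩
  · exact ⟨5, (ev_cons _ _).trans t_1_15⟩
  · exact ⟨8, (ev_cons _ _).trans t_1_16⟩
  · exact ⟨9, (ev_cons _ _).trans t_1_17⟩
  · exact ⟨24, (ev_cons _ _).trans t_1_18⟩
  · exact ⟨26, (ev_cons _ _).trans t_1_19⟩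
  · exact ⟨29, (ev_cons _ _).trans t_1_20⟩
  · exact ⟨33, (ev_cons _ _).trans t_1_21⟩
  · exact ⟨42, (ev_cons _ _).trans t_1_22⟩
  · exact ⟨41, (ev_cons _ _).trans t_1_23⟩
  · exact ⟨18, (ev_cons _ _).trans t_1_24⟩
  · exact ⟨43, (ev_cons _ _).trans t_1_25⟩
  · exact ⟨19, (ev_cons _ _).trans t_1_26⟩
  · exact ⟨44, (ev_cons _ _).trans t_1_27⟩
  · exact ⟨13, (ev_cons _ _).trans t_1_28⟩
  · exact ⟨20, (ev_cons _ _).trans t_1_29⟩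
  · exact ⟨10, (ev_cons _ _).trans t_1_30⟩
  · exact ⟨11, (ev_cons _ _).trans t_1_31⟩
  · exact ⟨12, (ev_cons _ _).trans t_1_32⟩
  · exact ⟨21, (ev_cons _ _).trans t_1_33⟩
  · exact ⟨37, (ev_cons _ _).trans t_1_34⟩
  · exact ⟨40, (ev_cons _ _).trans t_1_35⟩
  · exact ⟨45, (ev_cons _ _).trans t_1_36⟩
  · exact ⟨34, (ev_cons _ _).trans t_1_37⟩
  · exact ⟨47, (ev_cons _ _).trans t_1_38⟩
  · exact ⟨46, (ev_cons _ _).trans t_1_39⟩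
  · exact ⟨35, (ev_cons _ _).trans t_1_40⟩
  · exact ⟨23, (ev_cons _ _).trans t_1_41⟩
  · exact ⟨22, (ev_cons _ _).trans t_1_42⟩
  · exact ⟨25, (ev_cons _ _).trans t_1_43⟩
  · exact ⟨27, (ev_cons _ _).trans t_1_44⟩
  · exact ⟨36, (ev_cons _ _).trans t_1_45⟩
  · exact ⟨39, (ev_cons _ _).trans t_1_46⟩
  · exact ⟨38, (ev_cons _ _).trans t_1_47⟩
  · exact ⟨3, (ev_cons _ _).trans t_2_0⟩
  · exact ⟨8, (ev_cons _ _).trans t_2_1⟩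
  · exact ⟨9, (ev_cons _ _).trans t_2_2⟩
  · exact ⟨0, (ev_cons _ _).trans t_2_3⟩
  · exact ⟨18, (ev_cons _ _).trans t_2_4⟩
  · exact ⟨19, (ev_cons _ _).trans t_2_5⟩
  · exact ⟨20, (ev_cons _ _).trans t_2_6⟩
  · exact ⟨21, (ev_cons _ _).trans t_2_7⟩
  · exact ⟨1, (ev_cons _ _).trans t_2_8⟩
  · exact ⟨2, (ev_cons _ _).trans t_2_9⟩
  · exact ⟨31, (ev_cons _ _).trans t_2_10⟩
  · exact ⟨24, (ev_cons _ _).trans t_2_11⟩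
  · exact ⟨34, (ev_cons _ _).trans t_2_12⟩
  · exact ⟨32, (ev_cons _ _).trans t_2_13⟩
  · exact ⟨23, (ev_cons _ _).trans t_2_14⟩
  · exact ⟨28, (ev_cons _ _).trans t_2_15⟩
  · exact ⟨25, (ev_cons _ _).trans t_2_16⟩
  · exact ⟨35, (ev_cons _ _).trans t_2_17⟩
  · exact ⟨4, (ev_cons _ _).trans t_2_18⟩
  · exact ⟨5, (ev_cons _ _).trans t_2_19⟩
  · exact ⟨6, (ev_cons _ _).trans t_2_20⟩
  · exact ⟨7, (ev_cons _ _).trans t_2_21⟩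
  · exact ⟨43, (ev_cons _ _).trans t_2_22⟩
  · exact ⟨14, (ev_cons _ _).trans t_2_23⟩
  · exact ⟨11, (ev_cons _ _).trans t_2_24⟩
  · exact ⟨16, (ev_cons _ _).trans t_2_25⟩
  · exact ⟨39, (ev_cons _ _).trans t_2_26⟩
  · exact ⟨42, (ev_cons _ _).trans t_2_27⟩
  · exact ⟨15, (ev_cons _ _).trans t_2_28⟩
  · exact ⟨44, (ev_cons _ _).trans t_2_29⟩
  · exact ⟨38, (ev_cons _ _).trans t_2_30⟩
  · exact ⟨10, (ev_cons _ _).trans t_2_31⟩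
  · exact ⟨13, (ev_cons _ _).trans t_2_32⟩
  · exact ⟨36, (ev_cons _ _).trans t_2_33⟩
  · exact ⟨12, (ev_cons _ _).trans t_2_34⟩
  · exact ⟨17, (ev_cons _ _).trans t_2_35⟩
  · exact ⟨33, (ev_cons _ _).trans t_2_36⟩
  · exact ⟨46, (ev_cons _ _).trans t_2_37⟩
  · exact ⟨30, (ev_cons _ _).trans t_2_38⟩
  · exact ⟨26, (ev_cons _ _).trans t_2_39⟩
  · exact ⟨45, (ev_cons _ _).trans t_2_40⟩
  · exact ⟨47, (ev_cons _ _).trans t_2_41⟩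
  · exact ⟨27, (ev_cons _ _).trans t_2_42⟩
  · exact ⟨22, (ev_cons _ _).trans t_2_43⟩
  · exact ⟨29, (ev_cons _ _).trans t_2_44⟩
  · exact ⟨40, (ev_cons _ _).trans t_2_45⟩
  · exact ⟨37, (ev_cons _ _).trans t_2_46⟩
  · exact ⟨41, (ev_cons _ _).trans t_2_47⟩
lemma cover (p : P12) : ∃ k : Fin 48, ev (NW k) = p := by
  have hp : p ∈ (Subgroup.closure (Set.range xg)).toSubmonoid := by
    rw [show Set.range xg = Set.range (PresentedGroup.of (rels := g12Rels)) from rfl,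
        PresentedGroup.closure_range_of]
    trivial
  rw [Subgroup.closure_toSubmonoid] at hp
  obtain ⟨l, hl, rfl⟩ := Submonoid.exists_list_of_mem_closure hp
  clear hp
  induction l with
  | nil => exact ⟨0, rfl⟩
  | cons g tl ih =>
      obtain ⟨k, hk⟩ := ih (fun y hy => hl y (List.mem_cons_of_mem _ hy))
      have hg : ∃ i, g = xg i := by
        have hh := hl g List.mem_cons_self
        simp only [Set.mem_union, Set.mem_inv, Set.mem_range] at hh
        rcases hh with ⟨i, hi⟩ | ⟨i, hi⟩
        · exact ⟨i, hi.symm⟩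
        · refine ⟨i, ?_⟩
          rw [← inv_inv g, ← hi, inv_eq_of_mul_eq_one_left (xg_sq i)]
      obtain ⟨i, rfl⟩ := hg
      rw [List.prod_cons, ← hk]
      obtain ⟨k', hk'⟩ := tab i k
      exact ⟨k', hk'.symm⟩
def e0 : MZ := !![(⟨1,0⟩ : Zs), (⟨0,0⟩ : Zs); (⟨0,0⟩ : Zs), (⟨1,0⟩ : Zs)]
def e1 : MZ := !![(⟨0,0⟩ : Zs), (⟨1,0⟩ : Zs); (⟨1,0⟩ : Zs), (⟨0,1⟩ : Zs)]
def e2 : MZ := !![(⟨1,1⟩ : Zs), (⟨-1,0⟩ : Zs); (⟨-1,1⟩ : Zs), (⟨0,-1⟩ : Zs)]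
def e3 : MZ := !![(⟨1,0⟩ : Zs), (⟨0,1⟩ : Zs); (⟨0,1⟩ : Zs), (⟨-1,0⟩ : Zs)]
def e4 : MZ := !![(⟨-1,1⟩ : Zs), (⟨0,-1⟩ : Zs); (⟨-1,0⟩ : Zs), (⟨1,0⟩ : Zs)]
def e5 : MZ := !![(⟨-1,0⟩ : Zs), (⟨1,0⟩ : Zs); (⟨0,-1⟩ : Zs), (⟨1,1⟩ : Zs)]
def e6 : MZ := !![(⟨0,1⟩ : Zs), (⟨-1,0⟩ : Zs); (⟨-1,1⟩ : Zs), (⟨-1,-1⟩ : Zs)]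
def e7 : MZ := !![(⟨0,1⟩ : Zs), (⟨-1,0⟩ : Zs); (⟨-1,0⟩ : Zs), (⟨0,0⟩ : Zs)]
def e8 : MZ := !![(⟨-1,0⟩ : Zs), (⟨1,0⟩ : Zs); (⟨-1,0⟩ : Zs), (⟨0,0⟩ : Zs)]
def e9 : MZ := !![(⟨0,-1⟩ : Zs), (⟨1,1⟩ : Zs); (⟨1,0⟩ : Zs), (⟨-1,1⟩ : Zs)]
def e10 : MZ := !![(⟨-1,1⟩ : Zs), (⟨-1,-1⟩ : Zs); (⟨-2,0⟩ : Zs), (⟨1,-1⟩ : Zs)]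
def e11 : MZ := !![(⟨1,0⟩ : Zs), (⟨-1,1⟩ : Zs); (⟨1,1⟩ : Zs), (⟨-2,0⟩ : Zs)]
def e12 : MZ := !![(⟨-2,0⟩ : Zs), (⟨1,-1⟩ : Zs); (⟨-1,-1⟩ : Zs), (⟨2,0⟩ : Zs)]
def e13 : MZ := !![(⟨-1,0⟩ : Zs), (⟨0,0⟩ : Zs); (⟨-1,-1⟩ : Zs), (⟨1,0⟩ : Zs)]
def e14 : MZ := !![(⟨-1,0⟩ : Zs), (⟨0,0⟩ : Zs); (⟨0,0⟩ : Zs), (⟨-1,0⟩ : Zs)]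
def e15 : MZ := !![(⟨1,0⟩ : Zs), (⟨-1,1⟩ : Zs); (⟨0,0⟩ : Zs), (⟨-1,0⟩ : Zs)]
def e16 : MZ := !![(⟨-2,0⟩ : Zs), (⟨1,-1⟩ : Zs); (⟨-1,-1⟩ : Zs), (⟨1,0⟩ : Zs)]
def e17 : MZ := !![(⟨1,1⟩ : Zs), (⟨-2,0⟩ : Zs); (⟨-1,1⟩ : Zs), (⟨-1,-1⟩ : Zs)]
def e18 : MZ := !![(⟨-1,-1⟩ : Zs), (⟨2,0⟩ : Zs); (⟨0,-1⟩ : Zs), (⟨1,1⟩ : Zs)]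
def e19 : MZ := !![(⟨-1,-1⟩ : Zs), (⟨1,0⟩ : Zs); (⟨1,-1⟩ : Zs), (⟨0,1⟩ : Zs)]
def e20 : MZ := !![(⟨0,0⟩ : Zs), (⟨-1,0⟩ : Zs); (⟨-1,0⟩ : Zs), (⟨0,-1⟩ : Zs)]
def e21 : MZ := !![(⟨1,-1⟩ : Zs), (⟨0,1⟩ : Zs); (⟨2,0⟩ : Zs), (⟨-1,1⟩ : Zs)]
def e22 : MZ := !![(⟨-1,0⟩ : Zs), (⟨0,-1⟩ : Zs); (⟨-1,0⟩ : Zs), (⟨1,-1⟩ : Zs)]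
def e23 : MZ := !![(⟨0,0⟩ : Zs), (⟨-1,0⟩ : Zs); (⟨1,0⟩ : Zs), (⟨-1,0⟩ : Zs)]
def e24 : MZ := !![(⟨-1,-1⟩ : Zs), (⟨1,0⟩ : Zs); (⟨0,-1⟩ : Zs), (⟨1,0⟩ : Zs)]
def e25 : MZ := !![(⟨-1,1⟩ : Zs), (⟨-1,-1⟩ : Zs); (⟨-1,0⟩ : Zs), (⟨0,-1⟩ : Zs)]
def e26 : MZ := !![(⟨0,-1⟩ : Zs), (⟨1,1⟩ : Zs); (⟨1,-1⟩ : Zs), (⟨0,1⟩ : Zs)]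
def e27 : MZ := !![(⟨1,-1⟩ : Zs), (⟨0,1⟩ : Zs); (⟨1,0⟩ : Zs), (⟨-1,0⟩ : Zs)]
def e28 : MZ := !![(⟨-1,0⟩ : Zs), (⟨0,-1⟩ : Zs); (⟨0,-1⟩ : Zs), (⟨1,0⟩ : Zs)]
def e29 : MZ := !![(⟨2,0⟩ : Zs), (⟨-1,1⟩ : Zs); (⟨1,1⟩ : Zs), (⟨-2,0⟩ : Zs)]
def e30 : MZ := !![(⟨-1,0⟩ : Zs), (⟨1,-1⟩ : Zs); (⟨-1,-1⟩ : Zs), (⟨2,0⟩ : Zs)]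
def e31 : MZ := !![(⟨1,0⟩ : Zs), (⟨-1,0⟩ : Zs); (⟨0,1⟩ : Zs), (⟨-1,-1⟩ : Zs)]
def e32 : MZ := !![(⟨0,-1⟩ : Zs), (⟨1,0⟩ : Zs); (⟨1,-1⟩ : Zs), (⟨1,1⟩ : Zs)]
def e33 : MZ := !![(⟨0,1⟩ : Zs), (⟨-1,-1⟩ : Zs); (⟨-1,1⟩ : Zs), (⟨0,-1⟩ : Zs)]
def e34 : MZ := !![(⟨1,-1⟩ : Zs), (⟨1,1⟩ : Zs); (⟨1,0⟩ : Zs), (⟨0,1⟩ : Zs)]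
def e35 : MZ := !![(⟨1,0⟩ : Zs), (⟨-1,0⟩ : Zs); (⟨1,0⟩ : Zs), (⟨0,0⟩ : Zs)]
def e36 : MZ := !![(⟨0,-1⟩ : Zs), (⟨1,0⟩ : Zs); (⟨1,0⟩ : Zs), (⟨0,0⟩ : Zs)]
def e37 : MZ := !![(⟨1,1⟩ : Zs), (⟨-2,0⟩ : Zs); (⟨0,1⟩ : Zs), (⟨-1,-1⟩ : Zs)]
def e38 : MZ := !![(⟨-1,-1⟩ : Zs), (⟨2,0⟩ : Zs); (⟨1,-1⟩ : Zs), (⟨1,1⟩ : Zs)]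
def e39 : MZ := !![(⟨0,1⟩ : Zs), (⟨-1,-1⟩ : Zs); (⟨-1,0⟩ : Zs), (⟨1,-1⟩ : Zs)]
def e40 : MZ := !![(⟨1,-1⟩ : Zs), (⟨1,1⟩ : Zs); (⟨2,0⟩ : Zs), (⟨-1,1⟩ : Zs)]
def e41 : MZ := !![(⟨-1,1⟩ : Zs), (⟨0,-1⟩ : Zs); (⟨-2,0⟩ : Zs), (⟨1,-1⟩ : Zs)]
def e42 : MZ := !![(⟨1,0⟩ : Zs), (⟨0,1⟩ : Zs); (⟨1,0⟩ : Zs), (⟨-1,1⟩ : Zs)]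
def e43 : MZ := !![(⟨1,0⟩ : Zs), (⟨0,0⟩ : Zs); (⟨1,1⟩ : Zs), (⟨-1,0⟩ : Zs)]
def e44 : MZ := !![(⟨1,1⟩ : Zs), (⟨-1,0⟩ : Zs); (⟨0,1⟩ : Zs), (⟨-1,0⟩ : Zs)]
def e45 : MZ := !![(⟨0,0⟩ : Zs), (⟨1,0⟩ : Zs); (⟨-1,0⟩ : Zs), (⟨1,0⟩ : Zs)]
def e46 : MZ := !![(⟨-1,0⟩ : Zs), (⟨1,-1⟩ : Zs); (⟨0,0⟩ : Zs), (⟨1,0⟩ : Zs)]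
def e47 : MZ := !![(⟨2,0⟩ : Zs), (⟨-1,1⟩ : Zs); (⟨1,1⟩ : Zs), (⟨-1,0⟩ : Zs)]
def u0 : MZˣ := ⟨e0, e0, by decide, by decide⟩
def u1 : MZˣ := ⟨e1, e36, by decide, by decide⟩
def u2 : MZˣ := ⟨e2, e32, by decide, by decide⟩
def u3 : MZˣ := ⟨e3, e28, by decide, by decide⟩
def u4 : MZˣ := ⟨e4, e22, by decide, by decide⟩
def u5 : MZˣ := ⟨e5, e24, by decide, by decide⟩
def u6 : MZˣ := ⟨e6, e19, by decide, by decide⟩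
def u7 : MZˣ := ⟨e7, e20, by decide, by decide⟩
def u8 : MZˣ := ⟨e8, e23, by decide, by decide⟩
def u9 : MZˣ := ⟨e9, e25, by decide, by decide⟩
def u10 : MZˣ := ⟨e10, e10, by decide, by decide⟩
def u11 : MZˣ := ⟨e11, e16, by decide, by decide⟩
def u12 : MZˣ := ⟨e12, e12, by decide, by decide⟩
def u13 : MZˣ := ⟨e13, e13, by decide, by decide⟩
def u14 : MZˣ := ⟨e14, e14, by decide, by decide⟩
def u15 : MZˣ := ⟨e15, e15, by decide, by decide⟩
def u16 : MZˣ := ⟨e16, e11, by decide, by decide⟩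
def u17 : MZˣ := ⟨e17, e17, by decide, by decide⟩
def u18 : MZˣ := ⟨e18, e37, by decide, by decide⟩
def u19 : MZˣ := ⟨e19, e6, by decide, by decide⟩
def u20 : MZˣ := ⟨e20, e7, by decide, by decide⟩
def u21 : MZˣ := ⟨e21, e41, by decide, by decide⟩
def u22 : MZˣ := ⟨e22, e4, by decide, by decide⟩
def u23 : MZˣ := ⟨e23, e8, by decide, by decide⟩
def u24 : MZˣ := ⟨e24, e5, by decide, by decide⟩
def u25 : MZˣ := ⟨e25, e9, by decide, by decide⟩
def u26 : MZˣ := ⟨e26, e26, by decide, by decide⟩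
def u27 : MZˣ := ⟨e27, e42, by decide, by decide⟩
def u28 : MZˣ := ⟨e28, e3, by decide, by decide⟩
def u29 : MZˣ := ⟨e29, e29, by decide, by decide⟩
def u30 : MZˣ := ⟨e30, e47, by decide, by decide⟩
def u31 : MZˣ := ⟨e31, e44, by decide, by decide⟩
def u32 : MZˣ := ⟨e32, e2, by decide, by decide⟩
def u33 : MZˣ := ⟨e33, e33, by decide, by decide⟩
def u34 : MZˣ := ⟨e34, e39, by decide, by decide⟩
def u35 : MZˣ := ⟨e35, e45, by decide, by decide⟩
def u36 : MZˣ := ⟨e36, e1, by decide, by decide⟩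
def u37 : MZˣ := ⟨e37, e18, by decide, by decide⟩
def u38 : MZˣ := ⟨e38, e38, by decide, by decide⟩
def u39 : MZˣ := ⟨e39, e34, by decide, by decide⟩
def u40 : MZˣ := ⟨e40, e40, by decide, by decide⟩
def u41 : MZˣ := ⟨e41, e21, by decide, by decide⟩
def u42 : MZˣ := ⟨e42, e27, by decide, by decide⟩
def u43 : MZˣ := ⟨e43, e43, by decide, by decide⟩
def u44 : MZˣ := ⟨e44, e31, by decide, by decide⟩
def u45 : MZˣ := ⟨e45, e35, by decide, by decide⟩
def u46 : MZˣ := ⟨e46, e46, by decide, by decide⟩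
def u47 : MZˣ := ⟨e47, e30, by decide, by decide⟩
def LL : List MZˣ := [u0, u1, u2, u3, u4, u5, u6, u7, u8, u9, u10, u11, u12, u13, u14, u15, u16, u17, u18, u19, u20, u21, u22, u23, u24, u25, u26, u27, u28, u29, u30, u31, u32, u33, u34, u35, u36, u37, u38, u39, u40, u41, u42, u43, u44, u45, u46, u47]
set_option maxRecDepth 40000 in
lemma hstep : (∀ x ∈ LL, u1 * x ∈ LL ∧ u2 * x ∈ LL ∧ u1⁻¹ * x ∈ LL ∧ u2⁻¹ * x ∈ LL) ∧ LL.Nodup := by decide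
lemma memLL : ∀ x ∈ LL, x ∈ Subgroup.closure ({u1, u2} : Set MZˣ) := by
  have hA : u1 ∈ Subgroup.closure ({u1, u2} : Set MZˣ) := Subgroup.subset_closure (Set.mem_insert _ _)
  have hB : u2 ∈ Subgroup.closure ({u1, u2} : Set MZˣ) := Subgroup.subset_closure (Set.mem_insert_of_mem _ rfl)
  have h0 : u0 ∈ Subgroup.closure ({u1, u2} : Set MZˣ) := by
    rw [show u0 = (1 : MZˣ) from by decide]; exact one_mem _
  have h1 : u1 ∈ Subgroup.closure ({u1, u2} : Set MZˣ) := hA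
  have h2 : u2 ∈ Subgroup.closure ({u1, u2} : Set MZˣ) := hB
  have h3 : u3 ∈ Subgroup.closure ({u1, u2} : Set MZˣ) := by
    rw [show u3 = u1 * u1 from by decide]; exact mul_mem h1 hA
  have h4 : u4 ∈ Subgroup.closure ({u1, u2} : Set MZˣ) := by
    rw [show u4 = u1 * u2 from by decide]; exact mul_mem h1 hB
  have h5 : u5 ∈ Subgroup.closure ({u1, u2} : Set MZˣ) := by
    rw [show u5 = u2 * u1 from by decide]; exact mul_mem h2 hA
  have h6 : u6 ∈ Subgroup.closure ({u1, u2} : Set MZˣ) := by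
    rw [show u6 = u2 * u2 from by decide]; exact mul_mem h2 hB
  have h7 : u7 ∈ Subgroup.closure ({u1, u2} : Set MZˣ) := by
    rw [show u7 = u3 * u1 from by decide]; exact mul_mem h3 hA
  have h8 : u8 ∈ Subgroup.closure ({u1, u2} : Set MZˣ) := by
    rw [show u8 = u3 * u2 from by decide]; exact mul_mem h3 hB
  have h9 : u9 ∈ Subgroup.closure ({u1, u2} : Set MZˣ) := by
    rw [show u9 = u4 * u1 from by decide]; exact mul_mem h4 hA
  have h10 : u10 ∈ Subgroup.closure ({u1, u2} : Set MZˣ) := by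
    rw [show u10 = u4 * u2 from by decide]; exact mul_mem h4 hB
  have h11 : u11 ∈ Subgroup.closure ({u1, u2} : Set MZˣ) := by
    rw [show u11 = u5 * u1 from by decide]; exact mul_mem h5 hA
  have h12 : u12 ∈ Subgroup.closure ({u1, u2} : Set MZˣ) := by
    rw [show u12 = u5 * u2 from by decide]; exact mul_mem h5 hB
  have h13 : u13 ∈ Subgroup.closure ({u1, u2} : Set MZˣ) := by
    rw [show u13 = u6 * u1 from by decide]; exact mul_mem h6 hA
  have h14 : u14 ∈ Subgroup.closure ({u1, u2} : Set MZˣ) := by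
    rw [show u14 = u6 * u2 from by decide]; exact mul_mem h6 hB
  have h15 : u15 ∈ Subgroup.closure ({u1, u2} : Set MZˣ) := by
    rw [show u15 = u8 * u1 from by decide]; exact mul_mem h8 hA
  have h16 : u16 ∈ Subgroup.closure ({u1, u2} : Set MZˣ) := by
    rw [show u16 = u8 * u2 from by decide]; exact mul_mem h8 hB
  have h17 : u17 ∈ Subgroup.closure ({u1, u2} : Set MZˣ) := by
    rw [show u17 = u9 * u1 from by decide]; exact mul_mem h9 hA
  have h18 : u18 ∈ Subgroup.closure ({u1, u2} : Set MZˣ) := by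
    rw [show u18 = u9 * u2 from by decide]; exact mul_mem h9 hB
  have h19 : u19 ∈ Subgroup.closure ({u1, u2} : Set MZˣ) := by
    rw [show u19 = u10 * u1 from by decide]; exact mul_mem h10 hA
  have h20 : u20 ∈ Subgroup.closure ({u1, u2} : Set MZˣ) := by
    rw [show u20 = u10 * u2 from by decide]; exact mul_mem h10 hB
  have h21 : u21 ∈ Subgroup.closure ({u1, u2} : Set MZˣ) := by
    rw [show u21 = u12 * u1 from by decide]; exact mul_mem h12 hA
  have h22 : u22 ∈ Subgroup.closure ({u1, u2} : Set MZˣ) := by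
    rw [show u22 = u12 * u2 from by decide]; exact mul_mem h12 hB
  have h23 : u23 ∈ Subgroup.closure ({u1, u2} : Set MZˣ) := by
    rw [show u23 = u13 * u1 from by decide]; exact mul_mem h13 hA
  have h24 : u24 ∈ Subgroup.closure ({u1, u2} : Set MZˣ) := by
    rw [show u24 = u13 * u2 from by decide]; exact mul_mem h13 hB
  have h25 : u25 ∈ Subgroup.closure ({u1, u2} : Set MZˣ) := by
    rw [show u25 = u15 * u1 from by decide]; exact mul_mem h15 hA
  have h26 : u26 ∈ Subgroup.closure ({u1, u2} : Set MZˣ) := by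
    rw [show u26 = u15 * u2 from by decide]; exact mul_mem h15 hB
  have h27 : u27 ∈ Subgroup.closure ({u1, u2} : Set MZˣ) := by
    rw [show u27 = u16 * u1 from by decide]; exact mul_mem h16 hA
  have h28 : u28 ∈ Subgroup.closure ({u1, u2} : Set MZˣ) := by
    rw [show u28 = u16 * u2 from by decide]; exact mul_mem h16 hB
  have h29 : u29 ∈ Subgroup.closure ({u1, u2} : Set MZˣ) := by
    rw [show u29 = u18 * u1 from by decide]; exact mul_mem h18 hA
  have h30 : u30 ∈ Subgroup.closure ({u1, u2} : Set MZˣ) := by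
    rw [show u30 = u18 * u2 from by decide]; exact mul_mem h18 hB
  have h31 : u31 ∈ Subgroup.closure ({u1, u2} : Set MZˣ) := by
    rw [show u31 = u19 * u1 from by decide]; exact mul_mem h19 hA
  have h32 : u32 ∈ Subgroup.closure ({u1, u2} : Set MZˣ) := by
    rw [show u32 = u19 * u2 from by decide]; exact mul_mem h19 hB
  have h33 : u33 ∈ Subgroup.closure ({u1, u2} : Set MZˣ) := by
    rw [show u33 = u21 * u1 from by decide]; exact mul_mem h21 hA
  have h34 : u34 ∈ Subgroup.closure ({u1, u2} : Set MZˣ) := by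
    rw [show u34 = u21 * u2 from by decide]; exact mul_mem h21 hB
  have h35 : u35 ∈ Subgroup.closure ({u1, u2} : Set MZˣ) := by
    rw [show u35 = u24 * u1 from by decide]; exact mul_mem h24 hA
  have h36 : u36 ∈ Subgroup.closure ({u1, u2} : Set MZˣ) := by
    rw [show u36 = u24 * u2 from by decide]; exact mul_mem h24 hB
  have h37 : u37 ∈ Subgroup.closure ({u1, u2} : Set MZˣ) := by
    rw [show u37 = u26 * u1 from by decide]; exact mul_mem h26 hA
  have h38 : u38 ∈ Subgroup.closure ({u1, u2} : Set MZˣ) := by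
    rw [show u38 = u26 * u2 from by decide]; exact mul_mem h26 hB
  have h39 : u39 ∈ Subgroup.closure ({u1, u2} : Set MZˣ) := by
    rw [show u39 = u27 * u1 from by decide]; exact mul_mem h27 hA
  have h40 : u40 ∈ Subgroup.closure ({u1, u2} : Set MZˣ) := by
    rw [show u40 = u27 * u2 from by decide]; exact mul_mem h27 hB
  have h41 : u41 ∈ Subgroup.closure ({u1, u2} : Set MZˣ) := by
    rw [show u41 = u29 * u1 from by decide]; exact mul_mem h29 hA
  have h42 : u42 ∈ Subgroup.closure ({u1, u2} : Set MZˣ) := by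
    rw [show u42 = u29 * u2 from by decide]; exact mul_mem h29 hB
  have h43 : u43 ∈ Subgroup.closure ({u1, u2} : Set MZˣ) := by
    rw [show u43 = u32 * u1 from by decide]; exact mul_mem h32 hA
  have h44 : u44 ∈ Subgroup.closure ({u1, u2} : Set MZˣ) := by
    rw [show u44 = u34 * u1 from by decide]; exact mul_mem h34 hA
  have h45 : u45 ∈ Subgroup.closure ({u1, u2} : Set MZˣ) := by
    rw [show u45 = u34 * u2 from by decide]; exact mul_mem h34 hB
  have h46 : u46 ∈ Subgroup.closure ({u1, u2} : Set MZˣ) := by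
    rw [show u46 = u35 * u1 from by decide]; exact mul_mem h35 hA
  have h47 : u47 ∈ Subgroup.closure ({u1, u2} : Set MZˣ) := by
    rw [show u47 = u35 * u2 from by decide]; exact mul_mem h35 hB
  intro x hx
  simp only [LL, List.mem_cons, List.not_mem_nil, or_false] at hx
  rcases hx with rfl|rfl|rfl|rfl|rfl|rfl|rfl|rfl|rfl|rfl|rfl|rfl|rfl|rfl|rfl|rfl|rfl|rfl|rfl|rfl|rfl|rfl|rfl|rfl|rfl|rfl|rfl|rfl|rfl|rfl|rfl|rfl|rfl|rfl|rfl|rfl|rfl|rfl|rfl|rfl|rfl|rfl|rfl|rfl|rfl|rfl|rfl|rfl <;> assumption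
lemma coverM : ∀ g ∈ Subgroup.closure ({u1, u2} : Set MZˣ), g ∈ LL := by
  intro g hg
  have hg' : g ∈ (Subgroup.closure ({u1, u2} : Set MZˣ)).toSubmonoid := hg
  rw [Subgroup.closure_toSubmonoid] at hg'
  obtain ⟨l, hl, rfl⟩ := Submonoid.exists_list_of_mem_closure hg'
  clear hg hg'
  induction l with
  | nil => exact (by decide : (1 : MZˣ) ∈ LL)
  | cons g tl ih =>
      have htl := ih (fun y hy => hl y (List.mem_cons_of_mem _ hy))
      have hhead := hl g List.mem_cons_self
      rw [List.prod_cons]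
      simp only [Set.mem_union, Set.mem_inv, Set.mem_insert_iff, Set.mem_singleton_iff] at hhead
      rcases hhead with (rfl | rfl) | (h | h)
      · exact ((hstep.1 _ htl).1)
      · exact ((hstep.1 _ htl).2.1)
      · rw [show g = u1⁻¹ from by rw [← inv_inv g, h]]
        exact ((hstep.1 _ htl).2.2.1)
      · rw [show g = u2⁻¹ from by rw [← inv_inv g, h]]
        exact ((hstep.1 _ htl).2.2.2)
lemma cardM : Nat.card (Subgroup.closure ({u1, u2} : Set MZˣ)) = 48 := by
  have hset : ((Subgroup.closure ({u1, u2} : Set MZˣ)) : Set MZˣ) = {x | x ∈ LL} :=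
    Set.Subset.antisymm (fun x hx => coverM x hx) (fun x hx => memLL x hx)
  have h1 : Nat.card (Subgroup.closure ({u1, u2} : Set MZˣ)) = Nat.card {x : MZˣ | x ∈ LL} :=
    Nat.card_congr (Equiv.setCongr hset)
  rw [h1, show {x : MZˣ | x ∈ LL} = (↑LL.toFinset : Set MZˣ) from by ext x; simp,
     Nat.card_coe_set_eq, Set.ncard_coe_finset, List.toFinset_card_of_nodup hstep.2]
  rfl
def fg : Fin 3 → MZˣ := ![u43, u29, u40]
lemma hrels : ∀ r ∈ g12Rels, FreeGroup.lift fg r = 1 := by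
  intro r hr
  simp only [g12Rels, Set.mem_union, Set.mem_insert_iff, Set.mem_singleton_iff,
    Set.mem_range] at hr
  rcases hr with (rfl | rfl) | ⟨i, rfl⟩
  · simp only [_root_.map_mul, _root_.map_inv, FreeGroup.lift_apply_of, fg, Matrix.cons_val_zero,
      Matrix.cons_val_one, Matrix.head_cons, Matrix.cons_val_two, Matrix.tail_cons]
    decide
  · simp only [_root_.map_mul, _root_.map_inv, FreeGroup.lift_apply_of, fg, Matrix.cons_val_zero,
      Matrix.cons_val_one, Matrix.head_cons, Matrix.cons_val_two, Matrix.tail_cons]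
    decide
  · fin_cases i <;>
      simp only [_root_.map_pow, FreeGroup.lift_apply_of, fg, Matrix.cons_val_zero,
        Matrix.cons_val_one, Matrix.head_cons, Matrix.cons_val_two, Matrix.tail_cons] <;>
      decide
lemma gens_mem : fg 0 ∈ Subgroup.closure ({u1, u2} : Set MZˣ) ∧
    fg 1 ∈ Subgroup.closure ({u1, u2} : Set MZˣ) ∧
    fg 2 ∈ Subgroup.closure ({u1, u2} : Set MZˣ) := by
  refine ⟨memLL _ ?_, memLL _ ?_, memLL _ ?_⟩ <;> decide
lemma AB_mem : u1 ∈ Subgroup.closure (Set.range fg) ∧ u2 ∈ Subgroup.closure (Set.range fg) := by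
  constructor
  · rw [show u1 = fg 0 * fg 1 * fg 2 from by decide]
    exact mul_mem (mul_mem (Subgroup.subset_closure ⟨0, rfl⟩) (Subgroup.subset_closure ⟨1, rfl⟩))
      (Subgroup.subset_closure ⟨2, rfl⟩)
  · rw [show u2 = fg 0 * fg 1 * fg 2 * fg 0 from by decide]
    exact mul_mem (mul_mem (mul_mem (Subgroup.subset_closure ⟨0, rfl⟩)
      (Subgroup.subset_closure ⟨1, rfl⟩)) (Subgroup.subset_closure ⟨2, rfl⟩))
      (Subgroup.subset_closure ⟨0, rfl⟩)

def phi0 : P12 →* MZˣ := PresentedGroup.toGroup hrels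
lemma phi0_of (i : Fin 3) : phi0 (PresentedGroup.of i) = fg i := PresentedGroup.toGroup.of hrels
lemma hran0 : phi0.range = Subgroup.closure ({u1, u2} : Set MZˣ) := by
  have h1 : phi0.range = Subgroup.closure (Set.range fg) := by
    rw [MonoidHom.range_eq_map, ← PresentedGroup.closure_range_of g12Rels,
      MonoidHom.map_closure]
    congr 1
    ext g
    constructor
    · rintro ⟨_, ⟨i, rfl⟩, rfl⟩; exact ⟨i, (phi0_of i).symm⟩
    · rintro ⟨i, rfl⟩; exact ⟨PresentedGroup.of i, ⟨i, rfl⟩, phi0_of i⟩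
  rw [h1]
  refine le_antisymm ((Subgroup.closure_le _).mpr ?_) ((Subgroup.closure_le _).mpr ?_)
  · rintro g ⟨i, rfl⟩
    fin_cases i
    exacts [gens_mem.1, gens_mem.2.1, gens_mem.2.2]
  · intro g hg
    simp only [Set.mem_insert_iff, Set.mem_singleton_iff] at hg
    rcases hg with rfl | rfl
    exacts [AB_mem.1, AB_mem.2]

def θC (U : ℂ) (h : U * U = ((-2:ℤ) : ℂ)) : Zs →+* ℂ := Zsqrtd.lift ⟨U, h⟩
def ΘC (U : ℂ) (h : U * U = ((-2:ℤ) : ℂ)) : MZˣ →* (Matrix (Fin 2) (Fin 2) ℂ)ˣ :=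
  Units.map (RingHom.mapMatrix (θC U h)).toMonoidHom
lemma θC_apply (U : ℂ) (h : U * U = ((-2:ℤ) : ℂ)) (a b : ℤ) :
    θC U h ⟨a, b⟩ = (a : ℂ) + (b : ℂ) * U := by
  simp [θC, Zsqrtd.lift_apply_apply]
lemma ΘC_inj (U : ℂ) (h : U * U = ((-2:ℤ) : ℂ)) : Function.Injective (ΘC U h) :=
  fun a b hab => Units.ext (Matrix.map_injective
    (Zsqrtd.lift_injective _ (fun n hn => by nlinarith [mul_self_nonneg n]))
    (congrArg Units.val hab))

/-- for n = 3, m = 4 (a = b = −1), with U = −√(−2) = −i√2, the matrices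
M_X = t³[[0,1],[1,U]] and M_Y = t⁴[[1+q⁻¹U, −q⁻¹],[−2q⁻¹+q+U, −q⁻¹U]] satisfy
M_X⁴ = M_Y³, and their specializations at t = q = 1 generate a subgroup of GL₂(ℂ)
of order 48 isomorphic to the complex reflection group G₁₂. -/
theorem stmt17 (U : ℂ) (hU : U = -(Complex.I * (Real.sqrt 2 : ℂ)))
    (MX MY : Matrix (Fin 2) (Fin 2) R2)
    (hMX : MX = (T 3 : R2) • !![0, 1; 1, cR U])
    (hMY : MY = (T 4 : R2) •
      !![1 + qInv * cR U, -qInv; -2 * qInv + qP + cR U, -(qInv * cR U)]) :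
    MX ^ 4 = MY ^ 3 ∧
      ∀ A B : (Matrix (Fin 2) (Fin 2) ℂ)ˣ,
        (A : Matrix (Fin 2) (Fin 2) ℂ) = !![0, 1; 1, U] →
        (B : Matrix (Fin 2) (Fin 2) ℂ) = !![1 + U, -1; -1 + U, -U] →
        Nat.card (Subgroup.closure {A, B} : Subgroup (Matrix (Fin 2) (Fin 2) ℂ)ˣ) = 48 ∧
        Nonempty ((Subgroup.closure {A, B} : Subgroup (Matrix (Fin 2) (Fin 2) ℂ)ˣ) ≃*
          PresentedGroup g12Rels) := by
  have hU2 : U * U = -2 := by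
    have h2 : (Real.sqrt 2 : ℂ) * (Real.sqrt 2 : ℂ) = 2 := by
      norm_cast
      exact Real.mul_self_sqrt (by norm_num)
    rw [hU]
    calc -(Complex.I * _) * -(Complex.I * _)
        = (Complex.I * Complex.I) * ((Real.sqrt 2 : ℂ) * (Real.sqrt 2 : ℂ)) := by ring
      _ = -2 := by rw [Complex.I_mul_I, h2]; ring
  constructor
  · have hu : cR U * cR U = -2 := by
      rw [← map_mul, hU2, show ((-2:ℂ)) = ((-2 : ℤ) : ℂ) by norm_num, map_intCast]
      push_cast; ring
    have hv : qInv * qP = 1 := by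
      rw [qInv, qP, ← map_mul, ← T_add]
      norm_num [T_zero]
    obtain ⟨h1, h2⟩ := matkey (cR U) qInv qP hu hv
    rw [hMX, hMY, smul_pow, smul_pow, T_pow, T_pow, h1, h2]
    norm_num
  · intro A B hA hB
    have hU2' : U * U = ((-2:ℤ) : ℂ) := by rw [hU2]; norm_num
    have hAval : ((ΘC U hU2' u1 : (Matrix (Fin 2) (Fin 2) ℂ)ˣ) : Matrix (Fin 2) (Fin 2) ℂ)
        = !![0, 1; 1, U] := by
      show (e1).map (θC U hU2') = _
      ext i j
      fin_cases i <;> fin_cases j <;>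
        simp [e1, θC_apply] <;> norm_num
    have hBval : ((ΘC U hU2' u2 : (Matrix (Fin 2) (Fin 2) ℂ)ˣ) : Matrix (Fin 2) (Fin 2) ℂ)
        = !![1 + U, -1; -1 + U, -U] := by
      show (e2).map (θC U hU2') = _
      ext i j
      fin_cases i <;> fin_cases j <;>
        simp [e2, θC_apply] <;> norm_num
    have hAeq : A = ΘC U hU2' u1 := Units.ext (by rw [hA, hAval])
    have hBeq : B = ΘC U hU2' u2 := Units.ext (by rw [hB, hBval])
    have hclos : Subgroup.closure ({A, B} : Set (Matrix (Fin 2) (Fin 2) ℂ)ˣ)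
        = Subgroup.map (ΘC U hU2') (Subgroup.closure {u1, u2}) := by
      rw [MonoidHom.map_closure, Set.image_pair, hAeq, hBeq]
    have hcard : Nat.card (Subgroup.closure ({A, B} : Set (Matrix (Fin 2) (Fin 2) ℂ)ˣ)) = 48 := by
      rw [hclos, ← cardM]
      exact (Nat.card_congr (Subgroup.equivMapOfInjective _ _ (ΘC_inj U hU2')).toEquiv).symm
    set φ : P12 →* (Matrix (Fin 2) (Fin 2) ℂ)ˣ := (ΘC U hU2').comp phi0 with hφdef
    have hranφ : φ.range = Subgroup.closure ({A, B} : Set (Matrix (Fin 2) (Fin 2) ℂ)ˣ) := by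
      rw [hφdef, MonoidHom.range_comp, hran0, ← hclos]
    have hsurj : Function.Surjective (fun k : Fin 48 => ev (NW k)) := fun p => cover p
    haveI hfinP : Finite P12 := Finite.of_surjective _ hsurj
    have hcardP : Nat.card P12 ≤ 48 := by
      have h := Nat.card_le_card_of_surjective _ hsurj
      simpa using h
    have hqc : Nat.card (P12 ⧸ φ.ker) = 48 := by
      rw [Nat.card_congr (QuotientGroup.quotientKerEquivRange φ).toEquiv]
      rw [show φ.range = _ from hranφ]
      exact hcard
    have hform := Subgroup.card_eq_card_quotient_mul_card_subgroup (φ.ker)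
    have hkerpos : 0 < Nat.card φ.ker := Nat.card_pos
    have hker1 : Nat.card φ.ker = 1 := by
      rw [hqc] at hform
      omega
    have hker : φ.ker = ⊥ := Subgroup.card_eq_one.mp hker1
    have hbij : Function.Bijective φ.rangeRestrict :=
      ⟨(MonoidHom.ker_eq_bot_iff _).mp (by rw [MonoidHom.ker_rangeRestrict]; exact hker),
        φ.rangeRestrict_surjective⟩
    exact ⟨hcard, ⟨(MulEquiv.subgroupCongr hranφ.symm).trans (MulEquiv.ofBijective _ hbij).symm⟩⟩

end
end

section
/- Let n, m ≥ 2 be coprime with n odd and 3 ∤ m, with an − bm = 1 and a odd, and let M_X, M_Y be the torus-knot Burau matrices. Setting J = [[0,1],[1,0]] and defining the bar involution on ℂ[t^{±1},q^{±1}] by q ↦ −q, t ↦ t^{-1} (extended by complex conjugation on coefficients), one has (conj-transpose of M_X)·J·M_X = J and (conj-transpose of M_Y)·J·M_Y = J, i.e., the representation is unitary with respect to the Hermitian-like form J. -/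
open LaurentPolynomial Matrix

noncomputable section

lemma root_iff (N : ℕ) (hN : N ≠ 0) (k : ℤ)
    (h : Complex.exp (2*(Real.pi:ℂ)*Complex.I/(N:ℂ)) ^ k = 1) : (N:ℤ) ∣ k := by
  rw [← Complex.exp_int_mul, Complex.exp_eq_one_iff] at h
  obtain ⟨j, hj⟩ := h
  have hπ : (Real.pi:ℂ) ≠ 0 := by exact_mod_cast Real.pi_ne_zero
  have hNC : (N:ℂ) ≠ 0 := Nat.cast_ne_zero.mpr hN
  have h2 : (2*(Real.pi:ℂ)*Complex.I) ≠ 0 := by simp [hπ, Complex.I_ne_zero]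
  have hk : (k:ℂ) = N * j := by
    field_simp at hj
    apply mul_right_cancel₀ h2
    linear_combination (2*(Real.pi:ℂ)*Complex.I) * hj
  exact ⟨j, by exact_mod_cast hk⟩

lemma zshift {z : ℂ} (hz : z ≠ 0) {m' : ℤ} (h : z^(2*m') = -1) (e : ℤ) :
    z^(e - 6*m') = - z^e := by
  have h6 : z^(6*m') = -1 := by
    rw [show 6*m' = 2*m'*3 by ring, _root_.zpow_mul, h]
    norm_num
  rw [zpow_sub₀ hz, h6]
  field_simp

lemma genUV (y w : ℂ) (hy : y ≠ 0) (hw : w^2 = -1) :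
    (w * y⁻¹ + w * y) * (w * y⁻¹ + w * y + w * (y^3)⁻¹ + w * y^3)
      + (1 + y^2 + (y^2)⁻¹)^2 = 1 := by
  have key : (w * y⁻¹ + w * y) * (w * y⁻¹ + w * y + w * (y^3)⁻¹ + w * y^3)
      = w^2 * ((y⁻¹ + y) * (y⁻¹ + y + (y^3)⁻¹ + y^3)) := by ring
  rw [key, hw]
  field_simp
  ring_nf

lemma qq : qP * qInv = 1 := by
  rw [qP, qInv, ← _root_.map_mul, ← T_add,
    show (1:ℤ) + -1 = 0 from by norm_num, T_zero, _root_.map_one]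

lemma TT (k : ℕ) : (T (-(k:ℤ)) : R2) * T ((k:ℕ):ℤ) = 1 := by
  rw [← T_add, neg_add_cancel, T_zero]

lemma genericX {R : Type*} [CommRing R] (e d u u' v : R) (hed : e * d = 1)
    (huv : u * u' + v * v = 1) :
    (e • !![-u', v; v, u])ᵀ * !![(0:R), 1; 1, 0] * (d • !![u', v; v, -u])
      = !![0, 1; 1, 0] := by
  have hT : (!![-u', v; v, u])ᵀ = !![-u', v; v, u] := by
    ext i j; fin_cases i <;> fin_cases j <;> rfl
  rw [transpose_smul, hT, Matrix.smul_mul, Matrix.smul_mul, Matrix.mul_smul, smul_smul, hed,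
    one_smul]
  ext i j
  fin_cases i <;> fin_cases j <;>
    simp [Matrix.mul_apply, Fin.sum_univ_two] <;> first | ring1 | linear_combination huv

lemma genericY {R : Type*} [CommRing R] (e d μ μ' ν w x a₁ a₂ : R) (hed : e * d = 1)
    (hμ : μ * μ' = 1) (hkey : (a₂ - a₁) * ν = μ - μ') (hxw : -(x * w) = a₁ * a₂ * ν * ν) :
    (e • !![a₂ * ν + μ', -w; -x, μ' - a₁ * ν])ᵀ * !![(0:R), 1; 1, 0] *
      (d • !![a₁ * ν + μ, w; x, μ - a₂ * ν]) = !![0, 1; 1, 0] := by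
  have hT : (!![a₂ * ν + μ', -w; -x, μ' - a₁ * ν])ᵀ
      = !![a₂ * ν + μ', -x; -w, μ' - a₁ * ν] := by
    ext i j; fin_cases i <;> fin_cases j <;> rfl
  rw [transpose_smul, hT, Matrix.smul_mul, Matrix.smul_mul, Matrix.mul_smul, smul_smul, hed,
    one_smul]
  ext i j
  fin_cases i <;> fin_cases j <;>
    simp [Matrix.mul_apply, Fin.sum_univ_two]
  · linear_combination x * hkey
  · linear_combination hμ + (-(a₂*ν)) * hkey + hxw
  · linear_combination hμ + (a₁*ν) * hkey + hxw
  · linear_combination w * hkey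

lemma map_smul_mat (φ : R2 →+* R2) (d : R2) (M : Matrix (Fin 2) (Fin 2) R2) :
    (d • M).map ⇑φ = φ d • M.map ⇑φ := by
  ext i j
  simp [Matrix.map_apply, Matrix.smul_apply, smul_eq_mul, _root_.map_mul]

lemma scalar_unit (φ : R2 →+* R2) (c₀ : ℂ) (k : ℕ)
    (hφc : ∀ z : ℂ, φ (cR z) = cR (starRingEnd ℂ z))
    (hφT : φ (T ((k:ℕ):ℤ)) = T (-(k:ℤ)))
    (hcc : starRingEnd ℂ c₀ * c₀ = 1) :
    φ (cR c₀ * (T ((k:ℕ):ℤ) : R2)) * (cR c₀ * (T ((k:ℕ):ℤ) : R2)) = 1 := by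
  rw [_root_.map_mul, hφc, hφT]
  calc cR (starRingEnd ℂ c₀) * (T (-(k:ℤ)) : R2) * (cR c₀ * T ((k:ℕ):ℤ))
      = cR (starRingEnd ℂ c₀ * c₀) * ((T (-(k:ℤ)) : R2) * T ((k:ℕ):ℤ)) := by
        rw [_root_.map_mul cR]; ring
    _ = 1 := by rw [hcc, TT k, _root_.map_one, one_mul]

lemma Xpart (φ : R2 →+* R2) (c₀ U U' V : ℂ) (k : ℕ)
    (hφc : ∀ z : ℂ, φ (cR z) = cR (starRingEnd ℂ z))
    (hφT : φ (T ((k:ℕ):ℤ)) = T (-(k:ℤ)))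
    (hcc : starRingEnd ℂ c₀ * c₀ = 1)
    (hcU : starRingEnd ℂ U = -U) (hcU' : starRingEnd ℂ U' = -U')
    (hcV : starRingEnd ℂ V = V) (hUV : U * U' + V * V = 1) :
    (((cR c₀ * (T ((k:ℕ):ℤ) : R2)) • !![cR U', cR V; cR V, -cR U]).map ⇑φ)ᵀ
      * !![(0:R2), 1; 1, 0]
      * ((cR c₀ * (T ((k:ℕ):ℤ) : R2)) • !![cR U', cR V; cR V, -cR U])
      = !![0, 1; 1, 0] := by
  rw [map_smul_mat]
  have hmap : (!![cR U', cR V; cR V, -cR U]).map ⇑φ = !![-(cR U'), cR V; cR V, cR U] := by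
    ext i j
    fin_cases i <;> fin_cases j <;>
      simp [Matrix.map_apply, hφc, hcU, hcU', hcV, _root_.map_neg]
  rw [hmap]
  have huv : cR U * cR U' + cR V * cR V = 1 := by
    rw [← _root_.map_mul, ← _root_.map_mul, ← _root_.map_add, hUV, _root_.map_one]
  exact genericX _ _ _ _ _ (scalar_unit φ c₀ k hφc hφT hcc) huv

lemma Ypart (φ : R2 →+* R2) (c₀ V la mb mu1 mu2 : ℂ) (A₁ A₂ : R2) (k : ℕ)
    (hφc : ∀ z : ℂ, φ (cR z) = cR (starRingEnd ℂ z))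
    (hφT : φ (T ((k:ℕ):ℤ)) = T (-(k:ℤ)))
    (hφq : φ qP = -qP)
    (hcc : starRingEnd ℂ c₀ * c₀ = 1)
    (hφA1 : φ A₁ = A₂) (hφA2 : φ A₂ = A₁)
    (hcmb : starRingEnd ℂ mb = mb)
    (hcμ1 : starRingEnd ℂ mu1 = mu2)
    (hcVla : starRingEnd ℂ (V * la) = V * la)
    (hμμ : mu1 * mu2 = 1)
    (hkeyR : (A₂ - A₁) * cR mb = cR mu1 - cR mu2)
    (hVla : V * la ≠ 0) :
    (((cR c₀ * (T ((k:ℕ):ℤ) : R2)) •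
      !![A₁ * cR mb + cR mu1, qInv * cR (V * la * mb);
         -(A₁ * A₂ * cR mb) * qP * cR ((V * la)⁻¹), cR mu1 - A₂ * cR mb]).map ⇑φ)ᵀ
      * !![(0:R2), 1; 1, 0]
      * ((cR c₀ * (T ((k:ℕ):ℤ) : R2)) •
      !![A₁ * cR mb + cR mu1, qInv * cR (V * la * mb);
         -(A₁ * A₂ * cR mb) * qP * cR ((V * la)⁻¹), cR mu1 - A₂ * cR mb])
      = !![0, 1; 1, 0] := by
  have hφqi : φ qInv = -qInv := by
    have h1 : (-qP) * φ qInv = 1 := by rw [← hφq, ← _root_.map_mul, qq, _root_.map_one]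
    calc φ qInv = (qP * qInv) * φ qInv := by rw [qq, one_mul]
      _ = -((-qP) * φ qInv) * qInv := by ring
      _ = -qInv := by rw [h1]; ring
  have hcVlam : starRingEnd ℂ (V * la * mb) = V * la * mb := by
    rw [_root_.map_mul, hcVla, hcmb]
  have hcVlainv : starRingEnd ℂ ((V * la)⁻¹) = (V * la)⁻¹ := by
    rw [_root_.map_inv₀, hcVla]
  rw [map_smul_mat]
  have e00 : φ (A₁ * cR mb + cR mu1) = A₂ * cR mb + cR mu2 := by
    rw [_root_.map_add, _root_.map_mul, hφA1, hφc, hcmb, hφc, hcμ1]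
  have e01 : φ (qInv * cR (V * la * mb)) = -(qInv * cR (V * la * mb)) := by
    rw [_root_.map_mul, hφqi, hφc, hcVlam]
    ring
  have e10 : φ (-(A₁ * A₂ * cR mb) * qP * cR ((V * la)⁻¹))
      = -(-(A₁ * A₂ * cR mb) * qP * cR ((V * la)⁻¹)) := by
    simp only [_root_.map_mul, _root_.map_neg, hφA1, hφA2, hφq, hφc, hcVlainv, hcmb]
    ring
  have e11 : φ (cR mu1 - A₂ * cR mb) = cR mu2 - A₁ * cR mb := by
    simp only [_root_.map_sub, _root_.map_mul, hφA2, hφc, hcmb, hcμ1]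
  have hmap : (!![A₁ * cR mb + cR mu1, qInv * cR (V * la * mb);
         -(A₁ * A₂ * cR mb) * qP * cR ((V * la)⁻¹), cR mu1 - A₂ * cR mb]).map ⇑φ
      = !![A₂ * cR mb + cR mu2, -(qInv * cR (V * la * mb));
           -(-(A₁ * A₂ * cR mb) * qP * cR ((V * la)⁻¹)), cR mu2 - A₁ * cR mb] := by
    refine Matrix.ext fun i j => ?_
    fin_cases i <;> fin_cases j
    · exact e00
    · exact e01
    · exact e10
    · exact e11
  rw [hmap]
  have hμR : cR mu1 * cR mu2 = 1 := by rw [← _root_.map_mul, hμμ, _root_.map_one]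
  have hcc2 : cR ((V * la)⁻¹) * cR (V * la * mb) = cR mb := by
    rw [← _root_.map_mul]
    congr 1
    rw [show (V*la)⁻¹ * (V*la*mb) = ((V*la)⁻¹*(V*la))*mb by ring, inv_mul_cancel₀ hVla, one_mul]
  have hxwR : -((-(A₁ * A₂ * cR mb) * qP * cR ((V * la)⁻¹)) * (qInv * cR (V * la * mb)))
      = A₁ * A₂ * cR mb * cR mb := by
    calc -((-(A₁ * A₂ * cR mb) * qP * cR ((V * la)⁻¹)) * (qInv * cR (V * la * mb)))
        = (A₁ * A₂ * cR mb) * ((qP * qInv) * (cR ((V * la)⁻¹) * cR (V * la * mb))) := by ring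
      _ = A₁ * A₂ * cR mb * cR mb := by rw [qq, one_mul, hcc2]
  exact genericY _ _ _ _ _ _ _ _ _ (scalar_unit φ c₀ k hφc hφT hcc) hμR hkeyR hxwR


/-- for n, m ≥ 2 coprime with n odd, 3 ∤ m, an − bm = 1 and a odd, the
torus-knot Burau matrices are unitary for the form J = [[0,1],[1,0]] with respect to the
bar involution q ↦ −q, t ↦ t⁻¹ (complex conjugation on coefficients): for any ring
endomorphism φ realizing this involution, (φ(M_X))ᵀ·J·M_X = J and (φ(M_Y))ᵀ·J·M_Y = J. -/
theorem stmt18 (n m : ℕ) (hn : 2 ≤ n) (hm : 2 ≤ m) (hcop : Nat.Coprime n m)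
    (hnodd : Odd n) (h3 : ¬ (3 ∣ m)) (a b : ℤ) (hab : a * n - b * m = 1) (haodd : Odd a)
    (ζ4m ζm U l₁ l₂ U' V μ₁ μ₂ : ℂ)
    (hζ4m : ζ4m = Complex.exp (2 * (Real.pi : ℂ) * Complex.I / (4 * (m : ℂ))))
    (hζm : ζm = Complex.exp (2 * (Real.pi : ℂ) * Complex.I / (m : ℂ)))
    (hU : U = ζ4m ^ (3 * (m : ℤ) - 2) + ζ4m ^ (3 * (m : ℤ) + 2))
    (hl1 : l₁ = ζ4m ^ (3 * (m : ℤ) - 6)) (hl2 : l₂ = ζ4m ^ (3 * (m : ℤ) + 6))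
    (hU' : U' = U + l₁ + l₂)
    (hV : V = if 2 < m then -1 - ζm - ζm⁻¹ else -1)
    (hμ1 : μ₁ = Complex.exp (2 * (Real.pi : ℂ) * Complex.I / (n : ℂ))) (hμ2 : μ₂ = μ₁⁻¹)
    (lam mub : ℤ → ℂ) (hlam : ∀ k : ℤ, lam k = (l₂ ^ k - l₁ ^ k) / (l₂ - l₁))
    (hmub : ∀ k : ℤ, mub k = (μ₂ ^ k - μ₁ ^ k) / (μ₂ ^ b - μ₁ ^ b))
    (A₁ A₂ : R2)
    (hA1 : A₁ = qInv * cR (U' * lam a + lam (a - 1)) - cR (μ₁ ^ b))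
    (hA2 : A₂ = qInv * cR (U' * lam a + lam (a - 1)) - cR (μ₂ ^ b))
    (MX MY J : Matrix (Fin 2) (Fin 2) R2)
    (hMX : MX = (cR ((-1 : ℂ) ^ b * Complex.I ^ (n + 1)) * (T (n : ℤ) : R2)) •
      !![cR U', cR V; cR V, -cR U])
    (hMY : MY = (cR ((-1 : ℂ) ^ a * Complex.I ^ m) * (T (m : ℤ) : R2)) •
      !![A₁ * cR (mub 1) + cR μ₁, qInv * cR (V * lam a * mub 1);
         -(A₁ * A₂ * cR (mub 1)) * qP * cR ((V * lam a)⁻¹), cR μ₁ - A₂ * cR (mub 1)])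
    (hJ : J = !![0, 1; 1, 0])
    (φ : R2 →+* R2) (hφt : φ (T 1) = T (-1)) (hφq : φ qP = -qP)
    (hφc : ∀ z : ℂ, φ (cR z) = cR (starRingEnd ℂ z)) :
    (MX.map ⇑φ)ᵀ * J * MX = J ∧ (MY.map ⇑φ)ᵀ * J * MY = J := by
  have hm0 : m ≠ 0 := by omega
  have hn0 : n ≠ 0 := by omega
  have hmC : (m:ℂ) ≠ 0 := Nat.cast_ne_zero.mpr hm0
  have hnC : (n:ℂ) ≠ 0 := Nat.cast_ne_zero.mpr hn0
  have hπ : (Real.pi:ℂ) ≠ 0 := by exact_mod_cast Real.pi_ne_zero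
  set cj : ℂ →+* ℂ := starRingEnd ℂ with hcj
  -- basic facts about ζ4m
  have hζ4m' : ζ4m = Complex.exp (2*(Real.pi:ℂ)*Complex.I/((4*m:ℕ):ℂ)) := by
    rw [hζ4m]; push_cast; ring_nf
  have hz : ζ4m ≠ 0 := by rw [hζ4m]; exact Complex.exp_ne_zero _
  have h2m : ζ4m ^ (2*(m:ℤ)) = -1 := by
    rw [hζ4m, ← Complex.exp_int_mul]
    push_cast
    rw [show (2:ℂ) * (m:ℂ) * (2 * (Real.pi:ℂ) * Complex.I / (4*(m:ℂ)))
        = (Real.pi:ℂ) * Complex.I by field_simp; ring]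
    exact Complex.exp_pi_mul_I
  have hroot4m : ∀ k : ℤ, ζ4m ^ k = 1 → ((4*m:ℕ):ℤ) ∣ k := by
    intro k hk
    exact root_iff (4*m) (by omega) k (by rw [← hζ4m']; exact hk)
  have hrootn : ∀ k : ℤ, μ₁ ^ k = 1 → ((n:ℕ):ℤ) ∣ k := by
    intro k hk
    exact root_iff n hn0 k (by rw [← hμ1]; exact hk)
  have hrootm : ∀ k : ℤ, ζm ^ k = 1 → ((m:ℕ):ℤ) ∣ k := by
    intro k hk
    exact root_iff m hm0 k (by rw [← hζm]; exact hk)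
  have hμ0 : μ₁ ≠ 0 := by rw [hμ1]; exact Complex.exp_ne_zero _
  have hμ20 : μ₂ ≠ 0 := by rw [hμ2]; exact inv_ne_zero hμ0
  -- conjugation facts
  have hconjz : cj ζ4m = ζ4m⁻¹ := by
    rw [hζ4m, ← Complex.exp_conj, ← Complex.exp_neg]
    congr 1
    simp [hcj, _root_.map_div₀, Complex.conj_I, map_ofNat, Complex.conj_ofReal]
    ring
  have hzc : ∀ k : ℤ, cj (ζ4m ^ k) = ζ4m ^ (-k) := by
    intro k
    rw [_root_.map_zpow₀, hconjz, _root_.inv_zpow, ← _root_.zpow_neg]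
  have hconjμ1 : cj μ₁ = μ₂ := by
    rw [hμ2, hμ1, ← Complex.exp_conj, ← Complex.exp_neg]
    congr 1
    simp [hcj, _root_.map_div₀, Complex.conj_I, map_ofNat, Complex.conj_ofReal]
    ring
  have hconjμ2 : cj μ₂ = μ₁ := by
    rw [hμ2, _root_.map_inv₀, hconjμ1, hμ2, inv_inv]
  have hconjU : cj U = -U := by
    rw [hU, _root_.map_add, hzc, hzc,
      show -(3*(m:ℤ)-2) = (3*(m:ℤ)+2) - 6*(m:ℤ) by ring,
      show -(3*(m:ℤ)+2) = (3*(m:ℤ)-2) - 6*(m:ℤ) by ring,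
      zshift hz h2m, zshift hz h2m]
    ring
  have hconjl1 : cj l₁ = -l₂ := by
    rw [hl1, hl2, hzc, show -(3*(m:ℤ)-6) = (3*(m:ℤ)+6) - 6*(m:ℤ) by ring, zshift hz h2m]
  have hconjl2 : cj l₂ = -l₁ := by
    rw [hl1, hl2, hzc, show -(3*(m:ℤ)+6) = (3*(m:ℤ)-6) - 6*(m:ℤ) by ring, zshift hz h2m]
  have hconjU' : cj U' = -U' := by
    rw [hU', _root_.map_add, _root_.map_add, hconjU, hconjl1, hconjl2]
    ring
  have hconjV : cj V = V := by
    by_cases h2 : 2 < m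
    · have hζmz : cj ζm = ζm⁻¹ := by
        rw [hζm, ← Complex.exp_conj, ← Complex.exp_neg]
        congr 1
        simp [hcj, _root_.map_div₀, Complex.conj_I, map_ofNat, Complex.conj_ofReal]
        ring
      rw [hV, if_pos h2, _root_.map_sub, _root_.map_sub, _root_.map_neg, _root_.map_one, hζmz, _root_.map_inv₀, hζmz, inv_inv]
      ring
    · rw [hV, if_neg h2]
      simp
  -- nonvanishing
  have hmdvd3 : ¬ ((m:ℤ) ∣ 3) := by
    intro hd
    have hd' : m ∣ 3 := by exact_mod_cast hd
    rcases (Nat.Prime.eq_one_or_self_of_dvd Nat.prime_three m hd') with h1 | h1 <;> omega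
  have hl21 : l₂ - l₁ ≠ 0 := by
    intro h
    have heq : l₂ = l₁ := sub_eq_zero.mp h
    have h12 : ζ4m ^ ((12:ℤ)) = 1 := by
      have h' : ζ4m^(3*(m:ℤ)+6) * ζ4m^(-(3*(m:ℤ)-6)) = ζ4m^(3*(m:ℤ)-6) * ζ4m^(-(3*(m:ℤ)-6)) := by
        rw [← hl1, ← hl2, heq]
      rwa [← zpow_add₀ hz, ← zpow_add₀ hz, show 3*(m:ℤ)+6 + -(3*(m:ℤ)-6) = 12 by ring,
        show 3*(m:ℤ)-6 + -(3*(m:ℤ)-6) = 0 by ring, zpow_zero] at h'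
    obtain ⟨c, hc⟩ := hroot4m 12 h12
    have : (m:ℤ) ∣ 3 := ⟨c, by push_cast at hc ⊢; linarith⟩
    exact hmdvd3 this
  have hcopma : IsCoprime (m:ℤ) a := ⟨-b, n, by push_cast; linear_combination hab⟩
  have hlamA : lam a ≠ 0 := by
    rw [hlam]
    apply div_ne_zero _ hl21
    rw [sub_ne_zero]
    intro heq
    have h12a : ζ4m ^ (12*a) = 1 := by
      rw [hl1, hl2, ← _root_.zpow_mul, ← _root_.zpow_mul] at heq
      have h' : ζ4m^((3*(m:ℤ)+6)*a) * ζ4m^(-((3*(m:ℤ)-6)*a)) = 1 := by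
        rw [heq, ← zpow_add₀ hz]
        simp
      rw [← h', ← zpow_add₀ hz]
      congr 1
      ring
    obtain ⟨c, hc⟩ := hroot4m (12*a) h12a
    have : (m:ℤ) ∣ 3*a := ⟨c, by push_cast at hc ⊢; linarith⟩
    exact hmdvd3 (hcopma.dvd_of_dvd_mul_right this)
  have hζm0 : ζm ≠ 0 := by rw [hζm]; exact Complex.exp_ne_zero _
  have hVne : V ≠ 0 := by
    by_cases h2 : 2 < m
    · rw [hV, if_pos h2]
      intro h0
      have quad : ζm^2 + ζm + 1 = 0 := by
        have h1 : ζm * (-1 - ζm - ζm⁻¹) = 0 := by rw [h0, mul_zero]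
        have h2 : ζm * ζm⁻¹ = 1 := mul_inv_cancel₀ hζm0
        linear_combination -h1 - h2
      have cube : ζm ^ (3:ℤ) = 1 := by
        rw [show (3:ℤ) = ((3:ℕ):ℤ) by norm_num, zpow_natCast]
        linear_combination (ζm - 1) * quad
      exact hmdvd3 (by exact_mod_cast hrootm 3 cube)
    · rw [hV, if_neg h2]
      norm_num
  have hIC2 : IsCoprime ((n:ℤ)) 2 := by
    have h := Nat.coprime_two_right.mpr hnodd
    exact_mod_cast Nat.isCoprime_iff_coprime.mpr h
  have hmubden : μ₂ ^ b - μ₁ ^ b ≠ 0 := by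
    intro h
    have heq : μ₂ ^ b = μ₁ ^ b := sub_eq_zero.mp h
    have h2b : μ₁ ^ (2*b) = 1 := by
      have : μ₁ ^ (-b) = μ₁ ^ b := by rw [← heq, hμ2, _root_.inv_zpow, ← _root_.zpow_neg]
      calc μ₁ ^ (2*b) = μ₁ ^ (b + b) := by ring_nf
        _ = μ₁ ^ b * μ₁ ^ b := zpow_add₀ hμ0 b b
        _ = μ₁ ^ (-b) * μ₁ ^ b := by rw [this]
        _ = 1 := by rw [← zpow_add₀ hμ0]; simp
    have hnb : (n:ℤ) ∣ b := hIC2.dvd_of_dvd_mul_left (hrootn (2*b) h2b)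
    have : (n:ℤ) ∣ 1 := by
      have h1 : (n:ℤ) ∣ a * n := ⟨a, mul_comm _ _⟩
      have h2 : (n:ℤ) ∣ b * m := Dvd.dvd.mul_right hnb m
      calc (n:ℤ) ∣ a * n - b * m := dvd_sub h1 h2
        _ = 1 := hab
    have := Int.le_of_dvd one_pos this
    omega
  -- complex identities
  have hw : (ζ4m^(3*(m:ℤ)))^2 = -1 := by
    rw [← _root_.zpow_natCast (ζ4m^(3*(m:ℤ))), ← _root_.zpow_mul,
      show 3*(m:ℤ)*(2:ℕ) = 2*(m:ℤ)*3 by push_cast; ring, _root_.zpow_mul, h2m]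
    norm_num
  have hUw : U = ζ4m^(3*(m:ℤ)) * (ζ4m^(2:ℤ))⁻¹ + ζ4m^(3*(m:ℤ)) * ζ4m^(2:ℤ) := by
    rw [hU, show 3*(m:ℤ)-2 = 3*(m:ℤ) + (-2) by ring, show 3*(m:ℤ)+2 = 3*(m:ℤ) + 2 from rfl,
      zpow_add₀ hz, zpow_add₀ hz, _root_.zpow_neg]
  have hy6 : (ζ4m^(2:ℤ))^(3:ℕ) = ζ4m^(6:ℤ) := by
    rw [← _root_.zpow_natCast (ζ4m^(2:ℤ)), ← _root_.zpow_mul]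
    norm_num
  have hl1w : l₁ = ζ4m^(3*(m:ℤ)) * ((ζ4m^(2:ℤ))^3)⁻¹ := by
    rw [hl1, show 3*(m:ℤ)-6 = 3*(m:ℤ) + (-6) by ring, zpow_add₀ hz, _root_.zpow_neg, ← hy6]
  have hl2w : l₂ = ζ4m^(3*(m:ℤ)) * (ζ4m^(2:ℤ))^3 := by
    rw [hl2, zpow_add₀ hz, ← hy6]
  have hV2 : V * V = (1 + (ζ4m^(2:ℤ))^2 + ((ζ4m^(2:ℤ))^2)⁻¹)^2 := by
    have hy4 : (ζ4m^(2:ℤ))^2 = ζ4m^(4:ℤ) := by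
      rw [← _root_.zpow_natCast (ζ4m^(2:ℤ)), ← _root_.zpow_mul]
      norm_num
    by_cases h2 : 2 < m
    · have hζmz : ζm = ζ4m^(4:ℤ) := by
        rw [hζm, hζ4m, ← Complex.exp_int_mul]
        congr 1
        push_cast
        field_simp
      rw [hV, if_pos h2, hζmz, hy4]
      ring
    · have hm2 : (m:ℤ) = 2 := by omega
      have h4 : ζ4m^(4:ℤ) = -1 := by
        rw [hm2] at h2m
        rw [show (4:ℤ) = 2*2 from by norm_num, h2m]
      rw [hV, if_neg h2, hy4, h4]
      norm_num
  have hUV : U * U' + V * V = 1 := by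
    have := genUV (ζ4m^(2:ℤ)) (ζ4m^(3*(m:ℤ))) (zpow_ne_zero _ hz) hw
    rw [hU', hUw, hl1w, hl2w, hV2]
    calc (ζ4m^(3*(m:ℤ)) * (ζ4m^(2:ℤ))⁻¹ + ζ4m^(3*(m:ℤ)) * ζ4m^(2:ℤ)) *
        (ζ4m^(3*(m:ℤ)) * (ζ4m^(2:ℤ))⁻¹ + ζ4m^(3*(m:ℤ)) * ζ4m^(2:ℤ)
          + ζ4m^(3*(m:ℤ)) * ((ζ4m^(2:ℤ))^3)⁻¹ + ζ4m^(3*(m:ℤ)) * (ζ4m^(2:ℤ))^3)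
        + (1 + (ζ4m^(2:ℤ))^2 + ((ζ4m^(2:ℤ))^2)⁻¹)^2
        = (ζ4m^(3*(m:ℤ)) * (ζ4m^(2:ℤ))⁻¹ + ζ4m^(3*(m:ℤ)) * ζ4m^(2:ℤ)) *
          (ζ4m^(3*(m:ℤ)) * (ζ4m^(2:ℤ))⁻¹ + ζ4m^(3*(m:ℤ)) * ζ4m^(2:ℤ)
            + ζ4m^(3*(m:ℤ)) * ((ζ4m^(2:ℤ))^3)⁻¹ + ζ4m^(3*(m:ℤ)) * (ζ4m^(2:ℤ))^3)
          + (1 + (ζ4m^(2:ℤ))^2 + ((ζ4m^(2:ℤ))^2)⁻¹)^2 := rfl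
      _ = 1 := this
  have hkeyC : (μ₁ ^ b - μ₂ ^ b) * mub 1 = μ₁ - μ₂ := by
    rw [hmub]
    field_simp
    ring
  have hconj_lam_a : cj (lam a) = lam a := by
    rw [hlam, _root_.map_div₀, _root_.map_sub, _root_.map_sub, _root_.map_zpow₀,
      _root_.map_zpow₀, hconjl1, hconjl2, Odd.neg_zpow haodd, Odd.neg_zpow haodd,
      show -l₁^a - -l₂^a = l₂^a - l₁^a from by ring,
      show -l₁ - -l₂ = l₂ - l₁ from by ring]
  have hconj_lam_a1 : cj (lam (a-1)) = -lam (a-1) := by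
    have hev : Even (a-1) := by
      obtain ⟨j, hj⟩ := haodd
      exact ⟨j, by omega⟩
    rw [hlam, _root_.map_div₀, _root_.map_sub, _root_.map_sub, _root_.map_zpow₀,
      _root_.map_zpow₀, hconjl1, hconjl2, Even.neg_zpow hev, Even.neg_zpow hev,
      show l₁^(a-1) - l₂^(a-1) = -(l₂^(a-1) - l₁^(a-1)) from by ring,
      show -l₁ - -l₂ = l₂ - l₁ from by ring, neg_div]
  have hconj_mub1 : cj (mub 1) = mub 1 := by
    have hden2 : μ₁ ^ b - μ₂ ^ b ≠ 0 := fun h => hmubden (by linear_combination -h)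
    rw [hmub, _root_.map_div₀, _root_.map_sub, _root_.map_sub, _root_.map_zpow₀,
      _root_.map_zpow₀, _root_.map_zpow₀, _root_.map_zpow₀, hconjμ1, hconjμ2,
      div_eq_div_iff hden2 hmubden]
    ring
  have hμμ : μ₁ * μ₂ = 1 := by rw [hμ2]; exact mul_inv_cancel₀ hμ0
  have hccX : cj ((-1 : ℂ) ^ b * Complex.I ^ (n + 1)) * ((-1 : ℂ) ^ b * Complex.I ^ (n + 1)) = 1 := by
    rw [_root_.map_mul, _root_.map_zpow₀, _root_.map_pow, _root_.map_neg, _root_.map_one, Complex.conj_I]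
    have e0 : ((-1:ℂ))^b * (-1:ℂ)^b = 1 := by
      rw [← zpow_add₀ (by norm_num : (-1:ℂ) ≠ 0), show b+b = 2*b by ring, _root_.zpow_mul]
      norm_num
    have e1 : ((-Complex.I))^(n+1) * Complex.I^(n+1) = 1 := by
      rw [← mul_pow]
      simp [Complex.I_mul_I]
    calc (-1:ℂ)^b * (-Complex.I)^(n+1) * ((-1:ℂ)^b * Complex.I^(n+1))
        = ((-1:ℂ)^b * (-1:ℂ)^b) * ((-Complex.I)^(n+1) * Complex.I^(n+1)) := by ring
      _ = 1 := by rw [e0, e1, one_mul]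
  have hccY : cj ((-1 : ℂ) ^ a * Complex.I ^ m) * ((-1 : ℂ) ^ a * Complex.I ^ m) = 1 := by
    rw [_root_.map_mul, _root_.map_zpow₀, _root_.map_pow, _root_.map_neg, _root_.map_one, Complex.conj_I]
    have e0 : ((-1:ℂ))^a * (-1:ℂ)^a = 1 := by
      rw [← zpow_add₀ (by norm_num : (-1:ℂ) ≠ 0), show a+a = 2*a by ring, _root_.zpow_mul]
      norm_num
    have e1 : ((-Complex.I))^m * Complex.I^m = 1 := by
      rw [← mul_pow]
      simp [Complex.I_mul_I]
    calc (-1:ℂ)^a * (-Complex.I)^m * ((-1:ℂ)^a * Complex.I^m)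
        = ((-1:ℂ)^a * (-1:ℂ)^a) * ((-Complex.I)^m * Complex.I^m) := by ring
      _ = 1 := by rw [e0, e1, one_mul]
  have hφTn : φ (T ((n:ℕ):ℤ)) = T (-(n:ℤ)) := by
    have h1 : (T ((n:ℤ)) : R2) = T 1 ^ n := by rw [T_pow, mul_one]
    have h2 : (T (-(n:ℤ)) : R2) = T (-1) ^ n := by rw [T_pow]; congr 1; omega
    rw [h1, _root_.map_pow, hφt, ← h2]
  have hφTm : φ (T ((m:ℕ):ℤ)) = T (-(m:ℤ)) := by
    have h1 : (T ((m:ℤ)) : R2) = T 1 ^ m := by rw [T_pow, mul_one]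
    have h2 : (T (-(m:ℤ)) : R2) = T (-1) ^ m := by rw [T_pow]; congr 1; omega
    rw [h1, _root_.map_pow, hφt, ← h2]
  have hφA1 : φ A₁ = A₂ := by
    have hφqi : φ qInv = -qInv := by
      have h1 : (-qP) * φ qInv = 1 := by rw [← hφq, ← _root_.map_mul, qq, _root_.map_one]
      calc φ qInv = (qP * qInv) * φ qInv := by rw [qq, one_mul]
        _ = -((-qP) * φ qInv) * qInv := by ring
        _ = -qInv := by rw [h1]; ring
    have hX : cj (U' * lam a + lam (a-1)) = -(U' * lam a + lam (a-1)) := by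
      rw [_root_.map_add, _root_.map_mul, hconjU', hconj_lam_a, hconj_lam_a1]
      ring
    rw [hA1, _root_.map_sub, _root_.map_mul, hφqi, hφc, hφc, hX,
      _root_.map_zpow₀, hconjμ1, hA2, _root_.map_neg]
    ring
  have hφA2 : φ A₂ = A₁ := by
    have hφqi : φ qInv = -qInv := by
      have h1 : (-qP) * φ qInv = 1 := by rw [← hφq, ← _root_.map_mul, qq, _root_.map_one]
      calc φ qInv = (qP * qInv) * φ qInv := by rw [qq, one_mul]
        _ = -((-qP) * φ qInv) * qInv := by ring
        _ = -qInv := by rw [h1]; ring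
    have hX : cj (U' * lam a + lam (a-1)) = -(U' * lam a + lam (a-1)) := by
      rw [_root_.map_add, _root_.map_mul, hconjU', hconj_lam_a, hconj_lam_a1]
      ring
    rw [hA2, _root_.map_sub, _root_.map_mul, hφqi, hφc, hφc, hX,
      _root_.map_zpow₀, hconjμ2, hA1, _root_.map_neg]
    ring
  have hconjVla : cj (V * lam a) = V * lam a := by
    rw [_root_.map_mul, hconjV, hconj_lam_a]
  have hkeyR : (A₂ - A₁) * cR (mub 1) = cR μ₁ - cR μ₂ := by
    have h : A₂ - A₁ = cR (μ₁ ^ b) - cR (μ₂ ^ b) := by rw [hA1, hA2]; ring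
    rw [h, ← _root_.map_sub, ← _root_.map_mul, hkeyC, _root_.map_sub]
  constructor
  · rw [hMX, hJ]
    exact Xpart φ ((-1 : ℂ) ^ b * Complex.I ^ (n + 1)) U U' V n hφc hφTn hccX
      hconjU hconjU' hconjV hUV
  · rw [hMY, hJ]
    exact Ypart φ ((-1 : ℂ) ^ a * Complex.I ^ m) V (lam a) (mub 1) μ₁ μ₂ A₁ A₂ m hφc hφTm hφq
      hccY hφA1 hφA2 hconj_mub1 hconjμ1 hconjVla hμμ hkeyR (mul_ne_zero hVne hlamA)


end
end
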